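/- arXiv:2502.04280 — 5 statements merged into one kernel-verified Lean document; each statement's English description precedes it below -/
import Mathlib

section
/- Conditional Slutzky's lemma (Lemma A.2 / Slutzkycond): Let 𝒳, 𝒴 be Polish spaces and k ∈ ℕ. Suppose that for each i ∈ {1,…,k}, a sequence of 𝒳×𝒴-valued random elements (X_i^n, Y^n_i) converges in distribution to some (X_i, Y_i), and that for each i there exists a measurable function φ_i : 𝒳 → 𝒴 with Y_i = φ_i(X_i) almost surely. If (X^n_1,…,X^n_k) converges in distribution to (X_1,…,X_k), then ((X^n_i, Y^n_i))_{i=1}^k converges in distribution to ((X_i, φ_i(X_i)))_{i=1}^k. -/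
open MeasureTheory ProbabilityTheory Filter

noncomputable section

namespace CoevolveNet

/-- A real-valued function is bounded. -/
def IsBdd {α : Type*} (f : α → ℝ) : Prop := ∃ C, ∀ x, |f x| ≤ C

/-- Convergence in distribution of random elements (possibly defined on different
probability spaces), phrased via bounded continuous test functions. -/
def TendstoInDist {Ω Ω' E : Type*} [MeasurableSpace Ω] [MeasurableSpace Ω']
    [TopologicalSpace E] (P : Measure Ω) (Q : Measure Ω')
    (X : ℕ → Ω → E) (Y : Ω' → E) : Prop :=
  ∀ f : BoundedContinuousFunction E ℝ,
    Tendsto (fun n => ∫ ω, f (X n ω) ∂P) atTop (nhds (∫ ω, f (Y ω) ∂Q))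

/-- Mutual conditional independence of a finite family of random elements given a
sub-σ-algebra `m`: conditional expectations of products of bounded measurable
functions factorize. -/
def iCondIndepGiven {Ω : Type*} {mΩ : MeasurableSpace Ω} (P : Measure Ω) (m : MeasurableSpace Ω)
    {ι : Type*} [Fintype ι] {E : ι → Type*} [∀ i, MeasurableSpace (E i)]
    (W : ∀ i, Ω → E i) : Prop :=
  ∀ f : ∀ i, E i → ℝ, (∀ i, Measurable (f i)) → (∀ i, IsBdd (f i)) →
    P[(fun ω => ∏ i, f i (W i ω)) | m]
      =ᵐ[P] fun ω => ∏ i, (P[(fun ω' => f i (W i ω')) | m]) ω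

/-- Conditional independence of two random elements given a sub-σ-algebra. -/
def CondIndepPair {Ω : Type*} {mΩ : MeasurableSpace Ω} (P : Measure Ω) (m : MeasurableSpace Ω)
    {E F : Type*} [MeasurableSpace E] [MeasurableSpace F] (U : Ω → E) (V : Ω → F) : Prop :=
  ∀ (f : E → ℝ) (g : F → ℝ), Measurable f → Measurable g → IsBdd f → IsBdd g →
    P[(fun ω => f (U ω) * g (V ω)) | m]
      =ᵐ[P] fun ω => (P[(fun ω' => f (U ω')) | m]) ω * (P[(fun ω' => g (V ω')) | m]) ω

/-- Conditional independence of two sub-σ-algebras given a third. -/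
def CondIndepSigma {Ω : Type*} {mΩ : MeasurableSpace Ω} (P : Measure Ω)
    (m F1 F2 : MeasurableSpace Ω) : Prop :=
  ∀ f g : Ω → ℝ, Measurable[F1] f → Measurable[F2] g → IsBdd f → IsBdd g →
    P[(fun ω => f ω * g ω) | m] =ᵐ[P] fun ω => (P[f | m]) ω * (P[g | m]) ω

/-- `η` is a (σ(X)-measurable) version of the conditional law of `W` given `X`. -/
def IsCondLaw {Ω 𝒳 E : Type*} {mΩ : MeasurableSpace Ω} [MeasurableSpace 𝒳] [MeasurableSpace E]
    (P : Measure Ω) (X : Ω → 𝒳) (W : Ω → E) (η : Ω → ProbabilityMeasure E) : Prop :=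
  Measurable[MeasurableSpace.comap X inferInstance] (fun ω => (η ω : Measure E)) ∧
  ∀ s : Set E, MeasurableSet s →
    P[(fun ω => Set.indicator s (fun _ => (1 : ℝ)) (W ω)) | MeasurableSpace.comap X inferInstance]
      =ᵐ[P] fun ω => ((η ω : Measure E) s).toReal

/-- `φ` is continuous at `µ`-almost every point. -/
def AEContinuous {α β : Type*} [TopologicalSpace α] [TopologicalSpace β] [MeasurableSpace α]
    (μ : Measure α) (φ : α → β) : Prop := ∀ᵐ x ∂μ, ContinuousAt φ x

/-- `W` depends continuously on `X`: `W = φ(X)` a.s. for some `Law(X)`-a.e. continuous `φ`. -/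
def DepContinuously {Ω 𝒳 β : Type*} [MeasurableSpace Ω] [MeasurableSpace 𝒳]
    [TopologicalSpace 𝒳] [TopologicalSpace β] (P : Measure Ω) (X : Ω → 𝒳) (W : Ω → β) : Prop :=
  ∃ φ : 𝒳 → β, AEContinuous (P.map X) φ ∧ ∀ᵐ ω ∂P, φ (X ω) = W ω

/-- The empirical measure `(1/n) ∑_{j<n} δ_{x j}`. -/
def empMeasure {E : Type*} [MeasurableSpace E] (n : ℕ) (x : ℕ → E) : Measure E :=
  (n : ENNReal)⁻¹ • ∑ j ∈ Finset.range n, Measure.dirac (x j)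

lemma isProbabilityMeasure_empMeasure {E : Type*} [MeasurableSpace E] {n : ℕ} (hn : n ≠ 0)
    (x : ℕ → E) : IsProbabilityMeasure (empMeasure n x) := by
  constructor
  rw [empMeasure, Measure.smul_apply, Measure.finset_sum_apply]
  simp only [measure_univ, Finset.sum_const, Finset.card_range, nsmul_eq_mul, mul_one,
    smul_eq_mul]
  exact ENNReal.inv_mul_cancel (by exact_mod_cast hn) (by simp)

/-- The empirical measure as a probability measure (junk value `δ_{x 0}` if `n = 0`). -/
def empProb {E : Type*} [MeasurableSpace E] (n : ℕ) (x : ℕ → E) : ProbabilityMeasure E :=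
  if h : n = 0 then ⟨Measure.dirac (x 0), inferInstance⟩
  else ⟨empMeasure n x, isProbabilityMeasure_empMeasure h x⟩

/-- Uniform distribution on a finite set. -/
def unifOn {α : Type*} [MeasurableSpace α] (S : Finset α) : Measure α :=
  (S.card : ENNReal)⁻¹ • ∑ x ∈ S, Measure.dirac x

/-- `(X,(Y_i)_{i<m})` is exchangeable excluding the first index: permutations of the
indices fixing `0` do not change the joint law. -/
def ExchExclZero {Ω 𝒳 𝒴 : Type*} [MeasurableSpace Ω] [MeasurableSpace 𝒳] [MeasurableSpace 𝒴]
    (P : Measure Ω) {m : ℕ} (X : Ω → 𝒳) (Y : Fin m → Ω → 𝒴) : Prop :=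
  ∀ σ : Equiv.Perm (Fin m), (∀ h0 : 0 < m, σ ⟨0, h0⟩ = ⟨0, h0⟩) →
    P.map (fun ω => (X ω, fun i => Y (σ i) ω)) = P.map (fun ω => (X ω, fun i => Y i ω))

/-- Joint exchangeability of a vector and a matrix of random elements. -/
def JointlyExch {Ω 𝒳 𝒴 : Type*} [MeasurableSpace Ω] [MeasurableSpace 𝒳] [MeasurableSpace 𝒴]
    (P : Measure Ω) {n : ℕ} (X : Fin n → Ω → 𝒳) (M : Fin n → Fin n → Ω → 𝒴) : Prop :=
  ∀ σ : Equiv.Perm (Fin n),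
    P.map (fun ω => (fun i => X (σ i) ω, fun i j => M (σ i) (σ j) ω))
      = P.map (fun ω => (fun i => X i ω, fun i j => M i j ω))

/-- Convergence in probability of random (finite) measures, with respect to the
Lévy–Prokhorov distance (which metrizes the weak topology on probability measures
over a separable metric space). -/
def TendstoInProbLP {Ω X : Type*} [MeasurableSpace Ω] [MeasurableSpace X] [PseudoEMetricSpace X]
    (P : Measure Ω) (η : ℕ → Ω → Measure X) (ηlim : Ω → Measure X) : Prop :=
  ∀ ε : ℝ, 0 < ε →
    Tendsto (fun n => P {ω | ε ≤ levyProkhorovDist (η n ω) (ηlim ω)}) atTop (nhds 0)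

end CoevolveNet

open CoevolveNet MeasureTheory ProbabilityTheory Filter



open MeasureTheory ProbabilityTheory Filter Metric Set ENNReal NNReal Topology

noncomputable section

namespace SlutzkyAux

/-- Ulam tightness: a finite Borel measure on a complete second-countable metric
space is tight. -/
lemma ulam_tight {α : Type*} [MetricSpace α] [CompleteSpace α] [SecondCountableTopology α]
    [MeasurableSpace α] [OpensMeasurableSpace α] (μ : Measure α) [IsFiniteMeasure μ]
    {ε : ℝ≥0∞} (hε : ε ≠ 0) : ∃ C : Set α, IsCompact C ∧ μ Cᶜ ≤ ε := by
  rcases isEmpty_or_nonempty α with h | h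
  · refine ⟨∅, isCompact_empty, ?_⟩
    have : ((∅ : Set α)ᶜ : Set α) = ∅ := Set.eq_empty_of_isEmpty _
    simp [this]
  obtain ⟨u, hu⟩ := TopologicalSpace.exists_dense_seq α
  set B : ℕ → ℕ → Set α := fun m N => ⋃ j ∈ Finset.range N, closedBall (u j) (1 / (m + 1))
    with hBdef
  have hBclosed : ∀ m N, IsClosed (B m N) := by
    intro m N
    apply Set.Finite.isClosed_biUnion (Finset.range N).finite_toSet
    exact fun j _ => isClosed_closedBall
  have hBmono : ∀ m, Monotone (B m) := by
    intro m N N' hNN'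
    intro x hx
    simp only [hBdef, Set.mem_iUnion, Finset.mem_range] at hx ⊢
    obtain ⟨j, hj, hxj⟩ := hx
    exact ⟨j, lt_of_lt_of_le hj hNN', hxj⟩
  have hBunion : ∀ m, (⋃ N, B m N) = Set.univ := by
    intro m
    apply Set.eq_univ_of_forall
    intro x
    have hpos : (0 : ℝ) < 1 / (m + 1) := by positivity
    obtain ⟨j, hj⟩ : ∃ j, u j ∈ ball x (1 / (m + 1)) := hu.exists_mem_open isOpen_ball
      ⟨x, mem_ball_self hpos⟩
    refine Set.mem_iUnion.2 ⟨j + 1, ?_⟩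
    refine Set.mem_biUnion (Finset.self_mem_range_succ j) ?_
    rw [mem_closedBall, dist_comm]
    exact (mem_ball.mp hj).le
  have key : ∀ m : ℕ, ∃ N, μ (B m N)ᶜ ≤ ε * 2⁻¹ ^ (m + 1) := by
    intro m
    set δ : ℝ≥0∞ := ε * 2⁻¹ ^ (m + 1) with hδdef
    have hδ0 : δ ≠ 0 :=
      mul_ne_zero hε (pow_ne_zero _ (ENNReal.inv_ne_zero.mpr ENNReal.ofNat_ne_top))
    rcases le_or_gt (μ Set.univ) δ with hc | hc
    · exact ⟨0, le_trans (measure_mono (Set.subset_univ _)) hc⟩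
    have hten : Tendsto (fun N => μ (B m N)) atTop (𝓝 (μ Set.univ)) := by
      have h' : Tendsto (fun N => μ (B m N)) atTop (𝓝 (μ (⋃ N, B m N))) :=
        tendsto_measure_iUnion_atTop (hBmono m)
      rwa [hBunion m] at h'
    have hlt : μ Set.univ - δ < μ Set.univ :=
      ENNReal.sub_lt_self (measure_ne_top μ _) (fun h0 => by simp [h0] at hc) hδ0
    obtain ⟨N, hN⟩ := (hten.eventually (eventually_gt_nhds hlt)).exists
    refine ⟨N, ?_⟩
    rw [measure_compl (hBclosed m N).measurableSet (measure_ne_top μ _)]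
    rw [tsub_le_iff_right]
    have := tsub_le_iff_right.mp hN.le
    calc μ Set.univ ≤ μ (B m N) + δ := this
    _ = δ + μ (B m N) := add_comm _ _
  choose N hN using key
  refine ⟨⋂ m, B m (N m), ?_, ?_⟩
  · apply TotallyBounded.isCompact_of_isClosed
    · rw [Metric.totallyBounded_iff]
      intro δ hδ
      obtain ⟨m, hm⟩ := exists_nat_one_div_lt hδ
      refine ⟨u '' {j | j < N m}, (Set.finite_Iio _).image _, ?_⟩
      intro x hx
      have hx' : x ∈ B m (N m) := Set.mem_iInter.mp hx m
      simp only [hBdef, Set.mem_iUnion, Finset.mem_range] at hx'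
      obtain ⟨j, hj, hxj⟩ := hx'
      refine Set.mem_biUnion ⟨j, hj, rfl⟩ ?_
      rw [mem_ball]
      calc dist x (u j) ≤ 1 / (m + 1) := mem_closedBall.mp hxj
      _ < δ := hm
    · exact isClosed_iInter fun m => hBclosed m (N m)
  · rw [Set.compl_iInter]
    calc μ (⋃ m, (B m (N m))ᶜ) ≤ ∑' m, μ (B m (N m))ᶜ := measure_iUnion_le _
    _ ≤ ∑' m : ℕ, ε * 2⁻¹ ^ (m + 1) := ENNReal.tsum_le_tsum hN
    _ = ε * ∑' m : ℕ, 2⁻¹ ^ (m + 1) := ENNReal.tsum_mul_left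
    _ = ε := by
        have h1 : ∑' m : ℕ, ((2 : ℝ≥0∞)⁻¹) ^ (m + 1) = 2⁻¹ * ∑' m : ℕ, ((2 : ℝ≥0∞)⁻¹) ^ m := by
          rw [← ENNReal.tsum_mul_left]
          congr 1 with m
          rw [pow_succ, mul_comm]
        rw [h1, ENNReal.tsum_geometric, ENNReal.one_sub_inv_two, inv_inv,
          ENNReal.inv_mul_cancel (by simp) (by simp), mul_one]

/-- Inner regularity by compacts of a full-measure measurable set. -/
lemma exists_compact_subset {α : Type*} [MetricSpace α] [CompleteSpace α]
    [SecondCountableTopology α] [MeasurableSpace α] [BorelSpace α]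
    (μ : Measure α) [IsFiniteMeasure μ] {Γ : Set α} (hΓ : MeasurableSet Γ)
    (hΓc : μ Γᶜ = 0) {ε : ℝ≥0∞} (hε : ε ≠ 0) :
    ∃ K, K ⊆ Γ ∧ IsCompact K ∧ μ Kᶜ ≤ ε := by
  have hε2 : ε / 2 ≠ 0 := by
    simp only [ne_eq, ENNReal.div_eq_zero_iff, not_or]
    exact ⟨hε, by simp⟩
  obtain ⟨F, hFΓ, hFcl, hF⟩ := hΓ.exists_isClosed_lt_add (measure_ne_top μ _) hε2
  obtain ⟨C, hC, hCc⟩ := ulam_tight μ hε2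
  refine ⟨F ∩ C, Set.inter_subset_left.trans hFΓ, hC.inter_left hFcl, ?_⟩
  have huniv : μ Set.univ ≤ μ Γ := by
    have : (Set.univ : Set α) = Γ ∪ Γᶜ := by simp
    calc μ Set.univ = μ (Γ ∪ Γᶜ) := by rw [← this]
    _ ≤ μ Γ + μ Γᶜ := measure_union_le _ _
    _ = μ Γ := by rw [hΓc, add_zero]
  have hFc : μ Fᶜ ≤ ε / 2 := by
    rw [measure_compl hFcl.measurableSet (measure_ne_top μ _), tsub_le_iff_right]
    calc μ Set.univ ≤ μ Γ := huniv
    _ ≤ μ F + ε / 2 := hF.le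
    _ = ε / 2 + μ F := add_comm _ _
  calc μ (F ∩ C)ᶜ = μ (Fᶜ ∪ Cᶜ) := by rw [Set.compl_inter]
  _ ≤ μ Fᶜ + μ Cᶜ := measure_union_le _ _
  _ ≤ ε / 2 + ε / 2 := add_le_add hFc hCc
  _ = ε := ENNReal.add_halves ε

/-- Epsilon-extraction from a supremum in `ℝ≥0∞`. -/
lemma exists_le_add_of_eq_iSup {f : ℕ → ℝ≥0∞} {a ε : ℝ≥0∞} (h : a = ⨆ m, f m)
    (ha : a ≠ ⊤) (hε : ε ≠ 0) : ∃ m, a ≤ f m + ε := by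
  rcases le_or_gt a ε with h' | h'
  · exact ⟨0, h'.trans (le_add_left le_rfl)⟩
  have ha0 : a ≠ 0 := fun h0 => by simp [h0] at h'
  have h2 : a - ε < ⨆ m, f m := lt_of_lt_of_le (ENNReal.sub_lt_self ha ha0 hε) (le_of_eq h)
  obtain ⟨m, hm⟩ := lt_iSup_iff.mp h2
  exact ⟨m, tsub_le_iff_right.mp hm.le⟩

end SlutzkyAux

section Conversion

open MeasureTheory Filter

lemma tendstoInDist_iff_tendsto {Ω Ω' E : Type*} [MeasurableSpace Ω] [MeasurableSpace Ω']
    [MeasurableSpace E] [TopologicalSpace E] [OpensMeasurableSpace E]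
    (P : Measure Ω) (Q : Measure Ω') [IsProbabilityMeasure P] [IsProbabilityMeasure Q]
    {X : ℕ → Ω → E} {Z : Ω' → E} (hX : ∀ n, Measurable (X n)) (hZ : Measurable Z)
    {μs : ℕ → ProbabilityMeasure E} {μ0 : ProbabilityMeasure E}
    (hμs : ∀ n, (μs n : Measure E) = P.map (X n)) (hμ0 : (μ0 : Measure E) = Q.map Z) :
    CoevolveNet.TendstoInDist P Q X Z ↔ Tendsto μs atTop (nhds μ0) := by
  rw [ProbabilityMeasure.tendsto_iff_forall_integral_tendsto]
  refine forall_congr' fun f => ?_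
  have h1 : ∀ n, ∫ x, f x ∂(μs n : Measure E) = ∫ ω, f (X n ω) ∂P := fun n => by
    rw [hμs n]
    exact integral_map (hX n).aemeasurable f.continuous.aestronglyMeasurable
  have h2 : ∫ x, f x ∂(μ0 : Measure E) = ∫ ω, f (Z ω) ∂Q := by
    rw [hμ0]
    exact integral_map hZ.aemeasurable f.continuous.aestronglyMeasurable
  simp only [h1, h2]

end Conversion

/-- **Conditional Slutzky's lemma** (Lemma A.2).  If for each `i` the pairs
`(Xᵢⁿ, Yᵢⁿ)` converge in distribution to `(Xᵢ, Yᵢ)`, where `Yᵢ = φᵢ(Xᵢ)` a.s. for a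
measurable `φᵢ`, and the vector `(X₁ⁿ,…,X_kⁿ)` converges in distribution to
`(X₁,…,X_k)`, then the vector of pairs converges in distribution to
`((Xᵢ, φᵢ(Xᵢ)))ᵢ`. -/
theorem conditional_slutzky
    {Ω Ω' 𝒳 𝒴 : Type*} [MeasurableSpace Ω] [MeasurableSpace Ω']
    [TopologicalSpace 𝒳] [PolishSpace 𝒳] [MeasurableSpace 𝒳] [BorelSpace 𝒳]
    [TopologicalSpace 𝒴] [PolishSpace 𝒴] [MeasurableSpace 𝒴] [BorelSpace 𝒴]
    (P : Measure Ω) (Q : Measure Ω') [IsProbabilityMeasure P] [IsProbabilityMeasure Q]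
    (k : ℕ)
    (Xn : Fin k → ℕ → Ω → 𝒳) (Yn : Fin k → ℕ → Ω → 𝒴)
    (X : Fin k → Ω' → 𝒳) (Y : Fin k → Ω' → 𝒴) (φ : Fin k → 𝒳 → 𝒴)
    (hXnm : ∀ i n, Measurable (Xn i n)) (hYnm : ∀ i n, Measurable (Yn i n))
    (hXm : ∀ i, Measurable (X i)) (hYm : ∀ i, Measurable (Y i))
    (hφm : ∀ i, Measurable (φ i))
    (hpairconv : ∀ i, TendstoInDist P Q (fun n ω => (Xn i n ω, Yn i n ω))
      (fun ω => (X i ω, Y i ω)))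
    (hφ : ∀ i, ∀ᵐ ω ∂Q, Y i ω = φ i (X i ω))
    (hXconv : TendstoInDist P Q (fun n ω => fun i => Xn i n ω) (fun ω => fun i => X i ω)) :
    TendstoInDist P Q (fun n ω => fun i => (Xn i n ω, Yn i n ω))
      (fun ω => fun i => (X i ω, φ i (X i ω))) := by
  letI := TopologicalSpace.upgradeIsCompletelyMetrizable 𝒳
  letI := TopologicalSpace.upgradeIsCompletelyMetrizable 𝒴
  -- measurability of the various random vectors
  have hZnm : ∀ n, Measurable (fun ω => (fun i => (Xn i n ω, Yn i n ω)) : Ω → Fin k → 𝒳 × 𝒴) :=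
    fun n => measurable_pi_lambda _ fun i => (hXnm i n).prodMk (hYnm i n)
  have hZm : Measurable (fun ω => (fun i => (X i ω, φ i (X i ω))) : Ω' → Fin k → 𝒳 × 𝒴) :=
    measurable_pi_lambda _ fun i => (hXm i).prodMk ((hφm i).comp (hXm i))
  have hXvnm : ∀ n, Measurable (fun ω => (fun i => Xn i n ω) : Ω → Fin k → 𝒳) :=
    fun n => measurable_pi_lambda _ fun i => hXnm i n
  have hXvm : Measurable (fun ω => (fun i => X i ω) : Ω' → Fin k → 𝒳) :=
    measurable_pi_lambda _ fun i => hXm i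
  have hpm : ∀ i n, Measurable (fun ω => (Xn i n ω, Yn i n ω)) :=
    fun i n => (hXnm i n).prodMk (hYnm i n)
  have hplm : ∀ i, Measurable (fun ω => (X i ω, Y i ω)) :=
    fun i => (hXm i).prodMk (hYm i)
  -- the laws as probability measures
  set μn : ℕ → ProbabilityMeasure (Fin k → 𝒳 × 𝒴) := fun n =>
    ⟨P.map (fun ω => fun i => (Xn i n ω, Yn i n ω)),
      Measure.isProbabilityMeasure_map (hZnm n).aemeasurable⟩ with hμn
  set μ0 : ProbabilityMeasure (Fin k → 𝒳 × 𝒴) :=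
    ⟨Q.map (fun ω => fun i => (X i ω, φ i (X i ω))),
      Measure.isProbabilityMeasure_map hZm.aemeasurable⟩ with hμ0
  set νn : ℕ → ProbabilityMeasure (Fin k → 𝒳) := fun n =>
    ⟨P.map (fun ω => fun i => Xn i n ω),
      Measure.isProbabilityMeasure_map (hXvnm n).aemeasurable⟩ with hνn
  set ν0 : ProbabilityMeasure (Fin k → 𝒳) :=
    ⟨Q.map (fun ω => fun i => X i ω),
      Measure.isProbabilityMeasure_map hXvm.aemeasurable⟩ with hν0
  set πn : Fin k → ℕ → ProbabilityMeasure (𝒳 × 𝒴) := fun i n =>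
    ⟨P.map (fun ω => (Xn i n ω, Yn i n ω)),
      Measure.isProbabilityMeasure_map (hpm i n).aemeasurable⟩ with hπn
  set π0 : Fin k → ProbabilityMeasure (𝒳 × 𝒴) := fun i =>
    ⟨Q.map (fun ω => (X i ω, Y i ω)),
      Measure.isProbabilityMeasure_map (hplm i).aemeasurable⟩ with hπ0
  rw [tendstoInDist_iff_tendsto P Q hZnm hZm (μs := μn) (μ0 := μ0)
    (fun n => rfl) rfl]
  have hXv : Tendsto νn atTop (nhds ν0) :=
    (tendstoInDist_iff_tendsto P Q hXvnm hXvm (μs := νn) (μ0 := ν0)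
      (fun n => rfl) rfl).mp hXconv
  have hpair : ∀ i, Tendsto (πn i) atTop (nhds (π0 i)) := fun i =>
    (tendstoInDist_iff_tendsto P Q (fun n => hpm i n) (hplm i) (μs := πn i) (μ0 := π0 i)
      (fun n => rfl) rfl).mp (hpairconv i)
  apply tendsto_of_forall_isOpen_le_liminf
  intro G hG
  -- reduce to an `ℝ≥0∞` inequality
  suffices key : (μ0 : Measure (Fin k → 𝒳 × 𝒴)) G ≤
      atTop.liminf (fun n => (μn n : Measure (Fin k → 𝒳 × 𝒴)) G) by
    have aux : (ENNReal.ofNNReal (atTop.liminf fun n => μn n G)) =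
        atTop.liminf (fun n => ((μn n G : ℝ≥0) : ℝ≥0∞)) := by
      refine Monotone.map_liminf_of_continuousAt (F := atTop) ENNReal.coe_mono (fun n => μn n G)
        ENNReal.continuous_coe.continuousAt ?_ ?_
      · refine IsBoundedUnder.isCoboundedUnder_ge ⟨1, ?_⟩
        rw [eventually_map]
        exact Eventually.of_forall fun n => ProbabilityMeasure.apply_le_one _ _
      · exact ⟨0, by simp⟩
    rw [← ENNReal.coe_le_coe, aux]
    simp only [ProbabilityMeasure.ennreal_coeFn_eq_coeFn_toMeasure]
    exact key
  -- the graph map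
  set ψ : (Fin k → 𝒳) → (Fin k → 𝒳 × 𝒴) := fun x i => (x i, φ i (x i)) with hψdef
  have hψm : Measurable ψ := measurable_pi_lambda _ fun i =>
    (measurable_pi_apply i).prodMk ((hφm i).comp (measurable_pi_apply i))
  have main : ∀ ε : ℝ≥0∞, ε ≠ 0 → ε ≠ ⊤ →
      (μ0 : Measure (Fin k → 𝒳 × 𝒴)) G ≤
        atTop.liminf (fun n => (μn n : Measure (Fin k → 𝒳 × 𝒴)) G) + (2 * k + 2) * ε := by
    intro ε hε0 hεtop
    by_cases hGuniv : Gᶜ = (∅ : Set (Fin k → 𝒳 × 𝒴))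
    · have hGu : G = Set.univ := by rwa [Set.compl_empty_iff] at hGuniv
      have hconst : (fun n => (μn n : Measure (Fin k → 𝒳 × 𝒴)) Set.univ) = fun _ => 1 :=
        funext fun n => measure_univ
      rw [hGu, hconst, liminf_const]
      calc (μ0 : Measure (Fin k → 𝒳 × 𝒴)) Set.univ = 1 := measure_univ
      _ ≤ 1 + (2 * k + 2) * ε := le_self_add
    have hGc_ne : (Gᶜ : Set (Fin k → 𝒳 × 𝒴)).Nonempty := Set.nonempty_iff_ne_empty.mpr hGuniv
    set h : (Fin k → 𝒳 × 𝒴) → ℝ := fun z => Metric.infDist z Gᶜ with hhdef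
    have hhcont : Continuous h := Metric.continuous_infDist_pt _
    have hhpos : ∀ z, z ∈ G ↔ 0 < h z := by
      intro z
      rw [hhdef]
      constructor
      · intro hz
        exact (hG.isClosed_compl.notMem_iff_infDist_pos hGc_ne).mp (Set.notMem_compl_iff.mpr hz)
      · intro hz
        exact Set.notMem_compl_iff.mp ((hG.isClosed_compl.notMem_iff_infDist_pos hGc_ne).mpr hz)
    -- identification of the limit law through ψ
    have hμ0_eq : (μ0 : Measure (Fin k → 𝒳 × 𝒴)) G = (ν0 : Measure (Fin k → 𝒳)) (ψ ⁻¹' G) := by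
      have e1 : (μ0 : Measure (Fin k → 𝒳 × 𝒴)) G =
          Q ((fun ω => fun i => (X i ω, φ i (X i ω))) ⁻¹' G) :=
        Measure.map_apply hZm hG.measurableSet
      have e2 : (ν0 : Measure (Fin k → 𝒳)) (ψ ⁻¹' G) =
          Q ((fun ω => fun i => X i ω) ⁻¹' (ψ ⁻¹' G)) :=
        Measure.map_apply hXvm (hψm hG.measurableSet)
      rw [e1, e2]
      rfl
    -- choice of the level t
    have hSmono : Monotone (fun m : ℕ => {x : Fin k → 𝒳 | 1 / (m + 1 : ℝ) < h (ψ x)}) := by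
      intro m m' hmm' x hx
      simp only [Set.mem_setOf_eq] at hx ⊢
      refine lt_of_le_of_lt ?_ hx
      apply one_div_le_one_div_of_le
      · positivity
      · have : (m : ℝ) ≤ (m' : ℝ) := Nat.cast_le.mpr hmm'
        linarith
    have hSunion : (⋃ m : ℕ, {x : Fin k → 𝒳 | 1 / (m + 1 : ℝ) < h (ψ x)}) = ψ ⁻¹' G := by
      ext x
      simp only [Set.mem_iUnion, Set.mem_setOf_eq, Set.mem_preimage]
      constructor
      · rintro ⟨m, hm⟩
        refine (hhpos (ψ x)).mpr (lt_of_le_of_lt ?_ hm)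
        positivity
      · intro hxG
        exact exists_nat_one_div_lt ((hhpos (ψ x)).mp hxG)
    have hsup : (ν0 : Measure (Fin k → 𝒳)) (ψ ⁻¹' G) =
        ⨆ m : ℕ, (ν0 : Measure (Fin k → 𝒳)) {x | 1 / (m + 1 : ℝ) < h (ψ x)} := by
      rw [← hSunion]
      exact hSmono.directed_le.measure_iUnion
    obtain ⟨mt, hmt⟩ := SlutzkyAux.exists_le_add_of_eq_iSup hsup (measure_ne_top _ _) hε0
    set t : ℝ := 1 / (mt + 1 : ℝ) with htdef
    have ht0 : 0 < t := by rw [htdef]; positivity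
    -- compact subsets of the graphs
    have hΓmeas : ∀ i, MeasurableSet {p : 𝒳 × 𝒴 | p.2 = φ i p.1} := by
      intro i
      have : {p : 𝒳 × 𝒴 | p.2 = φ i p.1} =
          (fun p : 𝒳 × 𝒴 => (p.2, φ i p.1)) ⁻¹' (Set.diagonal 𝒴) := rfl
      rw [this]
      exact (measurable_snd.prodMk ((hφm i).comp measurable_fst))
        isClosed_diagonal.measurableSet
    have hΓnull : ∀ i, (π0 i : Measure (𝒳 × 𝒴)) {p : 𝒳 × 𝒴 | p.2 = φ i p.1}ᶜ = 0 := by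
      intro i
      have e : (π0 i : Measure (𝒳 × 𝒴)) {p : 𝒳 × 𝒴 | p.2 = φ i p.1}ᶜ =
          Q ((fun ω => (X i ω, Y i ω)) ⁻¹' {p : 𝒳 × 𝒴 | p.2 = φ i p.1}ᶜ) :=
        Measure.map_apply (hplm i) (hΓmeas i).compl
      rw [e]
      exact ae_iff.mp (hφ i)
    have hK : ∀ i, ∃ K : Set (𝒳 × 𝒴), K ⊆ {p : 𝒳 × 𝒴 | p.2 = φ i p.1} ∧ IsCompact K ∧
        (π0 i : Measure (𝒳 × 𝒴)) Kᶜ ≤ ε := fun i =>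
      SlutzkyAux.exists_compact_subset _ (hΓmeas i) (hΓnull i) hε0
    choose K hKΓ hKcomp hKc using hK
    -- the compact projection set D
    set Φ : (Fin k → 𝒳 × 𝒴) → (Fin k → 𝒳) := fun z i => (z i).1 with hΦdef
    have hΦcont : Continuous Φ := continuous_pi fun i => continuous_fst.comp (continuous_apply i)
    set D : Set (Fin k → 𝒳) := Φ '' ((Set.univ.pi K) ∩ {z | h z ≤ t}) with hDdef
    have hDcomp : IsCompact D :=
      (((isCompact_univ_pi hKcomp).inter_right (isClosed_le hhcont continuous_const))).image hΦcont
    -- choice of δ₁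
    have hWunion : (⋃ m : ℕ, (Metric.cthickening (1 / (m + 1 : ℝ)) D)ᶜ) = Dᶜ := by
      rw [← Set.compl_iInter]
      congr 1
      have hrad : ∀ ε' : ℝ, 0 < ε' →
          ((Set.range fun m : ℕ => 1 / (m + 1 : ℝ)) ∩ Set.Ioc 0 ε').Nonempty := by
        intro ε' hε'
        obtain ⟨m, hm⟩ := exists_nat_one_div_lt hε'
        exact ⟨1 / (m + 1 : ℝ), ⟨m, rfl⟩, ⟨by positivity, hm.le⟩⟩
      have := Metric.closure_eq_iInter_cthickening' D (Set.range fun m : ℕ => 1 / (m + 1 : ℝ)) hrad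
      rw [Set.biInter_range] at this
      rw [← this, hDcomp.isClosed.closure_eq]
    have hWmono : Monotone (fun m : ℕ => (Metric.cthickening (1 / (m + 1 : ℝ)) D)ᶜ) := by
      intro m m' hmm'
      apply Set.compl_subset_compl.mpr
      apply Metric.cthickening_mono
      apply one_div_le_one_div_of_le
      · positivity
      · have : (m : ℝ) ≤ (m' : ℝ) := Nat.cast_le.mpr hmm'
        linarith
    have hWsup : (ν0 : Measure (Fin k → 𝒳)) Dᶜ =
        ⨆ m : ℕ, (ν0 : Measure (Fin k → 𝒳)) (Metric.cthickening (1 / (m + 1 : ℝ)) D)ᶜ := by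
      rw [← hWunion]
      exact hWmono.directed_le.measure_iUnion
    obtain ⟨m₁, hm₁⟩ := SlutzkyAux.exists_le_add_of_eq_iSup hWsup (measure_ne_top _ _) hε0
    set δ₁ : ℝ := min (1 / (m₁ + 1 : ℝ)) t with hδ₁def
    have hδ₁0 : 0 < δ₁ := lt_min (by positivity) ht0
    have hδ₁t : δ₁ ≤ t := min_le_right _ _
    set W : Set (Fin k → 𝒳) := (Metric.cthickening δ₁ D)ᶜ with hWdef
    have hWopen : IsOpen W := Metric.isClosed_cthickening.isOpen_compl
    have hWm₁ : (Metric.cthickening (1 / (m₁ + 1 : ℝ)) D)ᶜ ⊆ W :=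
      Set.compl_subset_compl.mpr (Metric.cthickening_mono (min_le_left _ _) D)
    -- thickenings of the compacts
    set T : Fin k → Set (𝒳 × 𝒴) := fun i => Metric.thickening δ₁ (K i) with hTdef
    have hTopen : ∀ i, IsOpen (T i) := fun i => Metric.isOpen_thickening
    have hKT : ∀ i, K i ⊆ T i := fun i => Metric.self_subset_thickening hδ₁0 (K i)
    -- portmanteau
    have hclosed : ∀ i, atTop.limsup (fun n => (πn i n : Measure (𝒳 × 𝒴)) (T i)ᶜ) ≤ ε := fun i =>
      le_trans (ProbabilityMeasure.limsup_measure_closed_le_of_tendsto (hpair i)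
          (hTopen i).isClosed_compl)
        (le_trans (measure_mono (Set.compl_subset_compl.mpr (hKT i))) (hKc i))
    have hopen : (ν0 : Measure (Fin k → 𝒳)) W ≤
        atTop.liminf (fun n => (νn n : Measure (Fin k → 𝒳)) W) :=
      ProbabilityMeasure.le_liminf_measure_open_of_tendsto hXv hWopen
    -- pointwise inclusion
    have hincl : ∀ n : ℕ, ((fun ω => fun i => Xn i n ω) ⁻¹' W) ∩
        (⋂ i, (fun ω => (Xn i n ω, Yn i n ω)) ⁻¹' T i) ⊆
        (fun ω => fun i => (Xn i n ω, Yn i n ω)) ⁻¹' G := by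
      intro n ω hω
      obtain ⟨hω1, hω2⟩ := hω
      rw [Set.mem_iInter] at hω2
      have hsel : ∀ i, ∃ p ∈ K i, dist (Xn i n ω, Yn i n ω) p < δ₁ := fun i =>
        Metric.mem_thickening_iff.mp (hω2 i)
      choose p hpK hpd using hsel
      have hgraph : ∀ i, p i = ((p i).1, φ i ((p i).1)) := by
        intro i
        have h2 : (p i).2 = φ i ((p i).1) := hKΓ i (hpK i)
        rw [← h2]
      set a : Fin k → 𝒳 := fun i => (p i).1 with hadef
      have hψap : ∀ i, ψ a i = p i := by
        intro i
        show (a i, φ i (a i)) = p i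
        rw [hadef]
        exact (hgraph i).symm
      have hψaK : ∀ i, ψ a i ∈ K i := fun i => (hψap i) ▸ hpK i
      have hdist_xa : ∀ i, dist (Xn i n ω) (a i) ≤ δ₁ := by
        intro i
        have h1 : dist (Xn i n ω) (a i) ≤ dist ((Xn i n ω, Yn i n ω)) (p i) := by
          rw [Prod.dist_eq]
          exact le_max_left _ _
        exact h1.trans (hpd i).le
      have hanotD : a ∉ D := by
        intro haD
        exact hω1 (Metric.mem_cthickening_of_dist_le _ a δ₁ D haD
          ((dist_pi_le_iff hδ₁0.le).mpr hdist_xa))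
      have htlt : t < h (ψ a) := by
        by_contra hle
        push_neg at hle
        exact hanotD ⟨ψ a, ⟨fun i _ => hψaK i, hle⟩, rfl⟩
      show (fun i => (Xn i n ω, Yn i n ω)) ∈ G
      by_contra hnG
      have hle1 : h (ψ a) ≤ dist (ψ a) (fun i => (Xn i n ω, Yn i n ω)) :=
        Metric.infDist_le_dist_of_mem hnG
      have hle2 : dist (ψ a) (fun i => (Xn i n ω, Yn i n ω)) ≤ δ₁ := by
        rw [dist_pi_le_iff hδ₁0.le]
        intro i
        rw [hψap i, dist_comm]
        exact (hpd i).le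
      linarith
    -- per-n measure inequality
    have hmeasineq : ∀ n : ℕ, (νn n : Measure (Fin k → 𝒳)) W ≤
        (μn n : Measure (Fin k → 𝒳 × 𝒴)) G + ∑ i, (πn i n : Measure (𝒳 × 𝒴)) (T i)ᶜ := by
      intro n
      have e1 : (νn n : Measure (Fin k → 𝒳)) W =
          P ((fun ω => fun i => Xn i n ω) ⁻¹' W) :=
        Measure.map_apply (hXvnm n) hWopen.measurableSet
      have e2 : (μn n : Measure (Fin k → 𝒳 × 𝒴)) G =
          P ((fun ω => fun i => (Xn i n ω, Yn i n ω)) ⁻¹' G) :=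
        Measure.map_apply (hZnm n) hG.measurableSet
      have e3 : ∀ i, (πn i n : Measure (𝒳 × 𝒴)) (T i)ᶜ =
          P (((fun ω => (Xn i n ω, Yn i n ω)) ⁻¹' T i)ᶜ) := fun i =>
        Measure.map_apply (hpm i n) (hTopen i).isClosed_compl.measurableSet
      rw [e1, e2]
      simp only [e3]
      set A := (fun ω => fun i => Xn i n ω) ⁻¹' W with hAdef
      set B : Fin k → Set Ω := fun i => (fun ω => (Xn i n ω, Yn i n ω)) ⁻¹' T i with hBdef2
      have hsplit : A ⊆ (A ∩ ⋂ i, B i) ∪ ⋃ i, (B i)ᶜ := by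
        intro ω hω
        by_cases hB : ∀ i, ω ∈ B i
        · exact Or.inl ⟨hω, Set.mem_iInter.mpr hB⟩
        · push_neg at hB
          obtain ⟨i, hi⟩ := hB
          exact Or.inr (Set.mem_iUnion.mpr ⟨i, hi⟩)
      calc P A ≤ P ((A ∩ ⋂ i, B i) ∪ ⋃ i, (B i)ᶜ) := measure_mono hsplit
      _ ≤ P (A ∩ ⋂ i, B i) + P (⋃ i, (B i)ᶜ) := measure_union_le _ _
      _ ≤ P ((fun ω => fun i => (Xn i n ω, Yn i n ω)) ⁻¹' G) + ∑ i, P ((B i)ᶜ) :=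
        add_le_add (measure_mono (hincl n)) (measure_iUnion_fintype_le _ _)
    -- eventual bound on the error sum
    have hev1 : ∀ i : Fin k, ∀ᶠ n in atTop, (πn i n : Measure (𝒳 × 𝒴)) (T i)ᶜ < ε + ε := fun i =>
      eventually_lt_of_limsup_lt (lt_of_le_of_lt (hclosed i) (ENNReal.lt_add_right hεtop hε0))
    have hev : ∀ᶠ n in atTop, ∑ i, (πn i n : Measure (𝒳 × 𝒴)) (T i)ᶜ ≤ (k : ℝ≥0∞) * (ε + ε) := by
      filter_upwards [eventually_all.mpr hev1] with n hn
      calc ∑ i, (πn i n : Measure (𝒳 × 𝒴)) (T i)ᶜ ≤ ∑ _i : Fin k, (ε + ε) :=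
        Finset.sum_le_sum fun i _ => (hn i).le
      _ = (k : ℝ≥0∞) * (ε + ε) := by
        rw [Finset.sum_const, Finset.card_univ, Fintype.card_fin, nsmul_eq_mul]
    -- the subset relation {t < h ∘ ψ} ⊆ Dᶜ
    have hsubD : {x : Fin k → 𝒳 | t < h (ψ x)} ⊆ Dᶜ := by
      intro x hx hxD
      obtain ⟨z, ⟨hzK, hzle⟩, hzx⟩ := hxD
      have hψxz : ψ x = z := by
        funext i
        have hz2 : (z i).2 = φ i ((z i).1) := hKΓ i (hzK i (Set.mem_univ i))
        have hx_i : x i = (z i).1 := by rw [← hzx]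
        show (x i, φ i (x i)) = z i
        rw [hx_i, ← hz2]
      rw [Set.mem_setOf_eq, hψxz] at hx
      exact absurd hzle (not_le.mpr hx)
    -- liminf with additive constant
    have hlimadd : atTop.liminf (fun n => (μn n : Measure (Fin k → 𝒳 × 𝒴)) G
        + (k : ℝ≥0∞) * (ε + ε)) =
        atTop.liminf (fun n => (μn n : Measure (Fin k → 𝒳 × 𝒴)) G) + (k : ℝ≥0∞) * (ε + ε) := by
      have hmono : Monotone (fun x : ℝ≥0∞ => x + (k : ℝ≥0∞) * (ε + ε)) :=
        fun x y hxy => add_le_add_left hxy _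
      exact (hmono.map_liminf_of_continuousAt
        (fun n => (μn n : Measure (Fin k → 𝒳 × 𝒴)) G)
        ((continuous_id.add continuous_const).continuousAt)).symm
    have hlim1 : atTop.liminf (fun n => (νn n : Measure (Fin k → 𝒳)) W) ≤
        atTop.liminf (fun n => (μn n : Measure (Fin k → 𝒳 × 𝒴)) G) + (k : ℝ≥0∞) * (ε + ε) := by
      rw [← hlimadd]
      exact liminf_le_liminf (by
        filter_upwards [hev] with n hn
        exact (hmeasineq n).trans (add_le_add_right hn _))
    -- final chain
    calc (μ0 : Measure (Fin k → 𝒳 × 𝒴)) G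
        = (ν0 : Measure (Fin k → 𝒳)) (ψ ⁻¹' G) := hμ0_eq
    _ ≤ (ν0 : Measure (Fin k → 𝒳)) {x | t < h (ψ x)} + ε := hmt
    _ ≤ (ν0 : Measure (Fin k → 𝒳)) Dᶜ + ε := add_le_add_left (measure_mono hsubD) _
    _ ≤ ((ν0 : Measure (Fin k → 𝒳)) W + ε) + ε :=
      add_le_add_left (hm₁.trans (add_le_add_left (measure_mono hWm₁) ε)) ε
    _ ≤ ((atTop.liminf (fun n => (νn n : Measure (Fin k → 𝒳)) W)) + ε) + ε := by
      gcongr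
    _ ≤ ((atTop.liminf (fun n => (μn n : Measure (Fin k → 𝒳 × 𝒴)) G)
          + (k : ℝ≥0∞) * (ε + ε)) + ε) + ε := by
      gcongr
    _ = atTop.liminf (fun n => (μn n : Measure (Fin k → 𝒳 × 𝒴)) G) + (2 * k + 2) * ε := by
      ring
  -- conclude
  refine ENNReal.le_of_forall_pos_le_add fun ε' hε' hfin => ?_
  have hc0 : (2 * (k : ℝ≥0∞) + 2) ≠ 0 := by
    intro hc
    simp only [add_eq_zero] at hc
    exact two_ne_zero hc.2
  have hctop : (2 * (k : ℝ≥0∞) + 2) ≠ ⊤ := by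
    apply ENNReal.add_ne_top.mpr
    exact ⟨ENNReal.mul_ne_top (by simp) (ENNReal.natCast_ne_top k), by simp⟩
  have hdiv0 : (ε' : ℝ≥0∞) / (2 * (k : ℝ≥0∞) + 2) ≠ 0 := by
    rw [ne_eq, ENNReal.div_eq_zero_iff]
    push_neg
    exact ⟨by exact_mod_cast hε'.ne', hctop⟩
  have hdivtop : (ε' : ℝ≥0∞) / (2 * (k : ℝ≥0∞) + 2) ≠ ⊤ := by
    exact (ENNReal.div_lt_top ENNReal.coe_ne_top hc0).ne
  calc (μ0 : Measure (Fin k → 𝒳 × 𝒴)) G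
      ≤ atTop.liminf (fun n => (μn n : Measure (Fin k → 𝒳 × 𝒴)) G)
        + (2 * k + 2) * ((ε' : ℝ≥0∞) / (2 * (k : ℝ≥0∞) + 2)) := main _ hdiv0 hdivtop
  _ = atTop.liminf (fun n => (μn n : Measure (Fin k → 𝒳 × 𝒴)) G) + ε' := by
      rw [ENNReal.mul_div_cancel hc0 hctop]
end
end
end

section
/- Convergence of conditionally independent Bernoulli random variables (Lemma A.3 / lem::cibrlem): Let 𝒳 be a Polish space, X an 𝒳-valued random element, k ∈ ℕ, and φ_1,…,φ_k : 𝒳 → [0,1] functions each continuous at Law(X)-almost every point. Let (X^n, B^n_1,…,B^n_k), n ∈ ℕ, be 𝒳 × {0,1}^k-valued random elements such that: (a) X^n converges in distribution to X; (b) for each n, B^n_1,…,B^n_k are mutually conditionally independent given σ(X^n); and (c) P(B^n_i = 1 | σ(X^n)) = φ_i(X^n) a.s. for each i and n. Then (X^n, B^n_1,…,B^n_k) converges in distribution to (X, B^(1),…,B^(k)), where B^(1),…,B^(k) are {0,1}-valued, mutually conditionally independent given σ(X), and P(B^(i) = 1 | σ(X)) = φ_i(X) a.s. for each i. -/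
open MeasureTheory ProbabilityTheory Filter

noncomputable section

set_option linter.unusedSectionVars false
namespace CIBAux

open MeasureTheory ProbabilityTheory Filter Topology Set

lemma integrable_of_bdd {Ω : Type*} [MeasurableSpace Ω] {P : Measure Ω} [IsFiniteMeasure P]
    {g : Ω → ℝ} (hm : AEStronglyMeasurable g P) {C : ℝ} (h : ∀ ω, |g ω| ≤ C) :
    Integrable g P :=
  Integrable.mono' (integrable_const C) hm (Filter.Eventually.of_forall fun ω => by
    simpa [Real.norm_eq_abs] using h ω)

lemma exists_lsc_env {𝒳 : Type*} [TopologicalSpace 𝒳] (h : 𝒳 → ℝ) (h0 : ∀ x, 0 ≤ h x) :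
    ∃ g : 𝒳 → ℝ, (∀ x, 0 ≤ g x) ∧ (∀ x, g x ≤ h x) ∧ LowerSemicontinuous g ∧
      ∀ x, ContinuousAt h x → g x = h x := by
  set S : 𝒳 → Set ℝ := fun x => {r | ∃ U : Set 𝒳, IsOpen U ∧ x ∈ U ∧ ∀ y ∈ U, r ≤ h y} with hS
  have hmem0 : ∀ x, (0:ℝ) ∈ S x := fun x => ⟨Set.univ, isOpen_univ, trivial, fun y _ => h0 y⟩
  have hbdd : ∀ x, BddAbove (S x) := fun x =>
    ⟨h x, fun r hr => by obtain ⟨U, hU, hxU, hle⟩ := hr; exact hle x hxU⟩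
  have hle : ∀ x, sSup (S x) ≤ h x := fun x =>
    csSup_le ⟨0, hmem0 x⟩ fun r hr => by obtain ⟨U, hU, hxU, hle⟩ := hr; exact hle x hxU
  refine ⟨fun x => sSup (S x), fun x => le_csSup (hbdd x) (hmem0 x), hle, ?_, ?_⟩
  · intro x t ht
    obtain ⟨r, hr, htr⟩ := exists_lt_of_lt_csSup ⟨0, hmem0 x⟩ ht
    obtain ⟨U, hU, hxU, hleU⟩ := hr
    filter_upwards [hU.mem_nhds hxU] with x' hx'
    exact lt_of_lt_of_le htr (le_csSup (hbdd x') ⟨U, hU, hx', hleU⟩)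
  · intro x hcx
    refine le_antisymm (hle x) (le_of_forall_pos_le_add fun ε hε => ?_)
    have hnb : {y | h x - ε < h y} ∈ 𝓝 x := hcx (Ioi_mem_nhds (by linarith))
    obtain ⟨U, hUsub, hU, hxU⟩ := mem_nhds_iff.mp hnb
    have hmem : h x - ε ∈ S x := ⟨U, hU, hxU, fun y hy => (hUsub hy).le⟩
    have := le_csSup (hbdd x) hmem
    linarith

lemma eventually_integral_gt {𝒳 : Type*} [MeasurableSpace 𝒳] [TopologicalSpace 𝒳]
    [PolishSpace 𝒳] [BorelSpace 𝒳]
    (μ : Measure 𝒳) (μs : ℕ → Measure 𝒳) [IsProbabilityMeasure μ]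
    [∀ n, IsProbabilityMeasure (μs n)]
    (hconv : ∀ f : BoundedContinuousFunction 𝒳 ℝ,
      Tendsto (fun n => ∫ x, f x ∂(μs n)) atTop (𝓝 (∫ x, f x ∂μ)))
    (F : 𝒳 → ℝ) (hFm : Measurable F) (C : ℝ) (hFC : ∀ x, |F x| ≤ C)
    (hae : ∀ᵐ x ∂μ, ContinuousAt F x) {ε : ℝ} (hε : 0 < ε) :
    ∀ᶠ n in atTop, ∫ x, F x ∂μ - ε < ∫ x, F x ∂(μs n) := by
  letI := TopologicalSpace.upgradeIsCompletelyMetrizable 𝒳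
  -- the shifted function
  set h : 𝒳 → ℝ := fun x => F x + C with hh
  have h0 : ∀ x, 0 ≤ h x := fun x => by have := abs_le.mp (hFC x); simp only [hh]; linarith [this.1]
  have h2C : ∀ x, h x ≤ 2 * C := fun x => by
    have := abs_le.mp (hFC x); simp only [hh]; linarith [this.2]
  obtain ⟨g, g0, gle, glsc, geq⟩ := exists_lsc_env h h0
  have gmeas : Measurable g := glsc.measurable
  have g2C : ∀ x, g x ≤ 2 * C := fun x => (gle x).trans (h2C x)
  -- weak convergence as probability measures
  set μP : ProbabilityMeasure 𝒳 := ⟨μ, inferInstance⟩ with hμP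
  set μsP : ℕ → ProbabilityMeasure 𝒳 := fun n => ⟨μs n, inferInstance⟩ with hμsP
  have htends : Tendsto μsP atTop (𝓝 μP) :=
    ProbabilityMeasure.tendsto_iff_forall_integral_tendsto.mpr fun f => hconv f
  have open_le : ∀ G : Set 𝒳, IsOpen G →
      μ G ≤ Filter.liminf (fun n => μs n G) atTop := fun G hG => by
    exact ProbabilityMeasure.le_liminf_measure_open_of_tendsto htends hG
  -- lintegral bound
  have key : ∫⁻ x, ENNReal.ofReal (g x) ∂μ
      ≤ Filter.liminf (fun n => ∫⁻ x, ENNReal.ofReal (g x) ∂(μs n)) atTop := by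
    have hmono : ∀ n : ℕ, ∫⁻ x, ENNReal.ofReal (g x) ∂(μs n)
        = ∫⁻ t in Set.Ioi (0:ℝ), μs n {a | t < g a} := fun n =>
      lintegral_eq_lintegral_meas_lt _ (Filter.Eventually.of_forall g0) gmeas.aemeasurable
    simp only [hmono]
    rw [lintegral_eq_lintegral_meas_lt _ (Filter.Eventually.of_forall g0) gmeas.aemeasurable]
    calc ∫⁻ t in Set.Ioi (0:ℝ), μ {a | t < g a}
        ≤ ∫⁻ t in Set.Ioi (0:ℝ), Filter.liminf (fun n => μs n {a | t < g a}) atTop :=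
          lintegral_mono fun t => open_le _ (glsc.isOpen_preimage t)
      _ ≤ Filter.liminf (fun n => ∫⁻ t in Set.Ioi (0:ℝ), μs n {a | t < g a}) atTop := by
          refine lintegral_liminf_le fun n => Antitone.measurable fun s t hst => ?_
          exact measure_mono fun a ha => lt_of_le_of_lt hst ha
  -- finiteness
  have hfin : ∀ (ν : Measure 𝒳), IsProbabilityMeasure ν →
      ∫⁻ x, ENNReal.ofReal (g x) ∂ν ≤ ENNReal.ofReal (2 * C) := fun ν hν => by
    calc ∫⁻ x, ENNReal.ofReal (g x) ∂ν ≤ ∫⁻ _, ENNReal.ofReal (2 * C) ∂ν :=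
          lintegral_mono fun x => ENNReal.ofReal_le_ofReal (g2C x)
      _ = ENNReal.ofReal (2 * C) := by simp
  have hfinμ : ∫⁻ x, ENNReal.ofReal (g x) ∂μ ≠ ⊤ :=
    ne_top_of_le_ne_top ENNReal.ofReal_ne_top (hfin μ inferInstance)
  have hfinn : ∀ n, ∫⁻ x, ENNReal.ofReal (g x) ∂(μs n) ≠ ⊤ := fun n =>
    ne_top_of_le_ne_top ENNReal.ofReal_ne_top (hfin (μs n) inferInstance)
  -- real integrals of g
  have hgint : ∀ (ν : Measure 𝒳), ∫ x, g x ∂ν = (∫⁻ x, ENNReal.ofReal (g x) ∂ν).toReal :=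
    fun ν => integral_eq_lintegral_of_nonneg_ae (Filter.Eventually.of_forall g0)
      gmeas.aestronglyMeasurable
  -- a.e. equality on μ
  have hgh : g =ᵐ[μ] h := by
    filter_upwards [hae] with x hx
    exact geq x (hx.add continuousAt_const)
  have hFint : ∀ (ν : Measure 𝒳), IsProbabilityMeasure ν → Integrable F ν := fun ν hν =>
    integrable_of_bdd hFm.aestronglyMeasurable hFC
  have hinth : ∀ (ν : Measure 𝒳), IsProbabilityMeasure ν →
      ∫ x, h x ∂ν = ∫ x, F x ∂ν + C := fun ν hν => by
    rw [hh]
    rw [integral_add (hFint ν hν) (integrable_const C)]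
    simp
  have hintg : ∀ (ν : Measure 𝒳), IsProbabilityMeasure ν → Integrable g ν := fun ν hν =>
    integrable_of_bdd gmeas.aestronglyMeasurable
      (C := 2 * |C|) fun x => by
        rw [abs_of_nonneg (g0 x)]
        calc g x ≤ 2 * C := g2C x
          _ ≤ 2 * |C| := by have := le_abs_self C; linarith
  -- key eventual inequality on toReal level
  have hmain : ∀ᶠ n in atTop,
      (∫⁻ x, ENNReal.ofReal (g x) ∂μ).toReal - ε
        < (∫⁻ x, ENNReal.ofReal (g x) ∂(μs n)).toReal := by
    by_cases hcneg : (∫⁻ x, ENNReal.ofReal (g x) ∂μ).toReal - ε < 0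
    · exact Filter.Eventually.of_forall fun n => lt_of_lt_of_le hcneg ENNReal.toReal_nonneg
    · push_neg at hcneg
      have hofr : ENNReal.ofReal ((∫⁻ x, ENNReal.ofReal (g x) ∂μ).toReal - ε)
          < ∫⁻ x, ENNReal.ofReal (g x) ∂μ := by
        rw [ENNReal.ofReal_lt_iff_lt_toReal hcneg hfinμ]
        linarith
      filter_upwards [Filter.eventually_lt_of_lt_liminf (lt_of_lt_of_le hofr key)] with n hn
      exact (ENNReal.ofReal_lt_iff_lt_toReal hcneg (hfinn n)).mp hn
  have hinthint : ∀ (ν : Measure 𝒳), IsProbabilityMeasure ν → Integrable h ν := fun ν hν =>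
    (hFint ν hν).add (integrable_const C)
  filter_upwards [hmain] with n hn
  have hn' : ∫ x, g x ∂μ - ε < ∫ x, g x ∂(μs n) := by
    rw [hgint μ, hgint (μs n)]; exact hn
  have e1 : ∫ x, g x ∂μ = ∫ x, F x ∂μ + C := by
    rw [integral_congr_ae hgh, hinth μ inferInstance]
  have e2 : ∫ x, g x ∂(μs n) ≤ ∫ x, F x ∂(μs n) + C := by
    rw [← hinth (μs n) inferInstance]
    exact integral_mono (hintg _ inferInstance) (hinthint _ inferInstance) fun x => gle x
  linarith


section Kernel

variable {𝒳 : Type*} [MeasurableSpace 𝒳]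

/-- The `{0,1}`-vector associated with a Boolean vector. -/
def bval (k : ℕ) (c : Fin k → Bool) : Fin k → ℝ := fun i => if c i then 1 else 0

/-- A Bernoulli factor. -/
def wfac {k : ℕ} (φ : Fin k → 𝒳 → ℝ) (i : Fin k) (b : Bool) (x : 𝒳) : ℝ :=
  if b then φ i x else 1 - φ i x

/-- The product Bernoulli weight. -/
def bwt {k : ℕ} (φ : Fin k → 𝒳 → ℝ) (c : Fin k → Bool) (x : 𝒳) : ℝ :=
  ∏ i, wfac φ i (c i) x

lemma wfac_nonneg {k : ℕ} {φ : Fin k → 𝒳 → ℝ} (hφ01 : ∀ i x, φ i x ∈ Set.Icc (0:ℝ) 1)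
    (i : Fin k) (b : Bool) (x : 𝒳) : 0 ≤ wfac φ i b x := by
  cases b
  · simpa [wfac] using (hφ01 i x).2
  · simpa [wfac] using (hφ01 i x).1

lemma wfac_measurable {k : ℕ} {φ : Fin k → 𝒳 → ℝ} (hφm : ∀ i, Measurable (φ i))
    (i : Fin k) (b : Bool) : Measurable (wfac φ i b) := by
  cases b
  · exact measurable_const.sub (hφm i)
  · exact hφm i

lemma bwt_nonneg {k : ℕ} {φ : Fin k → 𝒳 → ℝ} (hφ01 : ∀ i x, φ i x ∈ Set.Icc (0:ℝ) 1)
    (c : Fin k → Bool) (x : 𝒳) : 0 ≤ bwt φ c x :=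
  Finset.prod_nonneg fun i _ => wfac_nonneg hφ01 i (c i) x

lemma bwt_measurable {k : ℕ} {φ : Fin k → 𝒳 → ℝ} (hφm : ∀ i, Measurable (φ i))
    (c : Fin k → Bool) : Measurable (bwt φ c) :=
  Finset.measurable_prod _ fun i _ => wfac_measurable hφm i (c i)

lemma master (k : ℕ) (q : Fin k → Bool → ℝ) :
    ∑ c : Fin k → Bool, ∏ i, q i (c i) = ∏ i, (q i false + q i true) := by
  classical
  have h1 : ∏ i : Fin k, ∑ b ∈ (Finset.univ : Finset Bool), q i b
      = ∑ c ∈ Fintype.piFinset (fun _ : Fin k => (Finset.univ : Finset Bool)),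
          ∏ i : Fin k, q i (c i) := Finset.prod_univ_sum _ _
  rw [Fintype.piFinset_univ] at h1
  rw [← h1]
  exact (Finset.prod_congr rfl fun i _ => by rw [Fintype.sum_bool]; ring).symm

lemma sum_bwt_mul {k : ℕ} (φ : Fin k → 𝒳 → ℝ) (x : 𝒳) (u : Fin k → Bool → ℝ) :
    ∑ c : Fin k → Bool, bwt φ c x * ∏ i, u i (c i)
      = ∏ i, (wfac φ i false x * u i false + wfac φ i true x * u i true) := by
  have h : ∀ c : Fin k → Bool,
      bwt φ c x * ∏ i, u i (c i) = ∏ i, (wfac φ i (c i) x * u i (c i)) := fun c => by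
    rw [bwt, ← Finset.prod_mul_distrib]
  simp only [h]
  exact master k fun i b => wfac φ i b x * u i b

lemma bwt_sum {k : ℕ} (φ : Fin k → 𝒳 → ℝ) (x : 𝒳) :
    ∑ c : Fin k → Bool, bwt φ c x = 1 := by
  have h := sum_bwt_mul φ x fun _ _ => (1:ℝ)
  simpa [wfac] using h

lemma G_single {k : ℕ} (φ : Fin k → 𝒳 → ℝ) (x : 𝒳) (v : Bool → ℝ) (i : Fin k) :
    ∑ c : Fin k → Bool, bwt φ c x * v (c i)
      = wfac φ i false x * v false + wfac φ i true x * v true := by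
  have h := sum_bwt_mul φ x (fun j b => if j = i then v b else 1)
  have h1 : ∀ c : Fin k → Bool, (∏ j, if j = i then v (c j) else 1) = v (c i) := fun c => by
    rw [Finset.prod_ite_eq' Finset.univ i (fun j => v (c j))]
    simp
  simp only [h1] at h
  rw [h]
  have h2 : ∀ j : Fin k,
      wfac φ j false x * (if j = i then v false else 1)
        + wfac φ j true x * (if j = i then v true else 1)
      = if j = i then (wfac φ i false x * v false + wfac φ i true x * v true) else 1 := by
    intro j
    by_cases hj : j = i
    · subst hj; simp
    · simp only [hj, if_false, mul_one, wfac]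
      simp
  rw [Finset.prod_congr rfl fun j _ => h2 j,
    Finset.prod_ite_eq' Finset.univ i
      (fun _ => wfac φ i false x * v false + wfac φ i true x * v true)]
  simp

/-- The product Bernoulli measure with success probabilities `φ i x`. -/
def nud {k : ℕ} (φ : Fin k → 𝒳 → ℝ) (x : 𝒳) : Measure (Fin k → ℝ) :=
  ∑ c : Fin k → Bool, ENNReal.ofReal (bwt φ c x) • Measure.dirac (bval k c)

lemma nud_univ {k : ℕ} {φ : Fin k → 𝒳 → ℝ} (hφ01 : ∀ i x, φ i x ∈ Set.Icc (0:ℝ) 1) (x : 𝒳) :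
    nud φ x Set.univ = 1 := by
  rw [nud, Measure.finset_sum_apply]
  simp only [Measure.smul_apply, measure_univ, smul_eq_mul, mul_one]
  rw [← ENNReal.ofReal_sum_of_nonneg fun c _ => bwt_nonneg hφ01 c x, bwt_sum]
  simp

lemma integral_nud {k : ℕ} {φ : Fin k → 𝒳 → ℝ} (hφ01 : ∀ i x, φ i x ∈ Set.Icc (0:ℝ) 1)
    (x : 𝒳) (g : (Fin k → ℝ) → ℝ) (hgm : Measurable g) {Cg : ℝ} (hgC : ∀ b, |g b| ≤ Cg) :
    ∫ b, g b ∂(nud φ x) = ∑ c : Fin k → Bool, bwt φ c x * g (bval k c) := by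
  rw [nud, integral_finset_sum_measure fun c _ =>
    (integrable_of_bdd hgm.aestronglyMeasurable hgC).smul_measure ENNReal.ofReal_ne_top]
  refine Finset.sum_congr rfl fun c _ => ?_
  rw [integral_smul_measure, integral_dirac, smul_eq_mul,
    ENNReal.toReal_ofReal (bwt_nonneg hφ01 c x)]

/-- The product Bernoulli kernel. -/
def nuK {k : ℕ} (φ : Fin k → 𝒳 → ℝ) (hφm : ∀ i, Measurable (φ i)) :
    Kernel 𝒳 (Fin k → ℝ) :=
  ⟨nud φ, by
    apply Measure.measurable_of_measurable_coe
    intro s hs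
    simp only [nud, Measure.finset_sum_apply, Measure.smul_apply, smul_eq_mul]
    exact Finset.measurable_sum _ fun c _ =>
      ((bwt_measurable hφm c).ennreal_ofReal).mul_const _⟩

lemma nuK_apply {k : ℕ} (φ : Fin k → 𝒳 → ℝ) (hφm : ∀ i, Measurable (φ i)) (x : 𝒳) :
    nuK φ hφm x = nud φ x := rfl

lemma isMarkov_nuK {k : ℕ} (φ : Fin k → 𝒳 → ℝ) (hφm : ∀ i, Measurable (φ i))
    (hφ01 : ∀ i x, φ i x ∈ Set.Icc (0:ℝ) 1) : IsMarkovKernel (nuK φ hφm) :=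
  ⟨fun x => ⟨by rw [nuK_apply]; exact nud_univ hφ01 x⟩⟩

lemma condexp_snd {k : ℕ} (φ : Fin k → 𝒳 → ℝ) (hφm : ∀ i, Measurable (φ i))
    (hφ01 : ∀ i x, φ i x ∈ Set.Icc (0:ℝ) 1)
    (μ : Measure 𝒳) [IsProbabilityMeasure μ]
    (g : (Fin k → ℝ) → ℝ) (hgm : Measurable g) {Cg : ℝ} (hgC : ∀ b, |g b| ≤ Cg) :
    (μ ⊗ₘ nuK φ hφm)[(fun p => g p.2) | MeasurableSpace.comap Prod.fst inferInstance]
      =ᵐ[μ ⊗ₘ nuK φ hφm]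
        fun p => ∑ c : Fin k → Bool, bwt φ c p.1 * g (bval k c) := by
  haveI := isMarkov_nuK φ hφm hφ01
  have hm : MeasurableSpace.comap (Prod.fst : 𝒳 × (Fin k → ℝ) → 𝒳) inferInstance
      ≤ Prod.instMeasurableSpace := measurable_fst.comap_le
  have hCg0 : 0 ≤ Cg := le_trans (abs_nonneg _) (hgC 0)
  have hGm : Measurable (fun x => ∑ c : Fin k → Bool, bwt φ c x * g (bval k c)) :=
    Finset.measurable_sum _ fun c _ => (bwt_measurable hφm c).mul_const _
  have hGb : ∀ x, |∑ c : Fin k → Bool, bwt φ c x * g (bval k c)| ≤ Cg := fun x => by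
    calc |∑ c : Fin k → Bool, bwt φ c x * g (bval k c)|
        ≤ ∑ c : Fin k → Bool, |bwt φ c x * g (bval k c)| := Finset.abs_sum_le_sum_abs _ _
      _ ≤ ∑ c : Fin k → Bool, bwt φ c x * Cg := by
          refine Finset.sum_le_sum fun c _ => ?_
          rw [abs_mul, abs_of_nonneg (bwt_nonneg hφ01 c x)]
          exact mul_le_mul_of_nonneg_left (hgC _) (bwt_nonneg hφ01 c x)
      _ = Cg := by rw [← Finset.sum_mul, bwt_sum, one_mul]
  have hfint : Integrable (fun p : 𝒳 × (Fin k → ℝ) => g p.2) (μ ⊗ₘ nuK φ hφm) :=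
    integrable_of_bdd (hgm.comp measurable_snd).aestronglyMeasurable fun p => hgC _
  have hGint : Integrable
      (fun p : 𝒳 × (Fin k → ℝ) => ∑ c : Fin k → Bool, bwt φ c p.1 * g (bval k c))
      (μ ⊗ₘ nuK φ hφm) :=
    integrable_of_bdd (hGm.comp measurable_fst).aestronglyMeasurable fun p => hGb _
  refine (ae_eq_condExp_of_forall_setIntegral_eq hm hfint
    (fun s _ _ => hGint.integrableOn) (fun s hs _ => ?_) ?_).symm
  · obtain ⟨t, ht, rfl⟩ := hs
    rw [← Set.prod_univ]
    rw [Measure.setIntegral_compProd ht MeasurableSet.univ hGint.integrableOn,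
      Measure.setIntegral_compProd ht MeasurableSet.univ hfint.integrableOn]
    refine setIntegral_congr_fun ht fun x _ => ?_
    simp only [Measure.restrict_univ]
    rw [nuK_apply, integral_nud hφ01 x g hgm hgC]
    haveI : IsProbabilityMeasure (nud φ x) := ⟨nud_univ hφ01 x⟩
    simp
  · exact StronglyMeasurable.aestronglyMeasurable
      ((hGm.comp (Measurable.of_comap_le le_rfl)).stronglyMeasurable)

end Kernel

lemma tendsto_integral_of_aecont {𝒳 : Type*} [MeasurableSpace 𝒳] [TopologicalSpace 𝒳]
    [PolishSpace 𝒳] [BorelSpace 𝒳]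
    (μ : Measure 𝒳) (μs : ℕ → Measure 𝒳) [IsProbabilityMeasure μ]
    [∀ n, IsProbabilityMeasure (μs n)]
    (hconv : ∀ f : BoundedContinuousFunction 𝒳 ℝ,
      Tendsto (fun n => ∫ x, f x ∂(μs n)) atTop (𝓝 (∫ x, f x ∂μ)))
    (F : 𝒳 → ℝ) (hFm : Measurable F) (C : ℝ) (hFC : ∀ x, |F x| ≤ C)
    (hae : ∀ᵐ x ∂μ, ContinuousAt F x) :
    Tendsto (fun n => ∫ x, F x ∂(μs n)) atTop (𝓝 (∫ x, F x ∂μ)) := by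
  rw [Metric.tendsto_atTop]
  intro ε hε
  have h1 := eventually_integral_gt μ μs hconv F hFm C hFC hae (half_pos hε)
  have h2 := eventually_integral_gt μ μs hconv (fun x => -F x) hFm.neg C
    (fun x => by simpa using hFC x)
    (by filter_upwards [hae] with x hx; exact hx.neg) (half_pos hε)
  obtain ⟨N1, hN1⟩ := Filter.eventually_atTop.mp h1
  obtain ⟨N2, hN2⟩ := Filter.eventually_atTop.mp h2
  refine ⟨max N1 N2, fun n hn => ?_⟩
  have a1 := hN1 n (le_trans (le_max_left _ _) hn)
  have a2 := hN2 n (le_trans (le_max_right _ _) hn)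
  rw [integral_neg, integral_neg] at a2
  rw [Real.dist_eq, abs_lt]
  constructor <;> linarith

lemma select {k : ℕ} (b : Fin k → ℝ) (hb : ∀ i, b i = 0 ∨ b i = 1)
    (ψ : (Fin k → ℝ) → ℝ) :
    ∑ c : Fin k → Bool, (∏ i, if c i then b i else 1 - b i) * ψ (bval k c) = ψ b := by
  classical
  set c0 : Fin k → Bool := fun i => if b i = 1 then true else false with hc0
  have hb0 : bval k c0 = b := by
    funext i
    rcases hb i with h | h <;> simp [bval, c0, h]
  have hprod : ∀ c : Fin k → Bool, (∏ i, if c i then b i else 1 - b i)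
      = if c = c0 then 1 else 0 := by
    intro c
    by_cases h : c = c0
    · subst h
      rw [if_pos rfl]
      refine Finset.prod_eq_one fun i _ => ?_
      rcases hb i with h0 | h1
      · have hcc : c0 i = false := by simp [c0, h0]
        rw [hcc]; simp [h0]
      · have hcc : c0 i = true := by simp [c0, h1]
        rw [hcc]; simp [h1]
    · rw [if_neg h]
      have hex : ∃ i, c i ≠ c0 i := by
        by_contra hall; push_neg at hall; exact h (funext hall)
      obtain ⟨i, hi⟩ := hex
      refine Finset.prod_eq_zero (Finset.mem_univ i) ?_
      rcases hb i with h0 | h1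
      · have hc0i : c0 i = false := by simp [c0, h0]
        have hci : c i = true := by
          cases hci : c i
          · exact absurd (hci.trans hc0i.symm) hi
          · rfl
        rw [hci]; simp [h0]
      · have hc0i : c0 i = true := by simp [c0, h1]
        have hci : c i = false := by
          cases hci : c i
          · rfl
          · exact absurd (hci.trans hc0i.symm) hi
        rw [hci]; simp [h1]
  calc ∑ c : Fin k → Bool, (∏ i, if c i then b i else 1 - b i) * ψ (bval k c)
      = ∑ c : Fin k → Bool, if c = c0 then ψ (bval k c) else 0 := by
        refine Finset.sum_congr rfl fun c _ => ?_
        rw [hprod c]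
        by_cases h : c = c0 <;> simp [h]
    _ = ψ b := by
        rw [Finset.sum_ite_eq' Finset.univ c0 fun c => ψ (bval k c)]
        simp [hb0]

end CIBAux

open CoevolveNet MeasureTheory ProbabilityTheory Filter

/-- **Convergence of conditionally independent Bernoulli random variables**
(Lemma A.3).  Suppose `X^n ⇒ X`, and for each `n` the `{0,1}`-valued variables
`B^n_1,…,B^n_k` are mutually conditionally independent given `σ(X^n)` with
`P(B^n_i = 1 | X^n) = φ_i(X^n)`, where each `φ_i` is `[0,1]`-valued and continuous at
`Law(X)`-a.e. point.  Then `(X^n,B^n) ⇒ (X,B)`, where (realizing the limit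
canonically on `𝒳 × {0,1}^k` with coordinate maps) `B^{(1)},…,B^{(k)}` are
`{0,1}`-valued, mutually conditionally independent given `σ(X)`, and
`P(B^{(i)} = 1 | X) = φ_i(X)` a.s. -/
theorem tendstoInDist_condIndep_bernoulli
    {Ω Ω' 𝒳 : Type*} [MeasurableSpace Ω] [MeasurableSpace Ω']
    [TopologicalSpace 𝒳] [PolishSpace 𝒳] [MeasurableSpace 𝒳] [BorelSpace 𝒳]
    (P : Measure Ω) (Q : Measure Ω') [IsProbabilityMeasure P] [IsProbabilityMeasure Q]
    (X : Ω' → 𝒳) (hX : Measurable X)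
    (k : ℕ) (φ : Fin k → 𝒳 → ℝ)
    (hφ01 : ∀ i x, φ i x ∈ Set.Icc (0 : ℝ) 1)
    (hφm : ∀ i, Measurable (φ i))
    (hφcont : ∀ i, AEContinuous (Q.map X) (φ i))
    (Xn : ℕ → Ω → 𝒳) (Bn : ℕ → Fin k → Ω → ℝ)
    (hXn : ∀ n, Measurable (Xn n)) (hBn : ∀ n i, Measurable (Bn n i))
    (hBn01 : ∀ n i ω, Bn n i ω = 0 ∨ Bn n i ω = 1)
    (hXconv : TendstoInDist P Q Xn X)
    (hCI : ∀ n, iCondIndepGiven P (MeasurableSpace.comap (Xn n) inferInstance) (Bn n))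
    (hcond : ∀ n i,
      P[Bn n i | MeasurableSpace.comap (Xn n) inferInstance]
        =ᵐ[P] fun ω => φ i (Xn n ω)) :
    ∃ R : Measure (𝒳 × (Fin k → ℝ)), IsProbabilityMeasure R ∧
      R.map Prod.fst = Q.map X ∧
      (∀ᵐ p ∂ R, ∀ i, p.2 i = 0 ∨ p.2 i = 1) ∧
      iCondIndepGiven R (MeasurableSpace.comap Prod.fst inferInstance)
        (fun i : Fin k => fun p : 𝒳 × (Fin k → ℝ) => p.2 i) ∧
      (∀ i, R[(fun p : 𝒳 × (Fin k → ℝ) => p.2 i) |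
          MeasurableSpace.comap Prod.fst inferInstance]
        =ᵐ[R] fun p => φ i p.1) ∧
      TendstoInDist P R (fun n ω => (Xn n ω, fun i => Bn n i ω)) id := by
  classical
  set μ : Measure 𝒳 := Q.map X with hμdef
  haveI : IsProbabilityMeasure μ := Measure.isProbabilityMeasure_map hX.aemeasurable
  haveI hMK : IsMarkovKernel (CIBAux.nuK φ hφm) := CIBAux.isMarkov_nuK φ hφm hφ01
  set R : Measure (𝒳 × (Fin k → ℝ)) := μ ⊗ₘ CIBAux.nuK φ hφm with hRdef
  haveI hRP : IsProbabilityMeasure R := by rw [hRdef]; infer_instance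
  have hm : MeasurableSpace.comap (Prod.fst : 𝒳 × (Fin k → ℝ) → 𝒳) inferInstance
      ≤ Prod.instMeasurableSpace := measurable_fst.comap_le
  -- the a.e. {0,1} property
  have hsmeas : MeasurableSet {p : 𝒳 × (Fin k → ℝ) | ∀ i, p.2 i = 0 ∨ p.2 i = 1} := by
    have hseq : {p : 𝒳 × (Fin k → ℝ) | ∀ i, p.2 i = 0 ∨ p.2 i = 1}
        = ⋂ i, (fun p : 𝒳 × (Fin k → ℝ) => p.2 i) ⁻¹' {0, 1} := by
      ext p; simp [Set.mem_iInter]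
    rw [hseq]
    exact MeasurableSet.iInter fun i =>
      ((measurable_pi_apply i).comp measurable_snd)
        ((measurableSet_singleton 0).union (measurableSet_singleton 1))
  have hae01 : ∀ᵐ p ∂ R, ∀ i, p.2 i = 0 ∨ p.2 i = 1 := by
    rw [ae_iff]
    have hcompl : {p : 𝒳 × (Fin k → ℝ) | ¬ ∀ i, p.2 i = 0 ∨ p.2 i = 1}
        = {p : 𝒳 × (Fin k → ℝ) | ∀ i, p.2 i = 0 ∨ p.2 i = 1}ᶜ := rfl
    rw [hcompl, hRdef, Measure.compProd_apply hsmeas.compl]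
    have hz : ∀ x : 𝒳, (CIBAux.nuK φ hφm) x
        (Prod.mk x ⁻¹' {p : 𝒳 × (Fin k → ℝ) | ∀ i, p.2 i = 0 ∨ p.2 i = 1}ᶜ) = 0 := by
      intro x
      rw [CIBAux.nuK_apply, CIBAux.nud, Measure.finset_sum_apply]
      refine Finset.sum_eq_zero fun c _ => ?_
      rw [Measure.smul_apply,
        Measure.dirac_apply' _ (measurable_prodMk_left hsmeas.compl)]
      have hmem : (x, CIBAux.bval k c)
          ∈ {p : 𝒳 × (Fin k → ℝ) | ∀ i, p.2 i = 0 ∨ p.2 i = 1} := by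
        intro i
        by_cases h : c i <;> simp [CIBAux.bval, h]
      have hnot : CIBAux.bval k c
          ∉ Prod.mk x ⁻¹' {p : 𝒳 × (Fin k → ℝ) | ∀ i, p.2 i = 0 ∨ p.2 i = 1}ᶜ := by
        simp only [Set.mem_preimage, Set.mem_compl_iff, not_not]
        exact hmem
      rw [Set.indicator_of_notMem hnot]
      simp
    rw [lintegral_congr hz, lintegral_zero]
  -- the clamp function
  set cl : ℝ → ℝ := fun t => max 0 (min t 1) with hcldef
  have hclm : Measurable cl :=
    (continuous_const.max (continuous_id.min continuous_const)).measurable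
  have hcl0 : ∀ t, 0 ≤ cl t := fun t => le_max_left _ _
  have hcl1 : ∀ t, cl t ≤ 1 := fun t => max_le zero_le_one (min_le_right _ _)
  have hclb : ∀ t, |cl t| ≤ 1 := fun t => abs_le.mpr ⟨by linarith [hcl0 t], hcl1 t⟩
  have hcl01 : ∀ t : ℝ, t = 0 ∨ t = 1 → cl t = t := by
    rintro t (h | h) <;> simp [cl, h]
  refine ⟨R, hRP, ?_, hae01, ?_, ?_, ?_⟩
  · -- marginal
    exact Measure.fst_compProd μ (CIBAux.nuK φ hφm)
  · -- conditional independence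
    intro f hfm hfb
    choose Cf hCf using hfb
    have hgm : Measurable fun b : Fin k → ℝ => ∏ i, f i (b i) :=
      Finset.measurable_prod _ fun i _ => (hfm i).comp (measurable_pi_apply i)
    have hgb : ∀ b : Fin k → ℝ, |∏ i, f i (b i)| ≤ ∏ i, Cf i := fun b => by
      rw [Finset.abs_prod]
      exact Finset.prod_le_prod (fun i _ => abs_nonneg _) fun i _ => hCf i (b i)
    have hL := CIBAux.condexp_snd φ hφm hφ01 μ _ hgm hgb
    have hRi : ∀ i : Fin k,
        (R[(fun p : 𝒳 × (Fin k → ℝ) => f i (p.2 i)) |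
          MeasurableSpace.comap Prod.fst inferInstance])
        =ᵐ[R] fun p => ∑ c : Fin k → Bool, CIBAux.bwt φ c p.1 * f i (CIBAux.bval k c i) :=
      fun i => CIBAux.condexp_snd φ hφm hφ01 μ (fun b => f i (b i))
        ((hfm i).comp (measurable_pi_apply i)) (fun b => hCf i (b i))
    have hall := (ae_all_iff).mpr hRi
    refine hL.trans ?_
    filter_upwards [hall] with p hp
    simp only [hp]
    simp only [CIBAux.bval]
    rw [CIBAux.sum_bwt_mul φ p.1 (fun i b => f i (if b then 1 else 0))]
    exact Finset.prod_congr rfl fun i _ =>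
      (CIBAux.G_single φ p.1 (fun b => f i (if b then 1 else 0)) i).symm
  · -- conditional Bernoulli probabilities
    intro i
    have h1 := CIBAux.condexp_snd φ hφm hφ01 μ (fun b => cl (b i))
      (hclm.comp (measurable_pi_apply i)) (fun b => hclb _)
    have h0 : (fun p : 𝒳 × (Fin k → ℝ) => p.2 i) =ᵐ[R] fun p => cl (p.2 i) := by
      filter_upwards [hae01] with p hp
      exact (hcl01 _ (hp i)).symm
    refine (condExp_congr_ae h0).trans (h1.trans ?_)
    refine Filter.Eventually.of_forall fun p => ?_
    have hclval : ∀ c : Fin k → Bool,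
        cl (CIBAux.bval k c i) = (fun b : Bool => if b then (1:ℝ) else 0) (c i) := fun c => by
      by_cases h : c i <;> simp [CIBAux.bval, cl, h]
    simp only [hclval]
    rw [CIBAux.G_single φ p.1 (fun b => if b then (1:ℝ) else 0) i]
    simp [CIBAux.wfac]
  · -- convergence in distribution
    intro f
    set F : 𝒳 → ℝ := fun x =>
      ∑ c : Fin k → Bool, CIBAux.bwt φ c x * f (x, CIBAux.bval k c) with hFdef
    have hfcm : ∀ c : Fin k → Bool, Measurable fun x : 𝒳 => f (x, CIBAux.bval k c) :=
      fun c => f.continuous.measurable.comp (measurable_id.prodMk measurable_const)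
    have hFm : Measurable F :=
      Finset.measurable_sum _ fun c _ => (CIBAux.bwt_measurable hφm c).mul (hfcm c)
    have hfnorm : ∀ p : 𝒳 × (Fin k → ℝ), |f p| ≤ ‖f‖ := fun p => by
      rw [← Real.norm_eq_abs]; exact f.norm_coe_le_norm p
    have hFb : ∀ x, |F x| ≤ ‖f‖ := fun x => by
      calc |F x| ≤ ∑ c : Fin k → Bool, |CIBAux.bwt φ c x * f (x, CIBAux.bval k c)| :=
            Finset.abs_sum_le_sum_abs _ _
        _ ≤ ∑ c : Fin k → Bool, CIBAux.bwt φ c x * ‖f‖ := by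
            refine Finset.sum_le_sum fun c _ => ?_
            rw [abs_mul, abs_of_nonneg (CIBAux.bwt_nonneg hφ01 c x)]
            exact mul_le_mul_of_nonneg_left (hfnorm _) (CIBAux.bwt_nonneg hφ01 c x)
        _ = ‖f‖ := by rw [← Finset.sum_mul, CIBAux.bwt_sum, one_mul]
    have hFcont : ∀ᵐ x ∂μ, ContinuousAt F x := by
      have hphi : ∀ᵐ x ∂μ, ∀ i, ContinuousAt (φ i) x :=
        (ae_all_iff).mpr fun i => hφcont i
      filter_upwards [hphi] with x hx
      have hbwtc : ∀ c : Fin k → Bool, ContinuousAt (fun y => CIBAux.bwt φ c y) x := by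
        intro c
        refine tendsto_finset_prod _ fun i _ => ?_
        cases hb : c i
        · exact (continuousAt_const.sub (hx i))
        · exact hx i
      refine tendsto_finset_sum _ fun c _ => ?_
      exact ContinuousAt.mul (hbwtc c)
        ((f.continuous.comp (continuous_id.prodMk continuous_const)).continuousAt)
    set μs : ℕ → Measure 𝒳 := fun n => P.map (Xn n) with hμsdef
    haveI : ∀ n, IsProbabilityMeasure (μs n) := fun n =>
      Measure.isProbabilityMeasure_map (hXn n).aemeasurable
    have hconv' : ∀ fb : BoundedContinuousFunction 𝒳 ℝ,
        Tendsto (fun n => ∫ x, fb x ∂(μs n)) atTop (nhds (∫ x, fb x ∂μ)) := by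
      intro fb
      have h1 : ∀ n, ∫ x, fb x ∂(μs n) = ∫ ω, fb (Xn n ω) ∂P := fun n =>
        integral_map (hXn n).aemeasurable fb.continuous.measurable.aestronglyMeasurable
      have h2 : ∫ x, fb x ∂μ = ∫ ω, fb (X ω) ∂Q :=
        integral_map hX.aemeasurable fb.continuous.measurable.aestronglyMeasurable
      simp only [h1, h2]
      exact hXconv fb
    have htendF := CIBAux.tendsto_integral_of_aecont μ μs hconv' F hFm ‖f‖ hFb hFcont
    -- the limit integral
    have hRint : ∫ p, f (id p) ∂ R = ∫ x, F x ∂μ := by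
      simp only [id_eq]
      rw [hRdef, Measure.integral_compProd (CIBAux.integrable_of_bdd
        f.continuous.measurable.aestronglyMeasurable hfnorm)]
      refine integral_congr_ae (Filter.Eventually.of_forall fun x => ?_)
      show ∫ b, f (x, b) ∂((CIBAux.nuK φ hφm) x) = F x
      rw [CIBAux.nuK_apply, CIBAux.integral_nud hφ01 x (fun b => f (x, b))
        (f.continuous.measurable.comp measurable_prodMk_left) (fun b => hfnorm _)]
    -- the prelimit integrals
    have hkey : ∀ n, ∫ ω, f (Xn n ω, fun i => Bn n i ω) ∂P = ∫ x, F x ∂(μs n) := by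
      intro n
      rw [hμsdef]
      rw [integral_map (hXn n).aemeasurable hFm.aestronglyMeasurable]
      have hmn : MeasurableSpace.comap (Xn n) inferInstance ≤ _ := (hXn n).comap_le
      have hBb : ∀ i ω, |Bn n i ω| ≤ 1 := fun i ω => by
        rcases hBn01 n i ω with h | h <;> simp [h]
      have hBint : ∀ i, Integrable (Bn n i) P := fun i =>
        CIBAux.integrable_of_bdd (hBn n i).aestronglyMeasurable (hBb i)
      set fB : Bool → ℝ → ℝ := fun b t => if b then cl t else 1 - cl t with hfBdef
      have hfBm : ∀ b, Measurable (fB b) := by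
        intro b
        cases b
        · exact measurable_const.sub hclm
        · exact hclm
      have hfB01 : ∀ b t, fB b t ∈ Set.Icc (0:ℝ) 1 := by
        intro b t
        cases b
        · have he : fB false t = 1 - cl t := by simp [fB]
          rw [Set.mem_Icc, he]
          constructor <;> linarith [hcl0 t, hcl1 t]
        · have he : fB true t = cl t := by simp [fB]
          rw [Set.mem_Icc, he]
          exact ⟨hcl0 t, hcl1 t⟩
      have hfBb : ∀ b, CoevolveNet.IsBdd (fB b) := fun b =>
        ⟨1, fun t => abs_le.mpr ⟨by linarith [(hfB01 b t).1], (hfB01 b t).2⟩⟩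
      have hcleq : ∀ i ω, cl (Bn n i ω) = Bn n i ω := fun i ω => hcl01 _ (hBn01 n i ω)
      -- conditional expectation of the Boolean product
      have hZcond : ∀ c : Fin k → Bool,
          (P[(fun ω => ∏ i, fB (c i) (Bn n i ω)) |
            MeasurableSpace.comap (Xn n) inferInstance])
          =ᵐ[P] fun ω => CIBAux.bwt φ c (Xn n ω) := by
        intro c
        have h1 := hCI n (fun i => fB (c i)) (fun i => hfBm (c i)) (fun i => hfBb (c i))
        have h2 : ∀ i : Fin k,
            (P[(fun ω' => fB (c i) (Bn n i ω')) |
              MeasurableSpace.comap (Xn n) inferInstance])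
            =ᵐ[P] fun ω => CIBAux.wfac φ i (c i) (Xn n ω) := by
          intro i
          cases hb : c i
          · have he : (fun ω' => fB false (Bn n i ω')) = (fun _ => (1:ℝ)) - Bn n i := by
              funext ω'
              simp [fB, hcleq i ω']
            rw [he]
            refine (condExp_sub (integrable_const (1:ℝ)) (hBint i) _).trans ?_
            rw [condExp_const hmn]
            filter_upwards [hcond n i] with ω hω
            simp only [Pi.sub_apply, hω, CIBAux.wfac]
            simp
          · have he : (fun ω' => fB true (Bn n i ω')) = Bn n i := by
              funext ω'
              simp [fB, hcleq i ω']
            rw [he]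
            filter_upwards [hcond n i] with ω hω
            rw [hω]
            simp [CIBAux.wfac]
        refine h1.trans ?_
        filter_upwards [(ae_all_iff).mpr h2] with ω hω
        rw [CIBAux.bwt]
        exact Finset.prod_congr rfl fun i _ => hω i
      -- per-component integral identity
      have hper : ∀ c : Fin k → Bool,
          ∫ ω, f (Xn n ω, CIBAux.bval k c) * (∏ i, fB (c i) (Bn n i ω)) ∂P
            = ∫ ω, f (Xn n ω, CIBAux.bval k c) * CIBAux.bwt φ c (Xn n ω) ∂P := by
        intro c
        set Y : Ω → ℝ := fun ω => f (Xn n ω, CIBAux.bval k c) with hYdef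
        set Z : Ω → ℝ := fun ω => ∏ i, fB (c i) (Bn n i ω) with hZdef
        have hYm : Measurable Y := (hfcm c).comp (hXn n)
        have hYsm : StronglyMeasurable[MeasurableSpace.comap (Xn n) inferInstance] Y :=
          ((hfcm c).comp (Measurable.of_comap_le le_rfl)).stronglyMeasurable
        have hZm : Measurable Z :=
          Finset.measurable_prod _ fun i _ => (hfBm (c i)).comp (hBn n i)
        have hZ01 : ∀ ω, Z ω ∈ Set.Icc (0:ℝ) 1 := fun ω =>
          ⟨Finset.prod_nonneg fun i _ => (hfB01 (c i) _).1,
           Finset.prod_le_one (fun i _ => (hfB01 (c i) _).1) fun i _ => (hfB01 (c i) _).2⟩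
        have hZb : ∀ ω, |Z ω| ≤ 1 := fun ω =>
          abs_le.mpr ⟨by linarith [(hZ01 ω).1], (hZ01 ω).2⟩
        have hZint : Integrable Z P := CIBAux.integrable_of_bdd hZm.aestronglyMeasurable hZb
        have hYZint : Integrable (Y * Z) P :=
          CIBAux.integrable_of_bdd (hYm.mul hZm).aestronglyMeasurable
            (C := ‖f‖ * 1) fun ω => by
              rw [Pi.mul_apply, abs_mul]
              exact mul_le_mul (hfnorm _) (hZb ω) (abs_nonneg _) (norm_nonneg f)
        calc ∫ ω, Y ω * Z ω ∂P
            = ∫ ω, (P[Y * Z | MeasurableSpace.comap (Xn n) inferInstance]) ω ∂P :=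
              (integral_condExp hmn).symm
          _ = ∫ ω, (Y * (P[Z | MeasurableSpace.comap (Xn n) inferInstance])) ω ∂P :=
              integral_congr_ae (condExp_mul_of_stronglyMeasurable_left hYsm hYZint hZint)
          _ = ∫ ω, Y ω * CIBAux.bwt φ c (Xn n ω) ∂P := by
              refine integral_congr_ae ?_
              filter_upwards [hZcond c] with ω hω
              rw [Pi.mul_apply, hω]
      -- pointwise selection identity
      have hsel : ∀ ω, f (Xn n ω, fun i => Bn n i ω)
          = ∑ c : Fin k → Bool,
              (∏ i, fB (c i) (Bn n i ω)) * f (Xn n ω, CIBAux.bval k c) := by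
        intro ω
        have h1 := CIBAux.select (fun i => Bn n i ω) (fun i => hBn01 n i ω)
          (fun b => f (Xn n ω, b))
        rw [← h1]
        refine Finset.sum_congr rfl fun c _ => ?_
        congr 1
        refine Finset.prod_congr rfl fun i _ => ?_
        cases hb : c i <;> simp [fB, hcleq i ω]
      have hintc : ∀ c : Fin k → Bool, Integrable
          (fun ω => (∏ i, fB (c i) (Bn n i ω)) * f (Xn n ω, CIBAux.bval k c)) P := by
        intro c
        refine CIBAux.integrable_of_bdd
          ((Finset.measurable_prod _ fun i _ => (hfBm (c i)).comp (hBn n i)).mul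
            ((hfcm c).comp (hXn n))).aestronglyMeasurable (C := 1 * ‖f‖) fun ω => ?_
        rw [abs_mul]
        refine mul_le_mul ?_ (hfnorm _) (abs_nonneg _) zero_le_one
        rw [Finset.abs_prod]
        refine Finset.prod_le_one (fun i _ => abs_nonneg _) fun i _ => ?_
        have h01 := hfB01 (c i) (Bn n i ω)
        rw [Set.mem_Icc] at h01
        exact abs_le.mpr ⟨by linarith [h01.1], h01.2⟩
      calc ∫ ω, f (Xn n ω, fun i => Bn n i ω) ∂P
          = ∫ ω, ∑ c : Fin k → Bool,
              (∏ i, fB (c i) (Bn n i ω)) * f (Xn n ω, CIBAux.bval k c) ∂P :=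
            integral_congr_ae (Filter.Eventually.of_forall hsel)
        _ = ∑ c : Fin k → Bool, ∫ ω,
              (∏ i, fB (c i) (Bn n i ω)) * f (Xn n ω, CIBAux.bval k c) ∂P :=
            integral_finset_sum _ fun c _ => hintc c
        _ = ∑ c : Fin k → Bool, ∫ ω,
              f (Xn n ω, CIBAux.bval k c) * CIBAux.bwt φ c (Xn n ω) ∂P := by
            refine Finset.sum_congr rfl fun c _ => ?_
            rw [show (fun ω => (∏ i, fB (c i) (Bn n i ω)) * f (Xn n ω, CIBAux.bval k c))
                = fun ω => f (Xn n ω, CIBAux.bval k c) * (∏ i, fB (c i) (Bn n i ω)) from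
              funext fun ω => mul_comm _ _]
            exact hper c
        _ = ∫ ω, ∑ c : Fin k → Bool,
              f (Xn n ω, CIBAux.bval k c) * CIBAux.bwt φ c (Xn n ω) ∂P := by
            refine (integral_finset_sum _ fun c _ => ?_).symm
            refine CIBAux.integrable_of_bdd
              (((hfcm c).comp (hXn n)).mul
                ((CIBAux.bwt_measurable hφm c).comp (hXn n))).aestronglyMeasurable
              (C := ‖f‖ * 1) fun ω => ?_
            rw [abs_mul]
            refine mul_le_mul (hfnorm _) ?_ (abs_nonneg _) (norm_nonneg f)
            rw [abs_of_nonneg (CIBAux.bwt_nonneg hφ01 c _)]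
            calc CIBAux.bwt φ c (Xn n ω)
                ≤ ∑ c' : Fin k → Bool, CIBAux.bwt φ c' (Xn n ω) :=
                  Finset.single_le_sum (fun c' _ => CIBAux.bwt_nonneg hφ01 c' _)
                    (Finset.mem_univ c)
              _ = 1 := CIBAux.bwt_sum φ _
        _ = ∫ ω, F (Xn n ω) ∂P := by
            refine integral_congr_ae (Filter.Eventually.of_forall fun ω => ?_)
            rw [hFdef]
            exact Finset.sum_congr rfl fun c _ => mul_comm _ _
    have hfun : (fun n => ∫ ω, f (Xn n ω, fun i => Bn n i ω) ∂P)
        = fun n => ∫ x, F x ∂(μs n) := funext hkey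
    rw [hfun, hRint]
    exact htendF
end
end

section
/- Continuous dependence of the conditional law (Lemma A.1(a) / lem::condmapcont(a)): Let X and Y be independent random elements of Polish spaces 𝒳 and 𝒴 respectively. Suppose f : 𝒳×𝒴 → [0,1] is continuous at Law(X,Y)-almost every point and B is a {0,1}-valued random variable with P(B = 1 | σ(X,Y)) = f(X,Y) a.s. Then the conditional law η_{XYB} := Law(X,Y,B | X), viewed as a σ(X)-measurable random element of 𝒫(𝒳×𝒴×{0,1}), depends continuously on X: there exists φ : 𝒳 → 𝒫(𝒳×𝒴×{0,1}), continuous at Law(X)-almost every point, with φ(X) = η_{XYB} almost surely. -/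
open MeasureTheory ProbabilityTheory Filter

noncomputable section

open CoevolveNet MeasureTheory ProbabilityTheory Filter

section AuxEnvelope
open Filter Topology
open scoped ENNReal NNReal

lemma le_limsup_nhds_self {α : Type*} [TopologicalSpace α] (f : α → ℝ≥0∞) (p : α) :
    f p ≤ limsup f (𝓝 p) := by
  apply le_limsup_of_frequently_le'
  apply Filter.frequently_iff.2
  intro U hU
  exact ⟨p, mem_of_mem_nhds hU, le_rfl⟩

lemma upperSemicontinuous_limsup_nhds {α : Type*} [TopologicalSpace α] (f : α → ℝ≥0∞) :
    UpperSemicontinuous (fun p => limsup f (𝓝 p)) := by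
  intro p c hc
  obtain ⟨c', hc1', hc2'⟩ := exists_between hc
  have h1 : ∀ᶠ q in 𝓝 p, f q < c' := eventually_lt_of_limsup_lt hc1'
  obtain ⟨U, hUf, hUo, hpU⟩ := eventually_nhds_iff.1 h1
  have h2 : ∀ q ∈ U, limsup f (𝓝 q) ≤ c' := by
    intro q hq
    apply limsup_le_of_le (isCobounded_le_of_bot)
    filter_upwards [hUo.mem_nhds hq] with r hr using (hUf r hr).le
  filter_upwards [hUo.mem_nhds hpU] with q hq using lt_of_le_of_lt (h2 q hq) hc2'

lemma continuousAt_limsup_nhds {α : Type*} [TopologicalSpace α] {f : α → ℝ≥0∞} {p : α}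
    (hf : ContinuousAt f p) : ContinuousAt (fun p => limsup f (𝓝 p)) p := by
  have hgp : limsup f (𝓝 p) = f p := hf.limsup_eq
  refine tendsto_of_le_liminf_of_limsup_le ?_ ?_ isBounded_le_of_top isBounded_ge_of_bot
  · show limsup f (𝓝 p) ≤ liminf (fun q => limsup f (𝓝 q)) (𝓝 p)
    rw [hgp]
    calc f p = liminf f (𝓝 p) := hf.liminf_eq.symm
    _ ≤ liminf (fun q => limsup f (𝓝 q)) (𝓝 p) :=
        liminf_le_liminf (Eventually.of_forall fun q => le_limsup_nhds_self f q)
  · show limsup (fun q => limsup f (𝓝 q)) (𝓝 p) ≤ limsup f (𝓝 p)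
    apply le_of_forall_gt_imp_ge_of_dense
    intro c hc
    apply limsup_le_of_le (isCobounded_le_of_bot)
    filter_upwards [upperSemicontinuous_limsup_nhds f p c hc] with q hq using hq.le

end AuxEnvelope

section AuxKer
open MeasureTheory Filter Topology BoundedContinuousFunction
open scoped ENNReal NNReal

variable {𝒳 𝒴 : Type*} [MeasurableSpace 𝒳] [MeasurableSpace 𝒴]

/-- Bernoulli-type kernel used to build the conditional law. -/
noncomputable def bKer (g : 𝒳 × 𝒴 → ℝ≥0∞) (p : 𝒳 × 𝒴) : Measure (𝒳 × 𝒴 × Bool) :=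
  g p • Measure.dirac (p.1, p.2, true) + (1 - g p) • Measure.dirac (p.1, p.2, false)

lemma bKer_apply (g : 𝒳 × 𝒴 → ℝ≥0∞) (p : 𝒳 × 𝒴) {s : Set (𝒳 × 𝒴 × Bool)}
    (hs : MeasurableSet s) :
    bKer g p s = g p * s.indicator 1 (p.1, p.2, true)
      + (1 - g p) * s.indicator 1 (p.1, p.2, false) := by
  simp [bKer, Measure.dirac_apply' _ hs]

lemma measurable_bKer {g : 𝒳 × 𝒴 → ℝ≥0∞} (hg : Measurable g) :
    Measurable (bKer g) := by
  apply Measure.measurable_of_measurable_coe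
  intro s hs
  simp_rw [fun p => bKer_apply g p hs]
  have h1 : Measurable fun p : 𝒳 × 𝒴 => (p.1, p.2, true) :=
    measurable_fst.prodMk (measurable_snd.prodMk measurable_const)
  have h2 : Measurable fun p : 𝒳 × 𝒴 => (p.1, p.2, false) :=
    measurable_fst.prodMk (measurable_snd.prodMk measurable_const)
  exact (hg.mul ((measurable_one.indicator hs).comp h1)).add
    ((measurable_const.sub hg).mul ((measurable_one.indicator hs).comp h2))

lemma lintegral_bKer {g : 𝒳 × 𝒴 → ℝ≥0∞} (p : 𝒳 × 𝒴) {G : 𝒳 × 𝒴 × Bool → ℝ≥0∞}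
    (hG : Measurable G) :
    ∫⁻ z, G z ∂(bKer g p) = g p * G (p.1, p.2, true) + (1 - g p) * G (p.1, p.2, false) := by
  simp [bKer, lintegral_add_measure, lintegral_smul_measure, lintegral_dirac' _ hG]

lemma bKer_univ {g : 𝒳 × 𝒴 → ℝ≥0∞} (hg1 : ∀ p, g p ≤ 1) (p : 𝒳 × 𝒴) :
    bKer g p Set.univ = 1 := by
  simp [bKer, add_tsub_cancel_of_le (hg1 p)]

/-- The candidate continuous version of the conditional law. -/
noncomputable def phiM (ν : Measure 𝒴) (g : 𝒳 × 𝒴 → ℝ≥0∞) (x : 𝒳) :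
    Measure (𝒳 × 𝒴 × Bool) :=
  ν.bind (fun y => bKer g (x, y))

lemma phiM_apply (ν : Measure 𝒴) {g : 𝒳 × 𝒴 → ℝ≥0∞} (hg : Measurable g) (x : 𝒳)
    {s : Set (𝒳 × 𝒴 × Bool)} (hs : MeasurableSet s) :
    phiM ν g x s = ∫⁻ y, bKer g (x, y) s ∂ν := by
  have hk : Measurable fun y => bKer g (x, y) := (measurable_bKer hg).comp measurable_prodMk_left
  rw [phiM, Measure.bind_apply hs hk.aemeasurable]

lemma lintegral_phiM (ν : Measure 𝒴) {g : 𝒳 × 𝒴 → ℝ≥0∞} (hg : Measurable g) (x : 𝒳)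
    {G : 𝒳 × 𝒴 × Bool → ℝ≥0∞} (hG : Measurable G) :
    ∫⁻ z, G z ∂(phiM ν g x)
      = ∫⁻ y, (g (x, y) * G (x, y, true) + (1 - g (x, y)) * G (x, y, false)) ∂ν := by
  have hk : Measurable fun y => bKer g (x, y) := (measurable_bKer hg).comp measurable_prodMk_left
  rw [phiM, Measure.lintegral_bind hk.aemeasurable hG.aemeasurable]
  exact lintegral_congr fun y => lintegral_bKer (x, y) hG

lemma isProbabilityMeasure_phiM (ν : Measure 𝒴) [IsProbabilityMeasure ν]
    {g : 𝒳 × 𝒴 → ℝ≥0∞} (hg : Measurable g) (hg1 : ∀ p, g p ≤ 1) (x : 𝒳) :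
    IsProbabilityMeasure (phiM ν g x) := by
  constructor
  rw [phiM_apply ν hg x MeasurableSet.univ]
  simp [fun p => bKer_univ hg1 p]

lemma bcf_le_nndist {Ω : Type*} [TopologicalSpace Ω] (G : Ω →ᵇ ℝ≥0) (x : Ω) :
    (G x : ℝ≥0∞) ≤ nndist G 0 := by
  have h := BoundedContinuousFunction.nndist_coe_le_nndist (f := G) (g := 0) x
  have h2 : G x ≤ nndist G 0 := by simpa [NNReal.nndist_zero_eq_val] using h
  exact_mod_cast h2

variable [TopologicalSpace 𝒳] [OpensMeasurableSpace 𝒳] [TopologicalSpace 𝒴]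
  [OpensMeasurableSpace 𝒴] [SecondCountableTopology 𝒳] [SecondCountableTopology 𝒴]

lemma tendsto_lintegral_phiM (ν : Measure 𝒴) [IsProbabilityMeasure ν]
    {g : 𝒳 × 𝒴 → ℝ≥0∞} (hg : Measurable g) (hg1 : ∀ p, g p ≤ 1) {x : 𝒳}
    (hx : ∀ᵐ y ∂ν, ContinuousAt g (x, y)) {u : ℕ → 𝒳} (hu : Tendsto u atTop (𝓝 x))
    (G : BoundedContinuousFunction (𝒳 × 𝒴 × Bool) ℝ≥0) :
    Tendsto (fun n => ∫⁻ z, G z ∂(phiM ν g (u n))) atTop (𝓝 (∫⁻ z, G z ∂(phiM ν g x))) := by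
  have hGm : Measurable fun z : 𝒳 × 𝒴 × Bool => (G z : ℝ≥0∞) :=
    measurable_coe_nnreal_ennreal.comp G.continuous.measurable
  have key : ∀ x' : 𝒳, ∫⁻ z, G z ∂(phiM ν g x')
      = ∫⁻ y, (g (x', y) * G (x', y, true) + (1 - g (x', y)) * G (x', y, false)) ∂ν :=
    fun x' => lintegral_phiM ν hg x' hGm
  simp_rw [key]
  apply tendsto_lintegral_of_dominated_convergence (fun _ => (nndist G 0 : ℝ≥0∞) + nndist G 0)
  · intro n
    have hgy : Measurable fun y => g (u n, y) := hg.comp measurable_prodMk_left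
    have hct : Continuous fun y : 𝒴 => (G (u n, y, true) : ℝ≥0∞) :=
      (ENNReal.continuous_coe.comp G.continuous).comp
        (continuous_const.prodMk (continuous_id.prodMk continuous_const))
    have hcf : Continuous fun y : 𝒴 => (G (u n, y, false) : ℝ≥0∞) :=
      (ENNReal.continuous_coe.comp G.continuous).comp
        (continuous_const.prodMk (continuous_id.prodMk continuous_const))
    exact (hgy.mul hct.measurable).add ((measurable_const.sub hgy).mul hcf.measurable)
  · intro n
    filter_upwards with y
    have h1 : g (u n, y) * (G (u n, y, true) : ℝ≥0∞) ≤ nndist G 0 :=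
      le_trans (mul_le_mul' (hg1 _) (bcf_le_nndist G _)) (by simp)
    have h2 : (1 - g (u n, y)) * (G (u n, y, false) : ℝ≥0∞) ≤ nndist G 0 :=
      le_trans (mul_le_mul' tsub_le_self (bcf_le_nndist G _)) (by simp)
    exact add_le_add h1 h2
  · simp [lintegral_const, edist_ne_top]
  · filter_upwards [hx] with y hy
    have hxy : Tendsto (fun n => ((u n, y) : 𝒳 × 𝒴)) atTop (𝓝 (x, y)) :=
      hu.prodMk_nhds tendsto_const_nhds
    have hgt : Tendsto (fun n => g (u n, y)) atTop (𝓝 (g (x, y))) := hy.tendsto.comp hxy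
    have hgne : g (x, y) ≠ ∞ := ((hg1 (x, y)).trans_lt ENNReal.one_lt_top).ne
    have hGt : Tendsto (fun n => (G (u n, y, true) : ℝ≥0∞)) atTop (𝓝 (G (x, y, true))) :=
      ((ENNReal.continuous_coe.comp G.continuous).tendsto (x, y, true)).comp
        (hu.prodMk_nhds tendsto_const_nhds)
    have hGf : Tendsto (fun n => (G (u n, y, false) : ℝ≥0∞)) atTop (𝓝 (G (x, y, false))) :=
      ((ENNReal.continuous_coe.comp G.continuous).tendsto (x, y, false)).comp
        (hu.prodMk_nhds tendsto_const_nhds)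
    have h1 : Tendsto (fun n => g (u n, y) * (G (u n, y, true) : ℝ≥0∞)) atTop
        (𝓝 (g (x, y) * G (x, y, true))) :=
      ENNReal.Tendsto.mul hgt (Or.inr ENNReal.coe_ne_top) hGt (Or.inr hgne)
    have hsub : Tendsto (fun n => 1 - g (u n, y)) atTop (𝓝 (1 - g (x, y))) :=
      ENNReal.Tendsto.sub tendsto_const_nhds hgt (Or.inl ENNReal.one_ne_top)
    have h2 : Tendsto (fun n => (1 - g (u n, y)) * (G (u n, y, false) : ℝ≥0∞)) atTop
        (𝓝 ((1 - g (x, y)) * G (x, y, false))) :=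
      ENNReal.Tendsto.mul hsub (Or.inr ENNReal.coe_ne_top) hGf
        (Or.inr (ne_top_of_le_ne_top ENNReal.one_ne_top tsub_le_self))
    exact h1.add h2

end AuxKer
open scoped ENNReal NNReal Topology

/-- **Continuous dependence of the conditional law** (Lemma A.1(a)).  If `X` and `Y`
are independent, `f` is continuous at `Law(X,Y)`-a.e. point with values in `[0,1]`,
and `B` is a Bernoulli variable with `P(B = 1 | σ(X,Y)) = f(X,Y)` a.s., then any
version `η` of the conditional law `Law(X,Y,B | X)` depends continuously on `X`. -/
theorem condLaw_depContinuously
    {Ω 𝒳 𝒴 : Type*} [MeasurableSpace Ω]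
    [TopologicalSpace 𝒳] [PolishSpace 𝒳] [MeasurableSpace 𝒳] [BorelSpace 𝒳]
    [TopologicalSpace 𝒴] [PolishSpace 𝒴] [MeasurableSpace 𝒴] [BorelSpace 𝒴]
    (P : Measure Ω) [IsProbabilityMeasure P]
    (X : Ω → 𝒳) (Y : Ω → 𝒴) (B : Ω → Bool)
    (hX : Measurable X) (hY : Measurable Y) (hB : Measurable B)
    (hindep : IndepFun X Y P)
    (f : 𝒳 × 𝒴 → ℝ) (hf01 : ∀ p, f p ∈ Set.Icc (0 : ℝ) 1)
    (hfcont : AEContinuous (P.map fun ω => (X ω, Y ω)) f)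
    (hfB : P[(fun ω => if B ω then (1 : ℝ) else 0) |
        MeasurableSpace.comap (fun ω => (X ω, Y ω)) inferInstance]
      =ᵐ[P] fun ω => f (X ω, Y ω))
    (η : Ω → ProbabilityMeasure (𝒳 × 𝒴 × Bool))
    (hη : IsCondLaw P X (fun ω => (X ω, Y ω, B ω)) η) :
    DepContinuously P X η := by  classical
  have hZ : Measurable fun ω => (X ω, Y ω) := hX.prodMk hY
  have hW : Measurable fun ω => (X ω, Y ω, B ω) := hX.prodMk (hY.prodMk hB)
  set μ : Measure 𝒳 := P.map X with hμdef
  set ν : Measure 𝒴 := P.map Y with hνdef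
  haveI hμp : IsProbabilityMeasure μ := Measure.isProbabilityMeasure_map hX.aemeasurable
  haveI hνp : IsProbabilityMeasure ν := Measure.isProbabilityMeasure_map hY.aemeasurable
  have hlawZ : P.map (fun ω => (X ω, Y ω)) = μ.prod ν :=
    (ProbabilityTheory.indepFun_iff_map_prod_eq_prod_map_map hX.aemeasurable
      hY.aemeasurable).mp hindep
  set D : Set (𝒳 × 𝒴) := {p | ContinuousAt f p} with hDdef
  have hD : MeasurableSet D := measurableSet_of_continuousAt f
  have hDc : (μ.prod ν) Dᶜ = 0 := by
    rw [← hlawZ]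
    have h := ae_iff.mp (hfcont : ∀ᵐ p ∂(P.map fun ω => (X ω, Y ω)), ContinuousAt f p)
    simpa [hDdef, Set.compl_setOf] using h
  set g : 𝒳 × 𝒴 → ℝ≥0∞ := fun p => Filter.limsup (fun q => ENNReal.ofReal (f q)) (nhds p)
    with hgdef
  have hg : Measurable g := (upperSemicontinuous_limsup_nhds _).measurable
  have hg1 : ∀ p, g p ≤ 1 := fun p =>
    Filter.limsup_le_of_le Filter.isCobounded_le_of_bot
      (Filter.Eventually.of_forall fun q => ENNReal.ofReal_le_one.mpr (hf01 q).2)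
  have hgne_top : ∀ p, g p ≠ ∞ := fun p => ((hg1 p).trans_lt ENNReal.one_lt_top).ne
  have hgD : ∀ p ∈ D, g p = ENNReal.ofReal (f p) := fun p hp =>
    (ENNReal.continuous_ofReal.continuousAt.comp hp).limsup_eq
  have hgDR : ∀ p ∈ D, (g p).toReal = f p := fun p hp => by
    rw [hgD p hp, ENNReal.toReal_ofReal (hf01 p).1]
  have hgcont : ∀ p ∈ D, ContinuousAt g p := fun p hp =>
    continuousAt_limsup_nhds (ENNReal.continuous_ofReal.continuousAt.comp hp)
  haveI hφp : ∀ x, IsProbabilityMeasure (phiM ν g x) :=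
    isProbabilityMeasure_phiM ν hg hg1
  set φ : 𝒳 → ProbabilityMeasure (𝒳 × 𝒴 × Bool) := fun x => ⟨phiM ν g x, hφp x⟩ with hφdef
  refine ⟨φ, ?_, ?_⟩
  · -- a.e. continuity
    have hae : ∀ᵐ x ∂μ, ∀ᵐ y ∂ν, (x, y) ∈ D := by
      apply Measure.ae_ae_of_ae_prod
      rw [ae_iff]
      apply measure_mono_null _ hDc
      intro p hp
      simpa using hp
    filter_upwards [hae] with x hx
    have hx' : ∀ᵐ y ∂ν, ContinuousAt g (x, y) := by
      filter_upwards [hx] with y hy using hgcont _ hy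
    rw [ContinuousAt]
    apply Filter.tendsto_iff_seq_tendsto.mpr
    intro u hu
    apply MeasureTheory.ProbabilityMeasure.tendsto_iff_forall_lintegral_tendsto.mpr
    intro G
    exact tendsto_lintegral_phiM ν hg hg1 hx' hu G
  · -- a.e. equality with η
    have hZDc : P ((fun ω => (X ω, Y ω)) ⁻¹' Dᶜ) = 0 := by
      rw [← Measure.map_apply hZ hD.compl, hlawZ]
      exact hDc
    have hfg : (fun ω => f (X ω, Y ω)) =ᵐ[P] fun ω => (g (X ω, Y ω)).toReal := by
      rw [Filter.EventuallyEq, ae_iff]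
      apply measure_mono_null _ hZDc
      intro ω hω
      simp only [Set.mem_setOf_eq] at hω
      simp only [Set.mem_preimage, Set.mem_compl_iff]
      exact fun hmem => hω ((hgDR _ hmem).symm)
    set χ : Ω → ℝ := fun ω => if B ω then (1 : ℝ) else 0 with hχdef
    have hBt : MeasurableSet (B ⁻¹' {true}) := hB (measurableSet_singleton true)
    have hχeq : χ = Set.indicator (B ⁻¹' {true}) (fun _ => (1 : ℝ)) := by
      funext ω
      by_cases h : B ω <;> simp [hχdef, h, Set.indicator]
    have hχint : Integrable χ P := by
      rw [hχeq]
      exact (integrable_const (1 : ℝ)).indicator hBt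
    -- the key identity for the `true` part
    have hdag : ∀ C : Set (𝒳 × 𝒴), MeasurableSet C →
        P ((fun ω => (X ω, Y ω)) ⁻¹' C ∩ B ⁻¹' {true}) = ∫⁻ p in C, g p ∂(μ.prod ν) := by
      intro C hC
      have hZC : MeasurableSet[MeasurableSpace.comap (fun ω => (X ω, Y ω)) inferInstance]
          ((fun ω => (X ω, Y ω)) ⁻¹' C) := ⟨C, hC, rfl⟩
      have hZCm : MeasurableSet ((fun ω => (X ω, Y ω)) ⁻¹' C) := hZ hC
      have h1 : ∫ ω in (fun ω => (X ω, Y ω)) ⁻¹' C, χ ω ∂P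
          = (P ((fun ω => (X ω, Y ω)) ⁻¹' C ∩ B ⁻¹' {true})).toReal := by
        rw [hχeq, integral_indicator hBt, setIntegral_const, smul_eq_mul, mul_one,
          measureReal_restrict_apply hBt, Set.inter_comm, measureReal_def]
      have h2 : ∫ ω in (fun ω => (X ω, Y ω)) ⁻¹' C, χ ω ∂P
          = ∫ ω in (fun ω => (X ω, Y ω)) ⁻¹' C, (g (X ω, Y ω)).toReal ∂P := by
        calc ∫ ω in (fun ω => (X ω, Y ω)) ⁻¹' C, χ ω ∂P
            = ∫ ω in (fun ω => (X ω, Y ω)) ⁻¹' C,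
                (P[χ | MeasurableSpace.comap (fun ω => (X ω, Y ω)) inferInstance]) ω ∂P :=
              (setIntegral_condExp hZ.comap_le hχint hZC).symm
          _ = ∫ ω in (fun ω => (X ω, Y ω)) ⁻¹' C, f (X ω, Y ω) ∂P :=
              setIntegral_congr_ae hZCm (hfB.mono fun ω h _ => h)
          _ = ∫ ω in (fun ω => (X ω, Y ω)) ⁻¹' C, (g (X ω, Y ω)).toReal ∂P :=
              setIntegral_congr_ae hZCm (hfg.mono fun ω h _ => h)
      have h3 : ∫ ω in (fun ω => (X ω, Y ω)) ⁻¹' C, (g (X ω, Y ω)).toReal ∂P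
          = ∫ p in C, (g p).toReal ∂(μ.prod ν) := by
        rw [← hlawZ, setIntegral_map hC hg.ennreal_toReal.aestronglyMeasurable hZ.aemeasurable]
      have h4 : ∫ p in C, (g p).toReal ∂(μ.prod ν)
          = (∫⁻ p in C, g p ∂(μ.prod ν)).toReal :=
        integral_toReal hg.aemeasurable.restrict
          (Filter.Eventually.of_forall fun p => (hg1 p).trans_lt ENNReal.one_lt_top)
      have hfin1 : P ((fun ω => (X ω, Y ω)) ⁻¹' C ∩ B ⁻¹' {true}) ≠ ∞ := measure_ne_top P _
      have hfin2 : ∫⁻ p in C, g p ∂(μ.prod ν) ≠ ∞ := by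
        refine ((lintegral_mono hg1).trans_lt ?_).ne
        simp only [lintegral_const, one_mul]
        exact (measure_lt_top _ _).trans_le le_top
      have := h1.symm.trans (h2.trans (h3.trans h4))
      exact (ENNReal.toReal_eq_toReal_iff' hfin1 hfin2).mp this
    -- the key identity for the `false` part
    have hdagf : ∀ C : Set (𝒳 × 𝒴), MeasurableSet C →
        P ((fun ω => (X ω, Y ω)) ⁻¹' C ∩ B ⁻¹' {false})
          = ∫⁻ p in C, (1 - g p) ∂(μ.prod ν) := by
      intro C hC
      have hZCm : MeasurableSet ((fun ω => (X ω, Y ω)) ⁻¹' C) := hZ hC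
      have hBf : MeasurableSet (B ⁻¹' {false}) := hB (measurableSet_singleton false)
      have hfin2 : ∫⁻ p in C, g p ∂(μ.prod ν) ≠ ∞ := by
        refine ((lintegral_mono hg1).trans_lt ?_).ne
        simp only [lintegral_const, one_mul]
        exact (measure_lt_top _ _).trans_le le_top
      have hCap : (μ.prod ν) C = P ((fun ω => (X ω, Y ω)) ⁻¹' C) := by
        rw [← hlawZ, Measure.map_apply hZ hC]
      have hsplit : (fun ω => (X ω, Y ω)) ⁻¹' C
          = ((fun ω => (X ω, Y ω)) ⁻¹' C ∩ B ⁻¹' {true})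
            ∪ ((fun ω => (X ω, Y ω)) ⁻¹' C ∩ B ⁻¹' {false}) := by
        ext ω
        cases hb : B ω <;> simp [hb]
      have hdisj : Disjoint ((fun ω => (X ω, Y ω)) ⁻¹' C ∩ B ⁻¹' {true})
          ((fun ω => (X ω, Y ω)) ⁻¹' C ∩ B ⁻¹' {false}) := by
        rw [Set.disjoint_left]
        rintro ω ⟨-, h1⟩ ⟨-, h2⟩
        simp only [Set.mem_preimage, Set.mem_singleton_iff] at h1 h2
        rw [h1] at h2
        exact Bool.noConfusion h2
      have hPC : P ((fun ω => (X ω, Y ω)) ⁻¹' C)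
          = P ((fun ω => (X ω, Y ω)) ⁻¹' C ∩ B ⁻¹' {true})
            + P ((fun ω => (X ω, Y ω)) ⁻¹' C ∩ B ⁻¹' {false}) := by
        conv_lhs => rw [hsplit]
        exact measure_union hdisj (hZCm.inter hBf)
      have hsubint : ∫⁻ p in C, (1 - g p) ∂(μ.prod ν)
          = (μ.prod ν) C - ∫⁻ p in C, g p ∂(μ.prod ν) := by
        have := lintegral_sub hg hfin2
          (Filter.Eventually.of_forall hg1 : g ≤ᵐ[(μ.prod ν).restrict C] fun _ => 1)
        simp only [lintegral_const, one_mul, Measure.restrict_apply_univ] at this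
        exact this
      rw [hsubint, hCap, hPC, hdag C hC]
      rw [ENNReal.add_sub_cancel_left]
      rw [← hdag C hC]
      exact measure_ne_top P _
    -- measurability of the candidate in x
    have hφsMeas : ∀ s : Set (𝒳 × 𝒴 × Bool), MeasurableSet s →
        Measurable fun x => phiM ν g x s := by
      intro s hs
      simp_rw [fun x => phiM_apply ν hg x hs]
      exact Measurable.lintegral_prod_right
        ((Measure.measurable_coe hs).comp (measurable_bKer hg))
    -- the compound identity
    have hkey : ∀ s : Set (𝒳 × 𝒴 × Bool), MeasurableSet s → ∀ A : Set 𝒳, MeasurableSet A →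
        P (X ⁻¹' A ∩ (fun ω => (X ω, Y ω, B ω)) ⁻¹' s) = ∫⁻ x in A, phiM ν g x s ∂μ := by
      intro s hs A hA
      have hmT : Measurable fun p : 𝒳 × 𝒴 => (p.1, p.2, true) :=
        measurable_fst.prodMk (measurable_snd.prodMk measurable_const)
      have hmF : Measurable fun p : 𝒳 × 𝒴 => (p.1, p.2, false) :=
        measurable_fst.prodMk (measurable_snd.prodMk measurable_const)
      set sT : Set (𝒳 × 𝒴) := (fun p : 𝒳 × 𝒴 => (p.1, p.2, true)) ⁻¹' s with hsTdef
      set sF : Set (𝒳 × 𝒴) := (fun p : 𝒳 × 𝒴 => (p.1, p.2, false)) ⁻¹' s with hsFdef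
      have hsT : MeasurableSet sT := hmT hs
      have hsF : MeasurableSet sF := hmF hs
      set CT : Set (𝒳 × 𝒴) := (A ×ˢ (Set.univ : Set 𝒴)) ∩ sT with hCTdef
      set CF : Set (𝒳 × 𝒴) := (A ×ˢ (Set.univ : Set 𝒴)) ∩ sF with hCFdef
      have hCT : MeasurableSet CT := (hA.prod MeasurableSet.univ).inter hsT
      have hCF : MeasurableSet CF := (hA.prod MeasurableSet.univ).inter hsF
      have hdecomp : X ⁻¹' A ∩ (fun ω => (X ω, Y ω, B ω)) ⁻¹' s
          = ((fun ω => (X ω, Y ω)) ⁻¹' CT ∩ B ⁻¹' {true})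
            ∪ ((fun ω => (X ω, Y ω)) ⁻¹' CF ∩ B ⁻¹' {false}) := by
        ext ω
        cases hb : B ω <;>
          simp [hb, hCTdef, hCFdef, hsTdef, hsFdef, and_comm, and_assoc, and_left_comm]
      have hdisj : Disjoint ((fun ω => (X ω, Y ω)) ⁻¹' CT ∩ B ⁻¹' {true})
          ((fun ω => (X ω, Y ω)) ⁻¹' CF ∩ B ⁻¹' {false}) := by
        rw [Set.disjoint_left]
        rintro ω ⟨-, h1⟩ ⟨-, h2⟩
        simp only [Set.mem_preimage, Set.mem_singleton_iff] at h1 h2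
        rw [h1] at h2
        exact Bool.noConfusion h2
      have hmeas2 : MeasurableSet ((fun ω => (X ω, Y ω)) ⁻¹' CF ∩ B ⁻¹' {false}) :=
        (hZ hCF).inter (hB (measurableSet_singleton false))
      rw [hdecomp, measure_union hdisj hmeas2, hdag CT hCT, hdagf CF hCF]
      -- now compute the right-hand side
      have hindmeas : Measurable fun p : 𝒳 × 𝒴 =>
          sT.indicator g p + sF.indicator (fun q => 1 - g q) p :=
        (hg.indicator hsT).add ((measurable_const.sub hg).indicator hsF)
      have hphieq : ∀ x, phiM ν g x s
          = ∫⁻ y, (sT.indicator g (x, y) + sF.indicator (fun q => 1 - g q) (x, y)) ∂ν := by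
        intro x
        rw [phiM_apply ν hg x hs]
        refine lintegral_congr fun y => ?_
        rw [bKer_apply g (x, y) hs]
        have hT' : ((x, y) ∈ sT) = (((x, y, true) : 𝒳 × 𝒴 × Bool) ∈ s) := rfl
        have hF' : ((x, y) ∈ sF) = (((x, y, false) : 𝒳 × 𝒴 × Bool) ∈ s) := rfl
        simp only [Set.indicator_apply, hT', hF']
        by_cases h1 : ((x, y, true) : 𝒳 × 𝒴 × Bool) ∈ s <;>
          by_cases h2 : ((x, y, false) : 𝒳 × 𝒴 × Bool) ∈ s <;> simp [h1, h2]
      symm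
      calc ∫⁻ x in A, phiM ν g x s ∂μ
          = ∫⁻ x in A, ∫⁻ y,
              (sT.indicator g (x, y) + sF.indicator (fun q => 1 - g q) (x, y)) ∂ν ∂μ := by
            exact lintegral_congr fun x => by rw [hphieq x]
        _ = ∫⁻ z in A ×ˢ (Set.univ : Set 𝒴),
              (sT.indicator g z + sF.indicator (fun q => 1 - g q) z) ∂(μ.prod ν) := by
            rw [← Measure.restrict_prod_eq_prod_univ,
              MeasureTheory.lintegral_prod _ hindmeas.aemeasurable]
        _ = ∫⁻ p in CT, g p ∂(μ.prod ν) + ∫⁻ p in CF, (1 - g p) ∂(μ.prod ν) := by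
            rw [lintegral_add_left (hg.indicator hsT), lintegral_indicator hsT,
              lintegral_indicator hsF, Measure.restrict_restrict hsT,
              Measure.restrict_restrict hsF, Set.inter_comm sT, Set.inter_comm sF]
    -- per-set a.e. identification of η with φ ∘ X
    have hseq : ∀ s : Set (𝒳 × 𝒴 × Bool), MeasurableSet s →
        ∀ᵐ ω ∂P, ((η ω : Measure (𝒳 × 𝒴 × Bool)) s) = phiM ν g (X ω) s := by
      intro s hs
      have hindrw : (fun ω => Set.indicator s (fun _ => (1 : ℝ)) (X ω, Y ω, B ω))
          = Set.indicator ((fun ω => (X ω, Y ω, B ω)) ⁻¹' s) (fun _ => (1 : ℝ)) := by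
        funext ω
        by_cases h : (X ω, Y ω, B ω) ∈ s <;> simp [h, Set.indicator_apply]
      have hind : Integrable (fun ω => Set.indicator s (fun _ => (1 : ℝ)) (X ω, Y ω, B ω)) P := by
        rw [hindrw]
        exact (integrable_const (1 : ℝ)).indicator (hW hs)
      have hF1m : Measurable fun x => (phiM ν g x s).toReal := (hφsMeas s hs).ennreal_toReal
      have hF1int : Integrable (fun ω => (phiM ν g (X ω) s).toReal) P := by
        refine Integrable.mono' (integrable_const (1 : ℝ))
          (hF1m.comp hX).aestronglyMeasurable ?_
        filter_upwards with ω
        rw [Real.norm_of_nonneg ENNReal.toReal_nonneg]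
        haveI := hφp (X ω)
        exact ENNReal.toReal_le_of_le_ofReal zero_le_one (by simpa using prob_le_one)
      have hcond : (fun ω => (phiM ν g (X ω) s).toReal)
          =ᵐ[P] P[(fun ω => Set.indicator s (fun _ => (1 : ℝ)) (X ω, Y ω, B ω)) |
            MeasurableSpace.comap X inferInstance] := by
        refine ae_eq_condExp_of_forall_setIntegral_eq hX.comap_le hind ?_ ?_ ?_
        · intro t ht _
          exact hF1int.integrableOn
        · rintro t ⟨A, hA, rfl⟩ -
          have e1 : ∫ ω in X ⁻¹' A, Set.indicator s (fun _ => (1 : ℝ)) (X ω, Y ω, B ω) ∂P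
              = (P (X ⁻¹' A ∩ (fun ω => (X ω, Y ω, B ω)) ⁻¹' s)).toReal := by
            rw [hindrw, integral_indicator (hW hs), setIntegral_const, smul_eq_mul, mul_one,
              measureReal_restrict_apply (hW hs), Set.inter_comm, measureReal_def]
          have e2 : ∫ ω in X ⁻¹' A, (phiM ν g (X ω) s).toReal ∂P
              = ∫ x in A, (phiM ν g x s).toReal ∂μ := by
            rw [hμdef, setIntegral_map hA hF1m.aestronglyMeasurable hX.aemeasurable]
          have e3 : ∫ x in A, (phiM ν g x s).toReal ∂μ
              = (∫⁻ x in A, phiM ν g x s ∂μ).toReal := by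
            refine integral_toReal (hφsMeas s hs).aemeasurable.restrict ?_
            filter_upwards with x
            haveI := hφp x
            exact measure_lt_top _ _
          rw [e1, e2, e3, hkey s hs A hA]
        · exact StronglyMeasurable.aestronglyMeasurable
            (Measurable.stronglyMeasurable
              (hF1m.comp (Measurable.of_comap_le le_rfl)))
      have hfinal : (fun ω => (phiM ν g (X ω) s).toReal)
          =ᵐ[P] fun ω => ((η ω : Measure (𝒳 × 𝒴 × Bool)) s).toReal :=
        hcond.trans (hη.2 s hs)
      filter_upwards [hfinal] with ω hω
      haveI := hφp (X ω)
      exact ((ENNReal.toReal_eq_toReal_iff' (measure_ne_top _ s) (measure_ne_top _ s)).mp hω.symm)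
    -- countable π-system argument
    haveI : MeasurableSpace.CountablyGenerated (𝒳 × 𝒴 × Bool) := inferInstance
    set 𝒮 : Set (Set (𝒳 × 𝒴 × Bool)) := Set.sInter ''
      {T : Set (Set (𝒳 × 𝒴 × Bool)) | T.Finite ∧
        T ⊆ MeasurableSpace.countableGeneratingSet (𝒳 × 𝒴 × Bool)} with h𝒮def
    have h𝒮count : 𝒮.Countable :=
      (Set.countable_setOf_finite_subset
        MeasurableSpace.countable_countableGeneratingSet).image _
    have h𝒮meas : ∀ s ∈ 𝒮, MeasurableSet s := by
      rintro s ⟨T, ⟨hTfin, hTsub⟩, rfl⟩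
      exact MeasurableSet.sInter hTfin.countable fun t ht =>
        MeasurableSpace.measurableSet_countableGeneratingSet (hTsub ht)
    have h𝒮pi : IsPiSystem 𝒮 := by
      rintro s ⟨Ts, ⟨hTsfin, hTssub⟩, rfl⟩ t ⟨Tt, ⟨hTtfin, hTtsub⟩, rfl⟩ -
      exact ⟨Ts ∪ Tt, ⟨hTsfin.union hTtfin, Set.union_subset hTssub hTtsub⟩,
        Set.sInter_union Ts Tt⟩
    have h𝒮gen : MeasurableSpace.generateFrom 𝒮
        = (inferInstance : MeasurableSpace (𝒳 × 𝒴 × Bool)) := by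
      apply le_antisymm
      · exact MeasurableSpace.generateFrom_le h𝒮meas
      · rw [← MeasurableSpace.generateFrom_countableGeneratingSet (α := 𝒳 × 𝒴 × Bool)]
        apply MeasurableSpace.generateFrom_mono
        intro u hu
        exact ⟨{u}, ⟨Set.finite_singleton u, Set.singleton_subset_iff.mpr hu⟩,
          Set.sInter_singleton u⟩
    have hall : ∀ᵐ ω ∂P, ∀ s ∈ 𝒮, ((η ω : Measure (𝒳 × 𝒴 × Bool)) s) = phiM ν g (X ω) s :=
      (ae_ball_iff h𝒮count).mpr fun s hsS => hseq s (h𝒮meas s hsS)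
    filter_upwards [hall] with ω hω
    apply Subtype.ext
    show (phiM ν g (X ω) : Measure (𝒳 × 𝒴 × Bool)) = (η ω : Measure (𝒳 × 𝒴 × Bool))
    haveI := hφp (X ω)
    refine MeasureTheory.ext_of_generate_finite 𝒮 h𝒮gen.symm h𝒮pi
      (fun s hsS => (hω s hsS).symm) ?_
    simp [measure_univ]
end
end

section
/- Continuous dependence of conditional expectations (Lemma A.1(c) / lem::condmapcont(c)): Let X and Y be independent random elements of Polish spaces 𝒳 and 𝒴 respectively. Suppose f : 𝒳×𝒴 → [0,1] is continuous at Law(X,Y)-almost every point and B is a {0,1}-valued random variable with P(B = 1 | σ(X,Y)) = f(X,Y) a.s. Let g : 𝒳×𝒴×{0,1} → ℝ be continuous, and suppose there exists h : 𝒴 → [0,∞) with sup_{x∈𝒳, b∈{0,1}} |g(x,Y,b)| ≤ h(Y) a.s. and E[h(Y)] < ∞. Then E[g(X,Y,B) | X] depends continuously on X: there exists ψ : 𝒳 → ℝ, continuous at Law(X)-almost every point, with ψ(X) = E[g(X,Y,B) | X] almost surely. -/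
open MeasureTheory ProbabilityTheory Filter

noncomputable section

open CoevolveNet MeasureTheory ProbabilityTheory Filter

namespace CondExpAux

variable {α : Type*} [TopologicalSpace α]

/-- Upper limsup envelope of a function. -/
noncomputable def env (f : α → ℝ) (p : α) : ℝ := Filter.limsup f (nhds p)

variable {f : α → ℝ} (h0 : ∀ q, 0 ≤ f q) (h1 : ∀ q, f q ≤ 1)

include h1 in
lemma env_bddUnder (p : α) : IsBoundedUnder (· ≤ ·) (nhds p) f :=
  isBoundedUnder_of ⟨1, h1⟩

include h0 in
lemma env_cobdd (p : α) : IsCoboundedUnder (· ≤ ·) (nhds p) f :=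
  isCoboundedUnder_le_of_le (nhds p) h0

include h0 h1 in
lemma env_mem (p : α) : env f p ∈ Set.Icc (0:ℝ) 1 := by
  constructor
  · exact le_limsup_of_frequently_le (Frequently.of_forall h0) (env_bddUnder h1 p)
  · exact limsup_le_of_le (env_cobdd h0 p) (Eventually.of_forall h1)

include h0 h1 in
lemma env_measurable [MeasurableSpace α] [OpensMeasurableSpace α] : Measurable (env f) := by
  apply measurable_of_Iio
  intro c
  have : IsOpen (env f ⁻¹' Set.Iio c) := by
    rw [isOpen_iff_forall_mem_open]
    intro p hp
    obtain ⟨c', hc1, hc2⟩ := exists_between (show env f p < c from hp)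
    have hev : ∀ᶠ q in nhds p, f q < c' :=
      eventually_lt_of_limsup_lt hc1 (env_bddUnder h1 p)
    obtain ⟨U, hUsub, hUopen, hpU⟩ := eventually_nhds_iff.mp hev
    refine ⟨U, fun p' hp' => ?_, hUopen, hpU⟩
    have : env f p' ≤ c' := by
      refine limsup_le_of_le (env_cobdd h0 p') ?_
      filter_upwards [hUopen.mem_nhds hp'] with q hq using (hUsub q hq).le
    exact lt_of_le_of_lt this hc2
  exact this.measurableSet

lemma env_eq_of_continuousAt {p : α} (hc : ContinuousAt f p) : env f p = f p :=
  hc.limsup_eq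

include h0 h1 in
lemma env_continuousAt {p : α} (hc : ContinuousAt f p) : ContinuousAt (env f) p := by
  rw [ContinuousAt, env_eq_of_continuousAt hc]
  apply tendsto_order.2
  constructor
  · intro a ha
    obtain ⟨c', hc1, hc2⟩ := exists_between ha
    have hev : ∀ᶠ q in nhds p, c' < f q := hc (Ioi_mem_nhds hc2)
    obtain ⟨U, hUsub, hUopen, hpU⟩ := eventually_nhds_iff.mp hev
    filter_upwards [hUopen.mem_nhds hpU] with p' hp'
    have : c' ≤ env f p' := by
      refine le_limsup_of_frequently_le ?_ (env_bddUnder h1 p')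
      apply Eventually.frequently
      filter_upwards [hUopen.mem_nhds hp'] with q hq using (hUsub q hq).le
    exact lt_of_lt_of_le hc1 this
  · intro b hb
    obtain ⟨c', hc1, hc2⟩ := exists_between hb
    have hev : ∀ᶠ q in nhds p, f q < c' := hc (Iio_mem_nhds hc1)
    obtain ⟨U, hUsub, hUopen, hpU⟩ := eventually_nhds_iff.mp hev
    filter_upwards [hUopen.mem_nhds hpU] with p' hp'
    have : env f p' ≤ c' := by
      refine limsup_le_of_le (env_cobdd h0 p') ?_
      filter_upwards [hUopen.mem_nhds hp'] with q hq using (hUsub q hq).le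
    exact lt_of_le_of_lt this hc2

lemma abs_combo_le {a b c F : ℝ} (ha : |a| ≤ c) (hb : |b| ≤ c)
    (hF0 : 0 ≤ F) (hF1 : F ≤ 1) : |a * F + b * (1 - F)| ≤ c := by
  have h1 := abs_add_le (a * F) (b * (1 - F))
  have h2 : |a * F| = |a| * F := by rw [abs_mul, abs_of_nonneg hF0]
  have h3 : |b * (1 - F)| = |b| * (1 - F) := by
    rw [abs_mul, abs_of_nonneg (by linarith : (0:ℝ) ≤ 1 - F)]
  nlinarith [abs_nonneg a, abs_nonneg b]

end CondExpAux

open CondExpAux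

set_option maxHeartbeats 1000000

/-- **Continuous dependence of conditional expectations** (Lemma A.1(c)).  If `X` and
`Y` are independent, `f` is continuous at `Law(X,Y)`-a.e. point with values in
`[0,1]`, `B` is Bernoulli with `P(B = 1 | σ(X,Y)) = f(X,Y)` a.s., and
`g : 𝒳×𝒴×{0,1} → ℝ` is continuous and dominated by an integrable `h(Y)`, then
`E[g(X,Y,B) | X]` depends continuously on `X`. -/
theorem condExp_depContinuously
    {Ω 𝒳 𝒴 : Type*} [MeasurableSpace Ω]
    [TopologicalSpace 𝒳] [PolishSpace 𝒳] [MeasurableSpace 𝒳] [BorelSpace 𝒳]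
    [TopologicalSpace 𝒴] [PolishSpace 𝒴] [MeasurableSpace 𝒴] [BorelSpace 𝒴]
    (P : Measure Ω) [IsProbabilityMeasure P]
    (X : Ω → 𝒳) (Y : Ω → 𝒴) (B : Ω → Bool)
    (hX : Measurable X) (hY : Measurable Y) (hB : Measurable B)
    (hindep : IndepFun X Y P)
    (f : 𝒳 × 𝒴 → ℝ) (hf01 : ∀ p, f p ∈ Set.Icc (0 : ℝ) 1)
    (hfcont : AEContinuous (P.map fun ω => (X ω, Y ω)) f)
    (hfB : P[(fun ω => if B ω then (1 : ℝ) else 0) |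
        MeasurableSpace.comap (fun ω => (X ω, Y ω)) inferInstance]
      =ᵐ[P] fun ω => f (X ω, Y ω))
    (g : 𝒳 × 𝒴 × Bool → ℝ) (hg : Continuous g)
    (h : 𝒴 → ℝ) (hh0 : ∀ y, 0 ≤ h y) (hhm : Measurable h)
    (hdom : ∀ᵐ ω ∂P, ∀ (x : 𝒳) (b : Bool), |g (x, Y ω, b)| ≤ h (Y ω))
    (hint : Integrable (fun ω => h (Y ω)) P) :
    DepContinuously P X
      (P[(fun ω => g (X ω, Y ω, B ω)) | MeasurableSpace.comap X inferInstance]) := by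
    classical
  have hf0 : ∀ p, 0 ≤ f p := fun p => (hf01 p).1
  have hf1 : ∀ p, f p ≤ 1 := fun p => (hf01 p).2
  set μ : Measure 𝒳 := P.map X with hμ
  set ν : Measure 𝒴 := P.map Y with hν
  haveI : IsProbabilityMeasure μ := Measure.isProbabilityMeasure_map hX.aemeasurable
  haveI : IsProbabilityMeasure ν := Measure.isProbabilityMeasure_map hY.aemeasurable
  have hXY : Measurable (fun ω => (X ω, Y ω)) := hX.prodMk hY
  have hmapXY : P.map (fun ω => (X ω, Y ω)) = μ.prod ν :=
    (indepFun_iff_map_prod_eq_prod_map_map hX.aemeasurable hY.aemeasurable).mp hindep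
  -- the measurable envelope of f
  set F : 𝒳 × 𝒴 → ℝ := env f with hFdef
  have hF0 : ∀ p, 0 ≤ F p := fun p => (env_mem hf0 hf1 p).1
  have hF1 : ∀ p, F p ≤ 1 := fun p => (env_mem hf0 hf1 p).2
  have hFmeas : Measurable F := env_measurable hf0 hf1
  -- measurability of the slices of g
  have hgb : ∀ b : Bool, Measurable fun p : 𝒳 × 𝒴 => g (p.1, p.2, b) := by
    intro b
    exact (hg.comp (continuous_fst.prodMk (continuous_snd.prodMk continuous_const))).measurable
  -- the conditional kernel integrand and the candidate function ψ
  set G : 𝒳 × 𝒴 → ℝ := fun p => g (p.1, p.2, true) * F p + g (p.1, p.2, false) * (1 - F p)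
    with hGdef
  have hGmeas : Measurable G :=
    ((hgb true).mul hFmeas).add ((hgb false).mul (measurable_const.sub hFmeas))
  set ψ : 𝒳 → ℝ := fun x => ∫ y, G (x, y) ∂ν with hψdef
  have hψm : StronglyMeasurable ψ := hGmeas.stronglyMeasurable.integral_prod_right'
  -- transfer of the domination hypothesis to ν
  have hdomY : ∀ᵐ y ∂ν, ∀ (x : 𝒳) (b : Bool), |g (x, y, b)| ≤ h y := by
    rw [hν]
    refine (ae_map_iff hY.aemeasurable ?_).mpr hdom
    · -- measurability of the set of good y's
      obtain ⟨D, hDc, hDd⟩ := TopologicalSpace.exists_countable_dense 𝒳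
      have hset : {y : 𝒴 | ∀ (x : 𝒳) (b : Bool), |g (x, y, b)| ≤ h y}
          = ⋂ (x ∈ D) (b : Bool), {y : 𝒴 | |g (x, y, b)| ≤ h y} := by
        ext y
        simp only [Set.mem_setOf_eq, Set.mem_iInter]
        constructor
        · exact fun hy x _ b => hy x b
        · intro hy x b
          have hclosed : IsClosed {x' : 𝒳 | |g (x', y, b)| ≤ h y} := by
            apply isClosed_le _ continuous_const
            exact (hg.comp (continuous_id.prodMk
              (continuous_const.prodMk continuous_const))).abs
          have : D ⊆ {x' : 𝒳 | |g (x', y, b)| ≤ h y} := fun x' hx' => hy x' hx' b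
          have := hclosed.closure_subset_iff.mpr this
          rw [hDd.closure_eq] at this
          exact this (Set.mem_univ x)
      rw [hset]
      refine MeasurableSet.biInter hDc fun x _ => MeasurableSet.iInter fun b => ?_
      exact measurableSet_le (((hg.comp (continuous_const.prodMk
        (continuous_id.prodMk continuous_const))).measurable).abs) hhm
  have hinth : Integrable h ν := by
    rw [hν]
    exact (integrable_map_measure hhm.aestronglyMeasurable hY.aemeasurable).mpr hint
  -- pointwise bound on G
  have hGb : ∀ᵐ y ∂ν, ∀ x : 𝒳, |G (x, y)| ≤ h y := by
    filter_upwards [hdomY] with y hy x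
    exact abs_combo_le (hy x true) (hy x false) (hF0 (x, y)) (hF1 (x, y))
  -- integrability of the slices
  have hGslice : ∀ x : 𝒳, Integrable (fun y => G (x, y)) ν := by
    intro x
    refine hinth.mono' ((hGmeas.comp measurable_prodMk_left).aestronglyMeasurable) ?_
    filter_upwards [hGb] with y hy
    rw [Real.norm_eq_abs]
    exact hy x
  -- the ψ bound
  have hψb : ∀ x : 𝒳, |ψ x| ≤ ∫ y, h y ∂ν := by
    intro x
    rw [← Real.norm_eq_abs]
    refine norm_integral_le_of_norm_le hinth ?_
    filter_upwards [hGb] with y hy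
    rw [Real.norm_eq_abs]
    exact hy x
  -- a.e. continuity of ψ
  have hψcont : AEContinuous μ ψ := by
    have hcc : ∀ᵐ x ∂μ, ∀ᵐ y ∂ν, ContinuousAt f (x, y) := by
      apply Measure.ae_ae_of_ae_prod
      rw [← hmapXY]
      exact hfcont
    filter_upwards [hcc] with x₀ hx₀
    rw [ContinuousAt]
    refine tendsto_integral_filter_of_dominated_convergence h
      (Eventually.of_forall fun x =>
        (hGmeas.comp measurable_prodMk_left).aestronglyMeasurable) ?_ hinth ?_
    · refine Eventually.of_forall fun x => ?_
      filter_upwards [hGb] with y hy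
      rw [Real.norm_eq_abs]
      exact hy x
    · filter_upwards [hx₀] with y hy
      have hFc : ContinuousAt F (x₀, y) := env_continuousAt hf0 hf1 hy
      have hxy : ContinuousAt (fun x : 𝒳 => (x, y)) x₀ :=
        (continuous_id.prodMk continuous_const).continuousAt
      have hFxy : ContinuousAt (fun x : 𝒳 => F (x, y)) x₀ := ContinuousAt.comp (g := F) (f := fun x : 𝒳 => (x, y)) hFc hxy
      have hgc : ∀ b : Bool, ContinuousAt (fun x : 𝒳 => g (x, y, b)) x₀ := fun b =>
        (hg.comp (continuous_id.prodMk
          (continuous_const.prodMk continuous_const))).continuousAt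
      exact ContinuousAt.add (ContinuousAt.mul (hgc true) hFxy)
        (ContinuousAt.mul (hgc false) (continuousAt_const.sub hFxy))
  -- conditional expectation identification
  have hm' := hXY.comap_le
  have hmX := hX.comap_le
  haveI : IsFiniteMeasure (P.trim hmX) := isFiniteMeasure_trim hmX
  haveI : IsFiniteMeasure (P.trim hm') := isFiniteMeasure_trim hm'
  set W : Ω → ℝ := fun ω => g (X ω, Y ω, B ω) with hWdef
  have hWint : Integrable W P := by
    refine hint.mono' ((hg.measurable.comp (hX.prodMk (hY.prodMk hB))).aestronglyMeasurable) ?_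
    filter_upwards [hdom] with ω hω
    rw [Real.norm_eq_abs]
    exact hω (X ω) (B ω)
  -- F ∘ (X,Y) agrees a.e. with f ∘ (X,Y)
  have hfF : ∀ᵐ ω ∂P, F (X ω, Y ω) = f (X ω, Y ω) := by
    have h1 : ∀ᵐ p ∂(P.map (fun ω => (X ω, Y ω))), F p = f p := by
      filter_upwards [hfcont] with p hp using env_eq_of_continuousAt hp
    exact ae_of_ae_map (p := fun q => F q = f q) hXY.aemeasurable h1
  -- integrability of G over the product measure
  have hhsnd : Integrable (fun p : 𝒳 × 𝒴 => h p.2) (μ.prod ν) := by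
    have : Integrable (h ∘ Prod.snd) (μ.prod ν) := by
      refine (integrable_map_measure hhm.aestronglyMeasurable measurable_snd.aemeasurable).mp ?_
      rw [Measure.map_snd_prod]
      simpa [measure_univ] using hinth
    exact this
  have hGbp : ∀ᵐ p ∂(μ.prod ν), ∀ x : 𝒳, |G (x, p.2)| ≤ h p.2 := by
    have h2 : ∀ᵐ y ∂(Measure.map Prod.snd (μ.prod ν)), ∀ x : 𝒳, |G (x, y)| ≤ h y := by
      rw [Measure.map_snd_prod]
      simpa [measure_univ] using hGb
    exact ae_of_ae_map (p := fun y : 𝒴 => ∀ x : 𝒳, |G (x, y)| ≤ h y)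
      measurable_snd.aemeasurable h2
  have hGint_prod : Integrable G (μ.prod ν) := by
    refine hhsnd.mono' hGmeas.aestronglyMeasurable ?_
    filter_upwards [hGbp] with p hp
    rw [Real.norm_eq_abs]
    exact hp p.1
  refine ⟨ψ, hψcont, ?_⟩
  refine ae_eq_condExp_of_forall_setIntegral_eq hmX hWint ?_ ?_ ?_
  · intro s _ _
    refine Integrable.integrableOn ?_
    refine (integrable_const (∫ y, h y ∂ν)).mono'
      ((hψm.measurable.comp hX).aestronglyMeasurable) ?_
    exact Eventually.of_forall fun ω => by rw [Real.norm_eq_abs]; exact hψb (X ω)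
  · intro s hs _
    obtain ⟨t, ht, rfl⟩ := hs
    -- notation and auxiliary functions
    set χ : 𝒳 → ℝ := Set.indicator t (fun _ => (1:ℝ)) with hχdef
    have hχm : Measurable χ := measurable_const.indicator ht
    have hχb : ∀ x, |χ x| ≤ 1 := by
      intro x
      by_cases hx : x ∈ t <;> simp [hχdef, Set.indicator, hx]
    set β : Ω → ℝ := fun ω => if B ω then (1:ℝ) else 0 with hβdef
    have hβm : Measurable β := by
      have : Measurable (fun b : Bool => if b then (1:ℝ) else 0) := measurable_from_top
      exact this.comp hB
    have hβb : ∀ ω, |β ω| ≤ 1 := by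
      intro ω
      by_cases hb : B ω <;> simp [hβdef, hb]
    set q : 𝒳 × 𝒴 → ℝ := fun p => (g (p.1, p.2, true) - g (p.1, p.2, false)) * χ p.1 with hqdef
    have hqm : Measurable q := ((hgb true).sub (hgb false)).mul (hχm.comp measurable_fst)
    set φ : Ω → ℝ := fun ω => q (X ω, Y ω) with hφdef
    have hφm : Measurable φ := hqm.comp hXY
    have hφb : ∀ᵐ ω ∂P, |φ ω| ≤ 2 * h (Y ω) := by
      filter_upwards [hdom] with ω hω
      have h1 : |g (X ω, Y ω, true) - g (X ω, Y ω, false)| ≤ 2 * h (Y ω) := by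
        have := hω (X ω) true
        have := hω (X ω) false
        have := abs_sub (g (X ω, Y ω, true)) (g (X ω, Y ω, false))
        linarith
      calc |φ ω| = |g (X ω, Y ω, true) - g (X ω, Y ω, false)| * |χ (X ω)| := abs_mul _ _
        _ ≤ (2 * h (Y ω)) * 1 :=
            mul_le_mul h1 (hχb (X ω)) (abs_nonneg _) (by linarith [hh0 (Y ω)])
        _ = 2 * h (Y ω) := by ring
    have h2hint : Integrable (fun ω => 2 * h (Y ω)) P := hint.const_mul 2
    have hφm' : StronglyMeasurable[(MeasurableSpace.comap (fun ω => (X ω, Y ω)) (inferInstance : MeasurableSpace (𝒳 × 𝒴)))] φ := by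
      have hXYm' : Measurable[(MeasurableSpace.comap (fun ω => (X ω, Y ω)) (inferInstance : MeasurableSpace (𝒳 × 𝒴)))] (fun ω => (X ω, Y ω)) := Measurable.of_comap_le le_rfl
      exact (hqm.comp hXYm').stronglyMeasurable
    have hβint : Integrable β P := by
      refine (integrable_const (1:ℝ)).mono' hβm.aestronglyMeasurable ?_
      exact Eventually.of_forall fun ω => by rw [Real.norm_eq_abs]; exact hβb ω
    have hφβint : Integrable (φ * β) P := by
      refine h2hint.mono' ((hφm.mul hβm).aestronglyMeasurable) ?_
      filter_upwards [hφb] with ω hω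
      rw [Pi.mul_apply, Real.norm_eq_abs, abs_mul]
      calc |φ ω| * |β ω| ≤ (2 * h (Y ω)) * 1 :=
            mul_le_mul hω (hβb ω) (abs_nonneg _) (by linarith [hh0 (Y ω)])
        _ = 2 * h (Y ω) := by ring
    have hpull : P[φ * β | (MeasurableSpace.comap (fun ω => (X ω, Y ω)) (inferInstance : MeasurableSpace (𝒳 × 𝒴)))] =ᵐ[P] φ * P[β | (MeasurableSpace.comap (fun ω => (X ω, Y ω)) (inferInstance : MeasurableSpace (𝒳 × 𝒴)))] :=
      condExp_mul_of_stronglyMeasurable_left hφm' hφβint hβint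
    -- integrability of the remaining pieces
    have int_gfχ : Integrable (fun ω => g (X ω, Y ω, false) * χ (X ω)) P := by
      refine hint.mono' (((hgb false).comp hXY).mul
        ((hχm.comp measurable_fst).comp hXY)).aestronglyMeasurable ?_
      filter_upwards [hdom] with ω hω
      rw [Real.norm_eq_abs, abs_mul]
      calc |g (X ω, Y ω, false)| * |χ (X ω)| ≤ h (Y ω) * 1 :=
            mul_le_mul (hω (X ω) false) (hχb (X ω)) (abs_nonneg _) (hh0 _)
        _ = h (Y ω) := by ring
    have int_φF : Integrable (fun ω => φ ω * F (X ω, Y ω)) P := by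
      refine h2hint.mono' (hφm.mul (hFmeas.comp hXY)).aestronglyMeasurable ?_
      filter_upwards [hφb] with ω hω
      rw [Real.norm_eq_abs, abs_mul]
      have hF' : |F (X ω, Y ω)| ≤ 1 := abs_le.mpr ⟨by linarith [hF0 (X ω, Y ω)], hF1 _⟩
      calc |φ ω| * |F (X ω, Y ω)| ≤ (2 * h (Y ω)) * 1 :=
            mul_le_mul hω hF' (abs_nonneg _) (by linarith [hh0 (Y ω)])
        _ = 2 * h (Y ω) := by ring
    have hGint_t : Integrable G ((μ.restrict t).prod ν) := by
      rw [Measure.restrict_prod_eq_prod_univ]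
      exact hGint_prod.restrict
    -- key scalar computation: ∫ φ·β = ∫ φ·f(X,Y)
    have hkey : ∫ ω, (φ * β) ω ∂P = ∫ ω, φ ω * f (X ω, Y ω) ∂P := by
      calc ∫ ω, (φ * β) ω ∂P = ∫ ω, (P[φ * β | (MeasurableSpace.comap (fun ω => (X ω, Y ω)) (inferInstance : MeasurableSpace (𝒳 × 𝒴)))]) ω ∂P := (integral_condExp hm').symm
        _ = ∫ ω, φ ω * (P[β | (MeasurableSpace.comap (fun ω => (X ω, Y ω)) (inferInstance : MeasurableSpace (𝒳 × 𝒴)))]) ω ∂P := integral_congr_ae (hpull.mono fun ω hω => hω)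
        _ = ∫ ω, φ ω * f (X ω, Y ω) ∂P := by
            refine integral_congr_ae ?_
            filter_upwards [hfB] with ω hω
            rw [hω]
    -- the chain of equalities
    calc ∫ ω in X ⁻¹' t, ψ (X ω) ∂P
        = ∫ x in t, ψ x ∂μ := (setIntegral_map ht hψm.aestronglyMeasurable hX.aemeasurable).symm
      _ = ∫ p in t ×ˢ Set.univ, G p ∂(μ.prod ν) := by
          rw [← Measure.restrict_prod_eq_prod_univ, integral_prod _ hGint_t]
      _ = ∫ p, G p * χ p.1 ∂(μ.prod ν) := by
          rw [← integral_indicator (ht.prod MeasurableSet.univ)]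
          refine integral_congr_ae (Eventually.of_forall fun p => ?_)
          by_cases hp : p.1 ∈ t <;>
            simp [Set.indicator, hχdef, hp, Set.mem_prod]
      _ = ∫ ω, G (X ω, Y ω) * χ (X ω) ∂P := by
          have hKm : Measurable fun p : 𝒳 × 𝒴 => G p * χ p.1 :=
            hGmeas.mul (hχm.comp measurable_fst)
          rw [← hmapXY, integral_map hXY.aemeasurable hKm.aestronglyMeasurable]
      _ = ∫ ω, (φ ω * F (X ω, Y ω) + g (X ω, Y ω, false) * χ (X ω)) ∂P := by
          refine integral_congr_ae (Eventually.of_forall fun ω => ?_)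
          simp only [hGdef, hφdef, hqdef]
          ring
      _ = ∫ ω, φ ω * F (X ω, Y ω) ∂P + ∫ ω, g (X ω, Y ω, false) * χ (X ω) ∂P :=
          integral_add int_φF int_gfχ
      _ = ∫ ω, (φ * β) ω ∂P + ∫ ω, g (X ω, Y ω, false) * χ (X ω) ∂P := by
          congr 1
          rw [hkey]
          refine integral_congr_ae ?_
          filter_upwards [hfF] with ω hω
          rw [hω]
      _ = ∫ ω, ((φ * β) ω + g (X ω, Y ω, false) * χ (X ω)) ∂P :=
          (integral_add hφβint int_gfχ).symm
      _ = ∫ ω, W ω * χ (X ω) ∂P := by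
          refine integral_congr_ae (Eventually.of_forall fun ω => ?_)
          simp only [Pi.mul_apply, hφdef, hqdef, hβdef, hWdef]
          by_cases hb : B ω <;> simp [hb] <;> ring
      _ = ∫ ω in X ⁻¹' t, W ω ∂P := by
          rw [← integral_indicator (hX ht)]
          refine integral_congr_ae (Eventually.of_forall fun ω => ?_)
          by_cases hω : X ω ∈ t <;>
            simp [Set.indicator, hχdef, hω]
  · refine StronglyMeasurable.aestronglyMeasurable ?_
    exact Measurable.stronglyMeasurable (hψm.measurable.comp (Measurable.of_comap_le le_rfl))
end
end

section
/- Uniformly integrable empirical means converge (Lemma A.5 / unifintlem): Let {X^n_i : n ∈ ℕ, 1 ≤ i ≤ n} be a uniformly integrable triangular array of ℝ^d-valued random vectors on a common probability space such that the empirical measures η^n_X := (1/n)Σ_{i=1}^n δ_{X^n_i} converge in probability in 𝒫(ℝ^d) to a (possibly random) probability measure η_X. Then (1/n)Σ_{i=1}^n X^n_i converges in probability to ∫_{ℝ^d} x dη_X(x). -/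
open MeasureTheory ProbabilityTheory Filter

noncomputable section

open CoevolveNet MeasureTheory ProbabilityTheory Filter

open scoped ENNReal NNReal

section AuxLemmas

open BoundedContinuousFunction

/-- Clamping error bound. -/
lemma aux_clamp_abs_sub {C a b : ℝ} (hC : 0 ≤ C) (hab : |a| ≤ b) :
    |a - max (-C) (min C a)| ≤ max (b - C) 0 := by
  have h1 : a ≤ b := (le_abs_self a).trans hab
  have h2 : -a ≤ b := (neg_le_abs a).trans hab
  rcases le_total a C with hac | hac
  · rcases le_total (-C) a with hca | hca
    · rw [min_eq_right hac, max_eq_right hca]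
      simpa using le_max_right (b - C) 0
    · rw [min_eq_right hac, max_eq_left hca]
      have h3 : |a - -C| = -a - C := by
        rw [abs_of_nonpos (by linarith)]; ring
      rw [h3]
      exact le_max_of_le_left (by linarith)
  · rw [min_eq_left hac, max_eq_right (by linarith : -C ≤ C)]
    rw [abs_of_nonneg (by linarith : (0:ℝ) ≤ a - C)]
    exact le_max_of_le_left (by linarith)

/-- Integral with respect to an empirical measure is the empirical average. -/
lemma aux_empMeasure_integral {E : Type*} [MeasurableSpace E] [MeasurableSingletonClass E]
    (n : ℕ) (x : ℕ → E) (g : E → ℝ) :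
    ∫ y, g y ∂(empMeasure n x) = (n : ℝ)⁻¹ * ∑ i ∈ Finset.range n, g (x i) := by
  have hint : ∀ i : ℕ, Integrable g (Measure.dirac (x i)) := by
    intro i
    refine ⟨(aestronglyMeasurable_const (b := g (x i))).congr (ae_eq_dirac g).symm, ?_⟩
    simp [HasFiniteIntegral, lintegral_dirac]
  rw [empMeasure, integral_smul_measure, integral_finset_sum_measure (fun i _ => hint i)]
  simp [integral_dirac, ENNReal.toReal_inv, smul_eq_mul]

/-- Lévy–Prokhorov convergence implies convergence of integrals of bounded continuous
functions. -/
lemma aux_tendsto_integral_of_LP {E : Type*} [MeasurableSpace E] [PseudoMetricSpace E]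
    [OpensMeasurableSpace E] {μs : ℕ → Measure E} {ν : Measure E} [IsProbabilityMeasure ν]
    (hμs : ∀ᶠ n in atTop, IsProbabilityMeasure (μs n))
    (h : Tendsto (fun n => levyProkhorovDist (μs n) ν) atTop (nhds 0))
    (f : BoundedContinuousFunction E ℝ) :
    Tendsto (fun n => ∫ x, f x ∂(μs n)) atTop (nhds (∫ x, f x ∂ν)) := by
  classical
  set P : ProbabilityMeasure E := ⟨ν, inferInstance⟩ with hP
  set Ps : ℕ → ProbabilityMeasure E := fun n =>
    if hn : IsProbabilityMeasure (μs n) then ⟨μs n, hn⟩ else P with hPsdef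
  have hPs : ∀ᶠ n in atTop, (Ps n : Measure E) = μs n := by
    filter_upwards [hμs] with n hn
    simp only [hPsdef, dif_pos hn]
    exact congrArg (fun Q : ProbabilityMeasure E => (Q : Measure E)) (dif_pos hn : Ps n = ⟨μs n, hn⟩)
  have h2 : Tendsto (fun n => LevyProkhorov.ofMeasure (Ps n)) atTop
      (nhds (LevyProkhorov.ofMeasure P)) := by
    apply tendsto_iff_dist_tendsto_zero.mpr
    apply Tendsto.congr' ?_ h
    filter_upwards [hPs] with n hn
    rw [LevyProkhorov.dist_probabilityMeasure_def]
    show levyProkhorovDist (μs n) ν = levyProkhorovDist (Ps n : Measure E) ν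
    rw [hn]
  have h3 := ((LevyProkhorov.continuous_toMeasure_probabilityMeasure (Ω := E)).tendsto _).comp h2
  have h4 : Tendsto Ps atTop (nhds P) := h3
  rw [ProbabilityMeasure.tendsto_iff_forall_integral_tendsto] at h4
  refine Tendsto.congr' ?_ (h4 f)
  filter_upwards [hPs] with n hn
  rw [hn]

/-- Along a subsequence, the empirical measures converge weakly a.e. -/
lemma aux_subseq {Ω : Type*} [MeasurableSpace Ω] {P : Measure Ω} [IsProbabilityMeasure P]
    {d : ℕ} {X : ℕ → ℕ → Ω → (Fin d → ℝ)} {ηlim : Ω → Measure (Fin d → ℝ)}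
    (hηp : ∀ ω, IsProbabilityMeasure (ηlim ω))
    (hconv : TendstoInProbLP P (fun n ω => empMeasure n fun i => X n i ω) ηlim)
    (ns : ℕ → ℕ) (hns : Tendsto ns atTop atTop) :
    ∃ ms : ℕ → ℕ, StrictMono ms ∧ ∀ᵐ ω ∂P, ∀ f : BoundedContinuousFunction (Fin d → ℝ) ℝ,
      Tendsto (fun k => ∫ x, f x ∂(empMeasure (ns (ms k)) (fun i => X (ns (ms k)) i ω))) atTop
        (nhds (∫ x, f x ∂(ηlim ω))) := by
  set L : ℕ → Ω → ℝ := fun n ω => levyProkhorovDist (empMeasure n fun i => X n i ω) (ηlim ω)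
    with hL
  have h1 : TendstoInMeasure P (fun k => L (ns k)) atTop (fun _ => (0 : ℝ)) := by
    rw [tendstoInMeasure_iff_dist]
    intro ε hε
    have := (hconv ε hε).comp hns
    refine this.congr fun k => congrArg P ?_
    ext ω
    have h0 : (0:ℝ) ≤ L (ns k) ω := ENNReal.toReal_nonneg
    simp [Real.dist_0_eq_abs, abs_of_nonneg h0]
    exact Iff.rfl
  obtain ⟨ms, hms, hae⟩ := h1.exists_seq_tendsto_ae
  refine ⟨ms, hms, ?_⟩
  have hev : ∀ᶠ k in atTop, 1 ≤ ns (ms k) := (hns.comp hms.tendsto_atTop).eventually_ge_atTop 1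
  filter_upwards [hae] with ω hω f
  haveI := hηp ω
  refine aux_tendsto_integral_of_LP ?_ hω f
  filter_upwards [hev] with k hk
  exact isProbabilityMeasure_empMeasure (by omega) _

/-- Key uniform-integrability estimate for empirical averages of small functions. -/
lemma aux_UI_bound {Ω : Type*} [MeasurableSpace Ω] {P : Measure Ω} [IsProbabilityMeasure P]
    {d n : ℕ} (hn : 1 ≤ n) {Y : ℕ → Ω → (Fin d → ℝ)} (hY : ∀ i, Measurable (Y i))
    {C r : ℝ} (hC : 0 ≤ C)
    (hui : ∀ i < n, ∫⁻ ω in {ω | C < ‖Y i ω‖}, ENNReal.ofReal ‖Y i ω‖ ∂P ≤ ENNReal.ofReal r)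
    {h : (Fin d → ℝ) → ℝ} (hh : Measurable h) (hh0 : ∀ x, 0 ≤ h x)
    (hhle : ∀ x, h x ≤ max (‖x‖ - C) 0) :
    ∫⁻ ω, ENNReal.ofReal ((n : ℝ)⁻¹ * ∑ i ∈ Finset.range n, h (Y i ω)) ∂P
      ≤ ENNReal.ofReal r := by
  have hnR : (0:ℝ) < (n:ℝ) := by exact_mod_cast hn
  have hmeasi : ∀ i : ℕ, Measurable fun ω => ENNReal.ofReal (h (Y i ω)) :=
    fun i => ENNReal.measurable_ofReal.comp (hh.comp (hY i))
  have e1 : ∀ ω, ENNReal.ofReal ((n : ℝ)⁻¹ * ∑ i ∈ Finset.range n, h (Y i ω))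
      = (n : ℝ≥0∞)⁻¹ * ∑ i ∈ Finset.range n, ENNReal.ofReal (h (Y i ω)) := by
    intro ω
    rw [ENNReal.ofReal_mul (by positivity), ENNReal.ofReal_sum_of_nonneg
      (fun i _ => hh0 (Y i ω)), ENNReal.ofReal_inv_of_pos hnR, ENNReal.ofReal_natCast]
  simp only [e1]
  rw [lintegral_const_mul _ (Finset.measurable_sum _ fun i _ => hmeasi i),
    lintegral_finset_sum _ (fun i _ => hmeasi i)]
  have hile : ∀ i ∈ Finset.range n, ∫⁻ ω, ENNReal.ofReal (h (Y i ω)) ∂P ≤ ENNReal.ofReal r := by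
    intro i hi
    rw [Finset.mem_range] at hi
    have hptwise : ∀ ω, ENNReal.ofReal (h (Y i ω))
        ≤ Set.indicator {ω | C < ‖Y i ω‖} (fun ω => ENNReal.ofReal ‖Y i ω‖) ω := by
      intro ω
      by_cases hω : C < ‖Y i ω‖
      · rw [Set.indicator_of_mem (show ω ∈ {ω | C < ‖Y i ω‖} from hω)]
        refine ENNReal.ofReal_le_ofReal ((hhle _).trans ?_)
        exact max_le (by linarith) (norm_nonneg _)
      · rw [Set.indicator_of_notMem (show ω ∉ {ω | C < ‖Y i ω‖} from hω)]
        push_neg at hω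
        have : h (Y i ω) ≤ 0 := (hhle _).trans (by rw [max_eq_right]; linarith)
        simp [ENNReal.ofReal_eq_zero.mpr this]
    calc ∫⁻ ω, ENNReal.ofReal (h (Y i ω)) ∂P
        ≤ ∫⁻ ω, Set.indicator {ω | C < ‖Y i ω‖} (fun ω => ENNReal.ofReal ‖Y i ω‖) ω ∂P :=
          lintegral_mono hptwise
      _ = ∫⁻ ω in {ω | C < ‖Y i ω‖}, ENNReal.ofReal ‖Y i ω‖ ∂P := by
          rw [lintegral_indicator]
          exact measurableSet_lt measurable_const (hY i).norm
      _ ≤ ENNReal.ofReal r := hui i hi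
  calc (n : ℝ≥0∞)⁻¹ * ∑ i ∈ Finset.range n, ∫⁻ ω, ENNReal.ofReal (h (Y i ω)) ∂P
      ≤ (n : ℝ≥0∞)⁻¹ * ∑ _i ∈ Finset.range n, ENNReal.ofReal r :=
        mul_le_mul_right (Finset.sum_le_sum hile) _
    _ = (n : ℝ≥0∞)⁻¹ * ((n : ℝ≥0∞) * ENNReal.ofReal r) := by
        rw [Finset.sum_const, Finset.card_range, nsmul_eq_mul]
    _ = ENNReal.ofReal r := by
        rw [← mul_assoc, ENNReal.inv_mul_cancel (by exact_mod_cast (by omega : n ≠ 0))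
          (ENNReal.natCast_ne_top n), one_mul]

/-- Coordinatewise clamping at level `C`, as a bounded continuous function. -/
noncomputable def clampBC (C : ℝ) (hC : 0 ≤ C) {d : ℕ} (j : Fin d) :
    BoundedContinuousFunction (Fin d → ℝ) ℝ :=
  BoundedContinuousFunction.ofNormedAddCommGroup (fun x => max (-C) (min C (x j)))
    (continuous_const.max (continuous_const.min (continuous_apply j))) C (by
      intro x
      rw [Real.norm_eq_abs, abs_le]
      refine ⟨le_max_left _ _, max_le (by linarith) (min_le_left _ _)⟩)

@[simp] lemma clampBC_apply (C : ℝ) (hC : 0 ≤ C) {d : ℕ} (j : Fin d) (x : Fin d → ℝ) :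
    clampBC C hC j x = max (-C) (min C (x j)) := rfl

/-- The truncated norm-excess function, as a bounded continuous function. -/
noncomputable def cutBC (C : ℝ) (K : ℕ) {d : ℕ} :
    BoundedContinuousFunction (Fin d → ℝ) ℝ :=
  BoundedContinuousFunction.ofNormedAddCommGroup (fun x => min (max (‖x‖ - C) 0) K)
    (((continuous_norm.sub continuous_const).max continuous_const).min continuous_const) K (by
      intro x
      rw [Real.norm_eq_abs, abs_le]
      constructor
      · have : (0:ℝ) ≤ min (max (‖x‖ - C) 0) K :=
          le_min (le_max_right _ _) (by positivity)
        linarith [Nat.cast_nonneg (α := ℝ) K]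
      · exact min_le_right _ _)

@[simp] lemma cutBC_apply (C : ℝ) (K : ℕ) {d : ℕ} (x : Fin d → ℝ) :
    cutBC C K x = min (max (‖x‖ - C) 0) K := rfl

end AuxLemmas

/-- **Uniformly integrable empirical means converge** (Lemma A.5).  If
`{X^n_i : i < n}` is a uniformly integrable triangular array of `ℝ^d`-valued random
vectors whose empirical measures converge in probability (in the weak topology,
metrized by the Lévy–Prokhorov distance) to a possibly random probability measure
`η_X`, then the empirical means `(1/n) ∑_{i<n} X^n_i` converge in probability to
`∫ x dη_X(x)`. -/
theorem empirical_mean_tendstoInProb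
    {Ω : Type*} [MeasurableSpace Ω] (P : Measure Ω) [IsProbabilityMeasure P]
    (d : ℕ) (X : ℕ → ℕ → Ω → (Fin d → ℝ))
    (hmeas : ∀ n i, Measurable (X n i))
    (hUI : ∀ ε : ℝ, 0 < ε → ∃ C : ℝ, ∀ n, ∀ i < n,
      ∫⁻ ω in {ω | C < ‖X n i ω‖}, ENNReal.ofReal ‖X n i ω‖ ∂P ≤ ENNReal.ofReal ε)
    (ηlim : Ω → Measure (Fin d → ℝ))
    (hηm : Measurable ηlim) (hηp : ∀ ω, IsProbabilityMeasure (ηlim ω))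
    (hconv : TendstoInProbLP P (fun n ω => empMeasure n fun i => X n i ω) ηlim) :
    ∀ ε : ℝ, 0 < ε →
      Tendsto (fun n : ℕ =>
          P {ω | ε ≤ ‖(n : ℝ)⁻¹ • (∑ i ∈ Finset.range n, X n i ω) - ∫ x, x ∂(ηlim ω)‖})
        atTop (nhds 0) := by
  classical
  intro ε hε
  have hε3 : (0:ℝ) < ε/3 := by linarith
  set κ : Kernel Ω (Fin d → ℝ) := ⟨ηlim, hηm⟩ with hκdef
  haveI : IsMarkovKernel κ := ⟨fun ω => hηp ω⟩
  rw [ENNReal.tendsto_nhds_zero]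
  intro θ hθ
  -- Choice of the uniform-integrability level.
  obtain ⟨r, hr0, hrθ⟩ : ∃ r : ℝ, 0 < r ∧ ENNReal.ofReal r / ENNReal.ofReal (ε/3) ≤ θ/3 := by
    rcases eq_or_ne (θ/3) ⊤ with h3 | h3
    · exact ⟨1, one_pos, by simp [h3]⟩
    · have hθ3 : 0 < θ/3 := ENNReal.div_pos hθ.ne' (by norm_num)
      refine ⟨(ε/3) * (θ/3).toReal, mul_pos hε3 (ENNReal.toReal_pos hθ3.ne' h3), ?_⟩
      rw [ENNReal.div_le_iff (ENNReal.ofReal_pos.mpr hε3).ne' ENNReal.ofReal_ne_top,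
        ENNReal.ofReal_mul hε3.le, ENNReal.ofReal_toReal h3, mul_comm]
  obtain ⟨C₀, hC₀⟩ := hUI r hr0
  set C : ℝ := max C₀ 0 with hCdef
  have hC : 0 ≤ C := le_max_right _ _
  have hCui : ∀ n, ∀ i < n,
      ∫⁻ ω in {ω | C < ‖X n i ω‖}, ENNReal.ofReal ‖X n i ω‖ ∂P ≤ ENNReal.ofReal r := by
    intro n i hi
    refine le_trans (lintegral_mono_set ?_) (hC₀ n i hi)
    intro ω hω
    have hω' : C < ‖X n i ω‖ := hω
    exact lt_of_le_of_lt (le_max_left C₀ 0) hω'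
  -- Notation.
  set h0 : (Fin d → ℝ) → ℝ := fun x => max (‖x‖ - C) 0 with hh0def
  have h0cont : Continuous h0 := (continuous_norm.sub continuous_const).max continuous_const
  have h0nonneg : ∀ x, 0 ≤ h0 x := fun x => le_max_right _ _
  set A : ℕ → Ω → ℝ := fun n ω => (n:ℝ)⁻¹ * ∑ i ∈ Finset.range n, h0 (X n i ω) with hAdef
  set T : ℕ → Ω → (Fin d → ℝ) :=
    fun n ω j => (n:ℝ)⁻¹ * ∑ i ∈ Finset.range n, clampBC C hC j (X n i ω) with hTdef
  set t : Ω → (Fin d → ℝ) := fun ω j => ∫ x, clampBC C hC j x ∂(ηlim ω) with htdef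
  set D' : Ω → ℝ≥0∞ := fun ω => ∫⁻ x, ENNReal.ofReal (h0 x) ∂(ηlim ω) with hD'def
  have hA_nonneg : ∀ n ω, 0 ≤ A n ω := fun n ω =>
    mul_nonneg (by positivity) (Finset.sum_nonneg fun i _ => h0nonneg _)
  -- Measurability.
  have hmeasA : ∀ n, Measurable (A n) := fun n =>
    measurable_const.mul (Finset.measurable_sum _ fun i _ => (h0cont.measurable.comp (hmeas n i)))
  have hmeasT : ∀ n, Measurable (T n) := fun n =>
    measurable_pi_lambda _ fun j => measurable_const.mul
      (Finset.measurable_sum _ fun i _ =>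
        ((clampBC C hC j).continuous.measurable.comp (hmeas n i)))
  have hmeast : Measurable t := by
    apply measurable_pi_lambda
    intro j
    have hsm : StronglyMeasurable
        (Function.uncurry fun (_ : Ω) (x : Fin d → ℝ) => clampBC C hC j x) :=
      ((clampBC C hC j).continuous.measurable.comp measurable_snd).stronglyMeasurable
    exact (MeasureTheory.StronglyMeasurable.integral_kernel_prod_right (κ := κ) hsm).measurable
  have hmeasD' : Measurable D' := by
    have hm : Measurable fun x : Fin d → ℝ => ENNReal.ofReal (h0 x) :=
      ENNReal.measurable_ofReal.comp h0cont.measurable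
    exact hm.lintegral_kernel (κ := κ)
  -- Step 1: the tail bound for the limiting measures.
  have hGKlim : ∀ K : ℕ,
      ∫⁻ ω, ∫⁻ x, ENNReal.ofReal (min (h0 x) K) ∂(ηlim ω) ∂P ≤ ENNReal.ofReal r := by
    intro K
    obtain ⟨ms, hms, hae⟩ := aux_subseq hηp hconv id tendsto_id
    set Gk : ℕ → Ω → ℝ≥0∞ := fun k ω =>
      ENNReal.ofReal (∫ x, cutBC C K x ∂(empMeasure (ms k) (fun i => X (ms k) i ω))) with hGkdef
    have hsum : ∀ k ω, (∫ x, cutBC C K x ∂(empMeasure (ms k) (fun i => X (ms k) i ω)))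
        = ((ms k : ℝ))⁻¹ * ∑ i ∈ Finset.range (ms k), min (h0 (X (ms k) i ω)) K :=
      fun k ω => aux_empMeasure_integral _ _ _
    have hminmeas : Measurable fun v : Fin d → ℝ => min (h0 v) (K:ℝ) :=
      (h0cont.min continuous_const).measurable
    have hGkmeas : ∀ k, Measurable (Gk k) := by
      intro k
      apply ENNReal.measurable_ofReal.comp
      simp only [hsum]
      exact measurable_const.mul
        (Finset.measurable_sum _ fun i _ => hminmeas.comp (hmeas _ i))
    have hGkbd : ∀ k, Gk k ≤ᵐ[P] fun _ => (K : ℝ≥0∞) := by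
      intro k
      refine Filter.Eventually.of_forall fun ω => ?_
      have hint_le : (∫ x, cutBC C K x ∂(empMeasure (ms k) (fun i => X (ms k) i ω))) ≤ (K:ℝ) := by
        rw [hsum]
        rcases Nat.eq_zero_or_pos (ms k) with h0k | h0k
        · simp [h0k]
        · have hsum_le : ∑ i ∈ Finset.range (ms k), min (h0 (X (ms k) i ω)) (K:ℝ)
              ≤ (ms k : ℝ) * K := by
            calc ∑ i ∈ Finset.range (ms k), min (h0 (X (ms k) i ω)) (K:ℝ)
                ≤ ∑ _i ∈ Finset.range (ms k), (K:ℝ) :=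
                  Finset.sum_le_sum fun i _ => min_le_right _ _
              _ = (ms k : ℝ) * K := by
                  rw [Finset.sum_const, Finset.card_range, nsmul_eq_mul]
          have hpos : (0:ℝ) < (ms k : ℝ) := by exact_mod_cast h0k
          calc ((ms k : ℝ))⁻¹ * ∑ i ∈ Finset.range (ms k), min (h0 (X (ms k) i ω)) (K:ℝ)
              ≤ ((ms k : ℝ))⁻¹ * ((ms k : ℝ) * K) :=
                mul_le_mul_of_nonneg_left hsum_le (by positivity)
            _ = (K:ℝ) := by field_simp
      calc Gk k ω ≤ ENNReal.ofReal (K:ℝ) := ENNReal.ofReal_le_ofReal hint_le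
        _ = (K : ℝ≥0∞) := ENNReal.ofReal_natCast K
    have haeG : ∀ᵐ ω ∂P, Tendsto (fun k => Gk k ω) atTop
        (nhds (ENNReal.ofReal (∫ x, cutBC C K x ∂(ηlim ω)))) := by
      filter_upwards [hae] with ω hω
      exact (ENNReal.continuous_ofReal.tendsto _).comp (hω (cutBC C K))
    have hlim := tendsto_lintegral_of_dominated_convergence (μ := P)
      (fun _ => (K:ℝ≥0∞)) hGkmeas hGkbd
      (by simp [lintegral_const]) haeG
    have hev : ∀ᶠ k in atTop, ∫⁻ ω, Gk k ω ∂P ≤ ENNReal.ofReal r := by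
      filter_upwards [hms.tendsto_atTop.eventually_ge_atTop 1] with k hk
      have hb := aux_UI_bound (P := P) hk (fun i => hmeas (ms k) i) hC (hCui (ms k))
        (h := fun x => min (h0 x) (K:ℝ)) hminmeas
        (fun x => le_min (h0nonneg x) (by positivity))
        (fun x => min_le_left _ _)
      refine le_trans (le_of_eq (lintegral_congr fun ω => ?_)) hb
      rw [hGkdef]
      simp only []
      rw [hsum]
    have hle : ∫⁻ ω, ENNReal.ofReal (∫ x, cutBC C K x ∂(ηlim ω)) ∂P ≤ ENNReal.ofReal r :=
      le_of_tendsto hlim hev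
    refine le_trans (le_of_eq (lintegral_congr fun ω => ?_)) hle
    haveI := hηp ω
    exact (ofReal_integral_eq_lintegral_ofReal ((cutBC C K).integrable _)
      (Filter.Eventually.of_forall fun x => le_min (h0nonneg x) (by positivity))).symm
  have hD'le : ∫⁻ ω, D' ω ∂P ≤ ENNReal.ofReal r := by
    have hmono : ∀ x : Fin d → ℝ, Monotone fun K : ℕ => ENNReal.ofReal (min (h0 x) (K:ℝ)) := by
      intro x K1 K2 hK
      exact ENNReal.ofReal_le_ofReal (min_le_min le_rfl (by exact_mod_cast hK))
    have hpt : ∀ x : Fin d → ℝ,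
        (⨆ K : ℕ, ENNReal.ofReal (min (h0 x) (K:ℝ))) = ENNReal.ofReal (h0 x) := by
      intro x
      apply le_antisymm
      · exact iSup_le fun K => ENNReal.ofReal_le_ofReal (min_le_left _ _)
      · refine le_iSup_of_le ⌈h0 x⌉₊ (le_of_eq ?_)
        rw [min_eq_left (Nat.le_ceil _)]
    have hminmeas : ∀ K : ℕ, Measurable fun x : Fin d → ℝ => ENNReal.ofReal (min (h0 x) (K:ℝ)) :=
      fun K => ENNReal.measurable_ofReal.comp (h0cont.min continuous_const).measurable
    have hinner : ∀ ω, D' ω = ⨆ K : ℕ, ∫⁻ x, ENNReal.ofReal (min (h0 x) (K:ℝ)) ∂(ηlim ω) := by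
      intro ω
      calc D' ω = ∫⁻ x, ⨆ K : ℕ, ENNReal.ofReal (min (h0 x) (K:ℝ)) ∂(ηlim ω) :=
            lintegral_congr fun x => (hpt x).symm
        _ = ⨆ K : ℕ, ∫⁻ x, ENNReal.ofReal (min (h0 x) (K:ℝ)) ∂(ηlim ω) :=
            lintegral_iSup hminmeas (fun K1 K2 hK x => hmono x hK)
    calc ∫⁻ ω, D' ω ∂P
        = ∫⁻ ω, ⨆ K : ℕ, ∫⁻ x, ENNReal.ofReal (min (h0 x) (K:ℝ)) ∂(ηlim ω) ∂P :=
          lintegral_congr hinner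
      _ = ⨆ K : ℕ, ∫⁻ ω, ∫⁻ x, ENNReal.ofReal (min (h0 x) (K:ℝ)) ∂(ηlim ω) ∂P := by
          refine lintegral_iSup (fun K => ?_) (fun K1 K2 hK ω => lintegral_mono fun x => hmono x hK)
          exact (hminmeas K).lintegral_kernel (κ := κ)
      _ ≤ ENNReal.ofReal r := iSup_le hGKlim
  have hD'fin : ∀ᵐ ω ∂P, D' ω < ⊤ :=
    ae_lt_top hmeasD' (ne_top_of_le_ne_top ENNReal.ofReal_ne_top hD'le)
  -- A.e., the identity is integrable with respect to the limit measure.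
  have hIdInt : ∀ᵐ ω ∂P, Integrable (fun x : Fin d → ℝ => x) (ηlim ω) := by
    filter_upwards [hD'fin] with ω hω
    haveI := hηp ω
    refine ⟨aestronglyMeasurable_id, ?_⟩
    have hb : ∀ x : Fin d → ℝ, (‖x‖₊ : ℝ≥0∞) ≤ ENNReal.ofReal (h0 x) + ENNReal.ofReal C := by
      intro x
      rw [← ENNReal.ofReal_add (h0nonneg x) hC, ← enorm_eq_nnnorm, ← ofReal_norm]
      refine ENNReal.ofReal_le_ofReal ?_
      have : ‖x‖ - C ≤ h0 x := le_max_left _ _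
      linarith
    show (∫⁻ x, (‖x‖₊ : ℝ≥0∞) ∂(ηlim ω)) < ⊤
    calc ∫⁻ x, (‖x‖₊ : ℝ≥0∞) ∂(ηlim ω)
        ≤ ∫⁻ x, (ENNReal.ofReal (h0 x) + ENNReal.ofReal C) ∂(ηlim ω) := lintegral_mono hb
      _ = D' ω + ENNReal.ofReal C := by
          rw [lintegral_add_right _ measurable_const, lintegral_const, measure_univ, mul_one]
      _ < ⊤ := ENNReal.add_lt_top.mpr ⟨hω, ENNReal.ofReal_lt_top⟩
  -- Event decomposition.
  set U1 : ℕ → Set Ω := fun n => {ω | ε/3 ≤ A n ω} with hU1def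
  set U2 : ℕ → Set Ω := fun n => {ω | ε/3 ≤ ‖T n ω - t ω‖} with hU2def
  set U3 : Set Ω := {ω | ENNReal.ofReal (ε/3) ≤ D' ω} with hU3def
  have hsubset : ∀ n : ℕ, 1 ≤ n →
      P {ω | ε ≤ ‖(n : ℝ)⁻¹ • (∑ i ∈ Finset.range n, X n i ω) - ∫ x, x ∂(ηlim ω)‖}
        ≤ P (U1 n) + P (U2 n) + P U3 := by
    intro n hn
    have key : {ω | ε ≤ ‖(n : ℝ)⁻¹ • (∑ i ∈ Finset.range n, X n i ω) - ∫ x, x ∂(ηlim ω)‖}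
        ≤ᵐ[P] (U1 n ∪ U2 n ∪ U3 : Set Ω) := by
      filter_upwards [hIdInt, hD'fin] with ω hInt hfin hmem
      haveI := hηp ω
      have hb1 : ‖(n : ℝ)⁻¹ • (∑ i ∈ Finset.range n, X n i ω) - T n ω‖ ≤ A n ω := by
        rw [pi_norm_le_iff_of_nonneg (hA_nonneg n ω)]
        intro j
        have hj : ((n : ℝ)⁻¹ • (∑ i ∈ Finset.range n, X n i ω) - T n ω) j
            = (n:ℝ)⁻¹ * ∑ i ∈ Finset.range n, (X n i ω j - clampBC C hC j (X n i ω)) := by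
          simp [hTdef, Pi.smul_apply, Finset.sum_apply, smul_eq_mul,
            Finset.sum_sub_distrib, mul_sub]
        rw [Real.norm_eq_abs, hj, abs_mul, abs_of_nonneg (by positivity : (0:ℝ) ≤ (n:ℝ)⁻¹)]
        calc (n:ℝ)⁻¹ * |∑ i ∈ Finset.range n, (X n i ω j - clampBC C hC j (X n i ω))|
            ≤ (n:ℝ)⁻¹ * ∑ i ∈ Finset.range n, |X n i ω j - clampBC C hC j (X n i ω)| :=
              mul_le_mul_of_nonneg_left (Finset.abs_sum_le_sum_abs _ _) (by positivity)
          _ ≤ (n:ℝ)⁻¹ * ∑ i ∈ Finset.range n, h0 (X n i ω) := by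
              refine mul_le_mul_of_nonneg_left (Finset.sum_le_sum fun i _ => ?_) (by positivity)
              exact aux_clamp_abs_sub hC (by rw [← Real.norm_eq_abs]; exact norm_le_pi_norm _ j)
          _ = A n ω := rfl
      have hb2 : ‖t ω - ∫ x, x ∂(ηlim ω)‖ ≤ (D' ω).toReal := by
        have hD'eq : (D' ω).toReal = ∫ x, h0 x ∂(ηlim ω) := by
          rw [integral_eq_lintegral_of_nonneg_ae (Filter.Eventually.of_forall h0nonneg)
            h0cont.aestronglyMeasurable]
        have hInth0 : Integrable h0 (ηlim ω) := by
          refine Integrable.mono hInt.norm h0cont.aestronglyMeasurable ?_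
          refine Filter.Eventually.of_forall fun x => ?_
          rw [Real.norm_eq_abs, abs_of_nonneg (h0nonneg x), norm_norm]
          exact max_le (by linarith) (norm_nonneg x)
        rw [pi_norm_le_iff_of_nonneg ENNReal.toReal_nonneg]
        intro j
        have hmj : (∫ x, x ∂(ηlim ω)) j = ∫ x : Fin d → ℝ, x j ∂(ηlim ω) :=
          ((ContinuousLinearMap.proj (R := ℝ) (φ := fun _ : Fin d => ℝ) j).integral_comp_comm
            hInt).symm
        have hintj : Integrable (fun x : Fin d → ℝ => x j) (ηlim ω) :=
          (ContinuousLinearMap.proj (R := ℝ) (φ := fun _ : Fin d => ℝ) j).integrable_comp hInt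
        have hintc : Integrable (fun x => clampBC C hC j x) (ηlim ω) :=
          (clampBC C hC j).integrable _
        rw [Pi.sub_apply, hmj]
        rw [show t ω j = ∫ x, clampBC C hC j x ∂(ηlim ω) from rfl]
        rw [← integral_sub hintc hintj]
        calc ‖∫ x, (clampBC C hC j x - x j) ∂(ηlim ω)‖
            ≤ ∫ x, ‖clampBC C hC j x - x j‖ ∂(ηlim ω) := norm_integral_le_integral_norm _
          _ ≤ ∫ x, h0 x ∂(ηlim ω) := by
              refine integral_mono (hintc.sub hintj).norm hInth0 fun x => ?_
              rw [Real.norm_eq_abs, abs_sub_comm]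
              exact aux_clamp_abs_sub hC (by rw [← Real.norm_eq_abs]; exact norm_le_pi_norm _ j)
          _ = (D' ω).toReal := hD'eq.symm
      have hmem' : ε ≤ ‖(n : ℝ)⁻¹ • (∑ i ∈ Finset.range n, X n i ω) - ∫ x, x ∂(ηlim ω)‖ := hmem
      show ω ∈ U1 n ∪ U2 n ∪ U3
      by_contra hcon
      simp only [Set.mem_union, not_or, hU1def, hU2def, hU3def, Set.mem_setOf_eq, not_le] at hcon
      obtain ⟨⟨hc1, hc2⟩, hc3⟩ := hcon
      have hc3' : (D' ω).toReal < ε/3 := ENNReal.toReal_lt_of_lt_ofReal hc3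
      have htri : ‖(n : ℝ)⁻¹ • (∑ i ∈ Finset.range n, X n i ω) - ∫ x, x ∂(ηlim ω)‖
          ≤ A n ω + ‖T n ω - t ω‖ + (D' ω).toReal := by
        have h4 := dist_triangle4 ((n : ℝ)⁻¹ • (∑ i ∈ Finset.range n, X n i ω)) (T n ω) (t ω)
          (∫ x, x ∂(ηlim ω))
        simp only [dist_eq_norm] at h4
        exact h4.trans (add_le_add (add_le_add hb1 le_rfl) hb2)
      linarith
    calc P {ω | ε ≤ ‖(n : ℝ)⁻¹ • (∑ i ∈ Finset.range n, X n i ω) - ∫ x, x ∂(ηlim ω)‖}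
        ≤ P (U1 n ∪ U2 n ∪ U3) := measure_mono_ae key
      _ ≤ P (U1 n ∪ U2 n) + P U3 := measure_union_le _ _
      _ ≤ P (U1 n) + P (U2 n) + P U3 := add_le_add_left (measure_union_le _ _) _
  -- Markov bounds for the first and the third event.
  have hU1le : ∀ n : ℕ, 1 ≤ n → P (U1 n) ≤ θ/3 := by
    intro n hn
    have hAn : ∫⁻ ω, ENNReal.ofReal (A n ω) ∂P ≤ ENNReal.ofReal r :=
      aux_UI_bound (P := P) hn (fun i => hmeas n i) hC (hCui n) h0cont.measurable h0nonneg
        (fun x => le_rfl)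
    calc P (U1 n) ≤ P {ω | ENNReal.ofReal (ε/3) ≤ ENNReal.ofReal (A n ω)} := by
          refine measure_mono fun ω hω => ?_
          exact ENNReal.ofReal_le_ofReal hω
      _ ≤ (∫⁻ ω, ENNReal.ofReal (A n ω) ∂P) / ENNReal.ofReal (ε/3) :=
          meas_ge_le_lintegral_div (ENNReal.measurable_ofReal.comp (hmeasA n)).aemeasurable
            (ENNReal.ofReal_pos.mpr hε3).ne' ENNReal.ofReal_ne_top
      _ ≤ ENNReal.ofReal r / ENNReal.ofReal (ε/3) := ENNReal.div_le_div_right hAn _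
      _ ≤ θ/3 := hrθ
  have hU3le : P U3 ≤ θ/3 := by
    calc P U3 ≤ (∫⁻ ω, D' ω ∂P) / ENNReal.ofReal (ε/3) :=
        meas_ge_le_lintegral_div hmeasD'.aemeasurable (ENNReal.ofReal_pos.mpr hε3).ne'
          ENNReal.ofReal_ne_top
      _ ≤ ENNReal.ofReal r / ENNReal.ofReal (ε/3) := ENNReal.div_le_div_right hD'le _
      _ ≤ θ/3 := hrθ
  -- The middle event tends to zero in probability.
  have hU2 : Tendsto (fun n => P (U2 n)) atTop (nhds 0) := by
    apply tendsto_of_subseq_tendsto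
    intro ns hns
    obtain ⟨ms, hms, hae⟩ := aux_subseq hηp hconv ns hns
    have hev : ∀ᶠ k in atTop, 1 ≤ ns (ms k) := (hns.comp hms.tendsto_atTop).eventually_ge_atTop 1
    have haeT : ∀ᵐ ω ∂P, Tendsto (fun k => T (ns (ms k)) ω) atTop (nhds (t ω)) := by
      filter_upwards [hae] with ω hω
      rw [tendsto_pi_nhds]
      intro j
      have hconvj := hω (clampBC C hC j)
      refine Filter.Tendsto.congr' ?_ hconvj
      refine Filter.Eventually.of_forall fun k => ?_
      simp only [aux_empMeasure_integral]
      rfl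
    have hTIM : TendstoInMeasure P (fun k => T (ns (ms k))) atTop t :=
      tendstoInMeasure_of_tendsto_ae (fun k => (hmeasT _).aestronglyMeasurable) haeT
    refine ⟨ms, ?_⟩
    refine (tendstoInMeasure_iff_dist.mp hTIM (ε/3) hε3).congr fun k => congrArg P ?_
    ext ω
    simp [hU2def, dist_eq_norm]
  have hθ3pos : (0:ℝ≥0∞) < θ/3 := ENNReal.div_pos hθ.ne' (by norm_num)
  have hU2ev : ∀ᶠ n in atTop, P (U2 n) ≤ θ/3 := by
    filter_upwards [hU2.eventually_lt_const hθ3pos] with n hn using hn.le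
  filter_upwards [hU2ev, eventually_ge_atTop 1] with n h2 h1
  calc P {ω | ε ≤ ‖(n : ℝ)⁻¹ • (∑ i ∈ Finset.range n, X n i ω) - ∫ x, x ∂(ηlim ω)‖}
      ≤ P (U1 n) + P (U2 n) + P U3 := hsubset n h1
    _ ≤ θ/3 + θ/3 + θ/3 := add_le_add (add_le_add (hU1le n h1) h2) hU3le
    _ = θ := ENNReal.add_thirds θ
end
end
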